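/- arXiv:gr-qc/0303051 — 4 statements merged into one kernel-verified Lean document; each statement's English description precedes it below -/
import Mathlib

section
/- Suppose τ₂ ≥ τ₁ ≥ 2 and 1 ≤ P(τ,θ) ≤ τ − 1 for all (τ,θ) ∈ [τ₁,τ₂] × S¹. Then F(τ) ≤ F(τ₁)·(τ₁/τ)² for all τ ∈ [τ₁,τ₂]. -/
open Real

/-- Partial derivative with respect to the first (time) variable `τ`. -/
noncomputable def pdt (f : ℝ → ℝ → ℝ) : ℝ → ℝ → ℝ := fun τ θ => deriv (fun s => f s θ) τ

/-- Partial derivative with respect to the second (spatial) variable `θ`. -/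
noncomputable def pdθ (f : ℝ → ℝ → ℝ) : ℝ → ℝ → ℝ := fun τ θ => deriv (fun x => f τ x) θ

/-- Smoothness of a real-valued function of two real variables. -/
def Smooth2 (f : ℝ → ℝ → ℝ) : Prop := ContDiff ℝ (⊤ : ℕ∞) (Function.uncurry f)

/-- 2π-periodicity in the second (spatial) variable. -/
def Periodic2 (f : ℝ → ℝ → ℝ) : Prop := ∀ τ θ, f τ (θ + 2 * π) = f τ θ

/-- The Gowdy evolution equations. -/
def GowdyEqs (P Q : ℝ → ℝ → ℝ) : Prop :=
  (∀ τ θ, pdt (pdt P) τ θ - exp (-2 * τ) * pdθ (pdθ P) τ θ -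
      exp (2 * P τ θ) * ((pdt Q τ θ) ^ 2 - exp (-2 * τ) * (pdθ Q τ θ) ^ 2) = 0) ∧
  (∀ τ θ, pdt (pdt Q) τ θ - exp (-2 * τ) * pdθ (pdθ Q) τ θ +
      2 * (pdt P τ θ * pdt Q τ θ - exp (-2 * τ) * pdθ P τ θ * pdθ Q τ θ) = 0)

/-- The quantity `F` of the paper. -/
noncomputable def Ffun (P Q : ℝ → ℝ → ℝ) (τ : ℝ) : ℝ :=
  (1 / 2) * (⨆ θ : ℝ, ((pdt P τ θ - P τ θ / τ + exp (-τ) * pdθ P τ θ) ^ 2 +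
      exp (2 * P τ θ) * (pdt Q τ θ + exp (-τ) * pdθ Q τ θ) ^ 2)) +
  (1 / 2) * (⨆ θ : ℝ, ((pdt P τ θ - P τ θ / τ - exp (-τ) * pdθ P τ θ) ^ 2 +
      exp (2 * P τ θ) * (pdt Q τ θ - exp (-τ) * pdθ Q τ θ) ^ 2))

namespace GowdyAux

/-- first partial (fderiv form) -/
noncomputable def gd1 (u : ℝ × ℝ → ℝ) (x : ℝ × ℝ) : ℝ := fderiv ℝ u x (1, 0)
noncomputable def gd2 (u : ℝ × ℝ → ℝ) (x : ℝ × ℝ) : ℝ := fderiv ℝ u x (0, 1)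
noncomputable def gH (u : ℝ × ℝ → ℝ) (x : ℝ × ℝ) (v w : ℝ × ℝ) : ℝ :=
  fderiv ℝ (fderiv ℝ u) x v w

lemma clm_decomp (L : ℝ × ℝ →L[ℝ] ℝ) (a b : ℝ) : L (a, b) = a * L (1, 0) + b * L (0, 1) := by
  have h : ((a, b) : ℝ × ℝ) = a • ((1:ℝ), (0:ℝ)) + b • ((0:ℝ), (1:ℝ)) := by
    simp [Prod.ext_iff]
  rw [h, map_add, map_smul, map_smul, smul_eq_mul, smul_eq_mul]

lemma clm2_decomp (H : ℝ × ℝ →L[ℝ] (ℝ × ℝ →L[ℝ] ℝ)) (a b : ℝ) (v : ℝ × ℝ) :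
    H (a, b) v = a * H (1, 0) v + b * H (0, 1) v := by
  have h : ((a, b) : ℝ × ℝ) = a • ((1:ℝ), (0:ℝ)) + b • ((0:ℝ), (1:ℝ)) := by
    simp [Prod.ext_iff]
  rw [h, map_add, map_smul, map_smul]
  simp [smul_eq_mul]

variable {u : ℝ × ℝ → ℝ}

lemma contDiff_fderiv (hu : ContDiff ℝ (⊤ : ℕ∞) u) :
    ContDiff ℝ (⊤ : ℕ∞) (fderiv ℝ u) := by
  exact hu.fderiv_right (by exact_mod_cast le_top)

lemma hasDerivAt_comp_curve (hu : ContDiff ℝ (⊤ : ℕ∞) u)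
    {γ : ℝ → ℝ} {k s : ℝ} (hγ : HasDerivAt γ k s) :
    HasDerivAt (fun t => u (t, γ t)) (gd1 u (s, γ s) + k * gd2 u (s, γ s)) s := by
  have hcurve : HasDerivAt (fun t => (t, γ t)) ((1:ℝ), k) s := (hasDerivAt_id s).prodMk hγ
  have h := ((hu.differentiable (by simp) (s, γ s)).hasFDerivAt).comp_hasDerivAt s hcurve
  refine HasDerivAt.congr_deriv h (Eq.symm ?_)
  rw [clm_decomp (fderiv ℝ u (s, γ s)) 1 k]
  simp [gd1, gd2]

lemma hasDerivAt_gd_curve (hu : ContDiff ℝ (⊤ : ℕ∞) u) (v : ℝ × ℝ)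
    {γ : ℝ → ℝ} {k s : ℝ} (hγ : HasDerivAt γ k s) :
    HasDerivAt (fun t => fderiv ℝ u (t, γ t) v)
      (gH u (s, γ s) (1, 0) v + k * gH u (s, γ s) (0, 1) v) s := by
  have hcurve : HasDerivAt (fun t => (t, γ t)) ((1:ℝ), k) s := (hasDerivAt_id s).prodMk hγ
  have hf' : HasFDerivAt (fderiv ℝ u) (fderiv ℝ (fderiv ℝ u) (s, γ s)) (s, γ s) :=
    (((contDiff_fderiv hu).differentiable (by simp)) (s, γ s)).hasFDerivAt
  have happ : HasFDerivAt (fun y => fderiv ℝ u y v)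
      ((fderiv ℝ (fderiv ℝ u) (s, γ s)).flip v) (s, γ s) := by
    have := hf'.clm_apply (hasFDerivAt_const v (s, γ s))
    simpa using this
  have h := happ.comp_hasDerivAt s hcurve
  refine HasDerivAt.congr_deriv h (Eq.symm ?_)
  simp only [ContinuousLinearMap.flip_apply]
  rw [clm2_decomp (fderiv ℝ (fderiv ℝ u) (s, γ s)) 1 k v]
  simp [gH]


variable {f : ℝ → ℝ → ℝ}

lemma pdt_apply (hf : Smooth2 f) (τ θ : ℝ) :
    pdt f τ θ = gd1 (Function.uncurry f) (τ, θ) := by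
  have h : HasDerivAt (fun s => f s θ)
      (gd1 (Function.uncurry f) (τ, θ) + 0 * gd2 (Function.uncurry f) (τ, θ)) τ := by
    exact hasDerivAt_comp_curve hf (hasDerivAt_const τ θ)
  simpa [pdt] using h.deriv

lemma pdθ_apply (hf : Smooth2 f) (τ θ : ℝ) :
    pdθ f τ θ = gd2 (Function.uncurry f) (τ, θ) := by
  have hcurve : HasDerivAt (fun x => ((τ, x) : ℝ × ℝ)) ((0:ℝ), (1:ℝ)) θ :=
    (hasDerivAt_const θ τ).prodMk (hasDerivAt_id θ)
  have h := ((hf.differentiable (by simp) (τ, θ)).hasFDerivAt).comp_hasDerivAt θ hcurve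
  have h2 : HasDerivAt (fun x => f τ x) (fderiv ℝ (Function.uncurry f) (τ, θ) (0, 1)) θ := h
  simpa [pdθ, gd2] using h2.deriv

lemma pdtt_apply (hf : Smooth2 f) (τ θ : ℝ) :
    pdt (pdt f) τ θ = gH (Function.uncurry f) (τ, θ) (1, 0) (1, 0) := by
  have hfun : (fun s => pdt f s θ) = fun s => fderiv ℝ (Function.uncurry f) (s, θ) (1, 0) := by
    funext s; exact pdt_apply hf s θ
  have h : HasDerivAt (fun s => fderiv ℝ (Function.uncurry f) (s, θ) (1, 0))
      (gH (Function.uncurry f) (τ, θ) (1, 0) (1, 0) +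
        0 * gH (Function.uncurry f) (τ, θ) (0, 1) (1, 0)) τ :=
    hasDerivAt_gd_curve hf (1, 0) (hasDerivAt_const τ θ)
  rw [show pdt (pdt f) τ θ = deriv (fun s => pdt f s θ) τ from rfl, hfun]
  simpa using h.deriv

lemma pdθθ_apply (hf : Smooth2 f) (τ θ : ℝ) :
    pdθ (pdθ f) τ θ = gH (Function.uncurry f) (τ, θ) (0, 1) (0, 1) := by
  have hfun : (fun x => pdθ f τ x) = fun x => fderiv ℝ (Function.uncurry f) (τ, x) (0, 1) := by
    funext x; exact pdθ_apply hf τ x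
  have hcurve : HasDerivAt (fun x : ℝ => x) (1:ℝ) θ := hasDerivAt_id θ
  have hf' : HasFDerivAt (fderiv ℝ (Function.uncurry f))
      (fderiv ℝ (fderiv ℝ (Function.uncurry f)) (τ, θ)) (τ, θ) :=
    (((contDiff_fderiv hf).differentiable (by simp)) (τ, θ)).hasFDerivAt
  have happ : HasFDerivAt (fun y => fderiv ℝ (Function.uncurry f) y ((0:ℝ), (1:ℝ)))
      ((fderiv ℝ (fderiv ℝ (Function.uncurry f)) (τ, θ)).flip (0, 1)) (τ, θ) := by
    have := hf'.clm_apply (hasFDerivAt_const ((0:ℝ), (1:ℝ)) (τ, θ))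
    simpa using this
  have hc2 : HasDerivAt (fun x => ((τ, x) : ℝ × ℝ)) ((0:ℝ), (1:ℝ)) θ :=
    (hasDerivAt_const θ τ).prodMk (hasDerivAt_id θ)
  have h := happ.comp_hasDerivAt θ hc2
  rw [show pdθ (pdθ f) τ θ = deriv (fun x => pdθ f τ x) θ from rfl, hfun]
  have h2 : HasDerivAt (fun x => fderiv ℝ (Function.uncurry f) (τ, x) (0, 1))
      ((fderiv ℝ (fderiv ℝ (Function.uncurry f)) (τ, θ)).flip (0, 1) (0, 1)) θ := h
  simpa [gH] using h2.deriv

lemma gH_symm (hf : Smooth2 f) (x : ℝ × ℝ) (v w : ℝ × ℝ) :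
    gH (Function.uncurry f) x v w = gH (Function.uncurry f) x w v := by
  have : IsSymmSndFDerivAt ℝ (Function.uncurry f) x := by
    apply ContDiffAt.isSymmSndFDerivAt (n := ((⊤:ℕ∞) : WithTop ℕ∞)) hf.contDiffAt
    rw [minSmoothness_of_isRCLikeNormedField]; exact WithTop.coe_le_coe.2 (le_top : (2:ℕ∞) ≤ ⊤)
  exact this v w


noncomputable def Af (ε : ℝ) (P : ℝ → ℝ → ℝ) (τ θ : ℝ) : ℝ :=
  pdt P τ θ - P τ θ / τ + ε * (exp (-τ) * pdθ P τ θ)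
noncomputable def Bf (ε : ℝ) (Q : ℝ → ℝ → ℝ) (τ θ : ℝ) : ℝ :=
  pdt Q τ θ + ε * (exp (-τ) * pdθ Q τ θ)
noncomputable def Xe (ε : ℝ) (P Q : ℝ → ℝ → ℝ) (τ θ : ℝ) : ℝ :=
  (Af ε P τ θ) ^ 2 + exp (2 * P τ θ) * (Bf ε Q τ θ) ^ 2

lemma key_hasDerivAt (P Q : ℝ → ℝ → ℝ) (hPs : Smooth2 P) (hQs : Smooth2 Q)
    (hPQ : GowdyEqs P Q) {ε : ℝ} (hε : ε = 1 ∨ ε = -1) (c s : ℝ) (hs : s ≠ 0) :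
    HasDerivAt (fun t => Xe ε P Q t (c + ε * exp (-t)))
      (-(Xe ε P Q s (c + ε * exp (-s)))
        + Af ε P s (c + ε * exp (-s)) * Af (-ε) P s (c + ε * exp (-s)) * (1 - 2 / s)
        + exp (2 * P s (c + ε * exp (-s))) * (Bf ε Q s (c + ε * exp (-s)) *
            (Bf (-ε) Q s (c + ε * exp (-s)) * (1 - 2 * P s (c + ε * exp (-s)) / s)))) s := by
  set u := Function.uncurry P with hu
  set v := Function.uncurry Q with hv
  set γ : ℝ → ℝ := fun t => c + ε * exp (-t) with hγdef
  have hexpneg : HasDerivAt (fun t => exp (-t)) (exp (-s) * (-1)) s := by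
    have := ((hasDerivAt_id s).neg).exp
    simpa using this
  set k : ℝ := ε * (exp (-s) * (-1)) with hk
  have hγ : HasDerivAt γ k s := (hexpneg.const_mul ε).const_add c
  set X : ℝ × ℝ := (s, c + ε * exp (-s)) with hX
  have hm : HasDerivAt (fun t => u (t, γ t)) (gd1 u X + k * gd2 u X) s :=
    hasDerivAt_comp_curve hPs hγ
  have hp1 : HasDerivAt (fun t => fderiv ℝ u (t, γ t) (1, 0))
      (gH u X (1, 0) (1, 0) + k * gH u X (0, 1) (1, 0)) s := hasDerivAt_gd_curve hPs _ hγ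
  have hp2 : HasDerivAt (fun t => fderiv ℝ u (t, γ t) (0, 1))
      (gH u X (1, 0) (0, 1) + k * gH u X (0, 1) (0, 1)) s := hasDerivAt_gd_curve hPs _ hγ
  have hq1 : HasDerivAt (fun t => fderiv ℝ v (t, γ t) (1, 0))
      (gH v X (1, 0) (1, 0) + k * gH v X (0, 1) (1, 0)) s := hasDerivAt_gd_curve hQs _ hγ
  have hq2 : HasDerivAt (fun t => fderiv ℝ v (t, γ t) (0, 1))
      (gH v X (1, 0) (0, 1) + k * gH v X (0, 1) (0, 1)) s := hasDerivAt_gd_curve hQs _ hγ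
  have hA : HasDerivAt (fun t => fderiv ℝ u (t, γ t) (1, 0) - u (t, γ t) / t +
      ε * (exp (-t) * fderiv ℝ u (t, γ t) (0, 1)))
      ((gH u X (1, 0) (1, 0) + k * gH u X (0, 1) (1, 0))
        - ((gd1 u X + k * gd2 u X) * s - u X * 1) / s ^ 2
        + ε * ((exp (-s) * (-1)) * fderiv ℝ u X (0, 1)
            + exp (-s) * (gH u X (1, 0) (0, 1) + k * gH u X (0, 1) (0, 1)))) s :=
    (hp1.sub (hm.div (hasDerivAt_id s) hs)).add ((hexpneg.mul hp2).const_mul ε)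
  have hB : HasDerivAt (fun t => fderiv ℝ v (t, γ t) (1, 0) +
      ε * (exp (-t) * fderiv ℝ v (t, γ t) (0, 1)))
      ((gH v X (1, 0) (1, 0) + k * gH v X (0, 1) (1, 0))
        + ε * ((exp (-s) * (-1)) * fderiv ℝ v X (0, 1)
            + exp (-s) * (gH v X (1, 0) (0, 1) + k * gH v X (0, 1) (0, 1)))) s :=
    hq1.add ((hexpneg.mul hq2).const_mul ε)
  have hE := (hA.pow 2).add (((hm.const_mul 2).exp).mul (hB.pow 2))
  have hfun : (fun t => Xe ε P Q t (γ t)) = (fun t =>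
      (fderiv ℝ u (t, γ t) (1, 0) - u (t, γ t) / t +
        ε * (exp (-t) * fderiv ℝ u (t, γ t) (0, 1))) ^ 2 +
      exp (2 * u (t, γ t)) * (fderiv ℝ v (t, γ t) (1, 0) +
        ε * (exp (-t) * fderiv ℝ v (t, γ t) (0, 1))) ^ 2) := by
    funext t
    simp only [Xe, Af, Bf, pdt_apply hPs, pdθ_apply hPs, pdt_apply hQs, pdθ_apply hQs]
    rfl
  have hgoalfun : (fun t => Xe ε P Q t (c + ε * exp (-t))) = (fun t => Xe ε P Q t (γ t)) := rfl
  rw [hgoalfun, hfun]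
  refine HasDerivAt.congr_deriv hE (Eq.symm ?_)
  simp only [Pi.pow_apply]
  have huP : ∀ a b, P a b = u (a, b) := fun _ _ => rfl
  have huQ : ∀ a b, Q a b = v (a, b) := fun _ _ => rfl
  have hPDE1 := hPQ.1 s (c + ε * exp (-s))
  have hPDE2 := hPQ.2 s (c + ε * exp (-s))
  rw [pdtt_apply hPs, pdθθ_apply hPs, pdt_apply hQs, pdθ_apply hQs] at hPDE1
  rw [pdtt_apply hQs, pdθθ_apply hQs, pdt_apply hPs, pdθ_apply hPs, pdt_apply hQs,
    pdθ_apply hQs] at hPDE2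
  have hsymP : gH u X (0, 1) (1, 0) = gH u X (1, 0) (0, 1) := gH_symm hPs X _ _
  have hsymQ : gH v X (0, 1) (1, 0) = gH v X (1, 0) (0, 1) := gH_symm hQs X _ _
  have hexp2 : exp (-2 * s) = exp (-s) * exp (-s) := by
    rw [← exp_add]; ring_nf
  rw [hexp2] at hPDE1 hPDE2
  simp only [Xe, Af, Bf, pdt_apply hPs, pdθ_apply hPs, pdt_apply hQs, pdθ_apply hQs]
  simp only [huP, huQ, gd1, gd2, gH, hγdef, hk, ← hX] at hPDE1 hPDE2 hsymP hsymQ ⊢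
  have hss : s * s⁻¹ = 1 := mul_inv_cancel₀ hs
  rcases hε with rfl | rfl
  · linear_combination (-(2 * (fderiv ℝ u X (1, 0) - u X / s +
        1 * (exp (-s) * fderiv ℝ u X (0, 1))))) * hPDE1 +
      (-(2 * exp (2 * u X) * (fderiv ℝ v X (1, 0) +
        1 * (exp (-s) * fderiv ℝ v X (0, 1))))) * hPDE2 +
      (-(2 * (fderiv ℝ u X (1, 0) - u X / s + 1 * (exp (-s) * fderiv ℝ u X (0, 1))) *
        (1 * (exp (-s) * (-1))))) * hsymP +
      (-(2 * exp (2 * u X) * (fderiv ℝ v X (1, 0) + 1 * (exp (-s) * fderiv ℝ v X (0, 1))) *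
        (1 * (exp (-s) * (-1))))) * hsymQ +
      (2 * s⁻¹ * (fderiv ℝ u X (1, 0) - exp (-s) * fderiv ℝ u X (0, 1)) *
        (fderiv ℝ u X (1, 0) + exp (-s) * fderiv ℝ u X (0, 1) - u X * s⁻¹)) * hss
  · linear_combination (-(2 * (fderiv ℝ u X (1, 0) - u X / s +
        (-1) * (exp (-s) * fderiv ℝ u X (0, 1))))) * hPDE1 +
      (-(2 * exp (2 * u X) * (fderiv ℝ v X (1, 0) +
        (-1) * (exp (-s) * fderiv ℝ v X (0, 1))))) * hPDE2 +
      (-(2 * (fderiv ℝ u X (1, 0) - u X / s + (-1) * (exp (-s) * fderiv ℝ u X (0, 1))) *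
        ((-1) * (exp (-s) * (-1))))) * hsymP +
      (-(2 * exp (2 * u X) * (fderiv ℝ v X (1, 0) + (-1) * (exp (-s) * fderiv ℝ v X (0, 1))) *
        ((-1) * (exp (-s) * (-1))))) * hsymQ +
      (2 * s⁻¹ * (fderiv ℝ u X (1, 0) + exp (-s) * fderiv ℝ u X (0, 1)) *
        (fderiv ℝ u X (1, 0) - exp (-s) * fderiv ℝ u X (0, 1) - u X * s⁻¹)) * hss


lemma pt_ineq (P Q : ℝ → ℝ → ℝ) (ε s θ : ℝ) (hm1 : 1 ≤ P s θ) (hm2 : P s θ ≤ s - 1)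
    (hs : 2 ≤ s) :
    -(Xe ε P Q s θ) + Af ε P s θ * Af (-ε) P s θ * (1 - 2 / s)
      + exp (2 * P s θ) * (Bf ε Q s θ * (Bf (-ε) Q s θ * (1 - 2 * P s θ / s)))
    ≤ -(Xe ε P Q s θ) + (1 - 2 / s) * ((Xe ε P Q s θ + Xe (-ε) P Q s θ) / 2) := by
  have hs0 : (0:ℝ) < s := lt_of_lt_of_le two_pos hs
  set a := Af ε P s θ
  set a' := Af (-ε) P s θ
  set b := Bf ε Q s θ
  set b' := Bf (-ε) Q s θ
  set m := P s θ with hmdef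
  have hXe : Xe ε P Q s θ = a ^ 2 + exp (2 * m) * b ^ 2 := rfl
  have hXe' : Xe (-ε) P Q s θ = a' ^ 2 + exp (2 * m) * b' ^ 2 := rfl
  rw [hXe, hXe']
  set E := exp (2 * m) with hE
  have hEpos : (0:ℝ) < E := exp_pos _
  set d := 1 - 2 / s with hd
  set c := 1 - 2 * m / s with hc
  have h2s1 : 2 / s ≤ 1 := by rw [div_le_one hs0]; exact hs
  have hdpos : 0 ≤ d := by rw [hd]; linarith
  have hdc : 0 ≤ d - c := by
    have h1 : (2:ℝ) / s ≤ 2 * m / s := by gcongr <;> linarith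
    rw [hd, hc]; linarith
  have hsum : 0 ≤ d + c := by
    have h1 : 2 * m / s + 2 / s = (2 * m + 2) / s := by ring
    have h2 : (2 * m + 2) / s ≤ 2 := by rw [div_le_iff₀ hs0]; linarith
    rw [hc, hd]; linarith
  clear_value a a' b b' m E d c
  have k1 : 0 ≤ d * (a - a') ^ 2 := mul_nonneg hdpos (sq_nonneg _)
  have k2 : 0 ≤ E * ((d - c) * (b + b') ^ 2) :=
    mul_nonneg hEpos.le (mul_nonneg hdc (sq_nonneg _))
  have k3 : 0 ≤ E * ((d + c) * (b - b') ^ 2) :=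
    mul_nonneg hEpos.le (mul_nonneg hsum (sq_nonneg _))
  have key : -(a ^ 2 + E * b ^ 2) + d * ((a ^ 2 + E * b ^ 2 + (a' ^ 2 + E * b' ^ 2)) / 2)
      - (-(a ^ 2 + E * b ^ 2) + a * a' * d + E * (b * (b' * c)))
      = d * (a - a') ^ 2 / 2 + (E * ((d - c) * (b + b') ^ 2) + E * ((d + c) * (b - b') ^ 2)) / 4 := by
    ring
  linarith [k1, k2, k3, key]


noncomputable def Dcl (ε : ℝ) (P Q : ℝ → ℝ → ℝ) (s θ : ℝ) : ℝ :=
  -(Xe ε P Q s θ) + Af ε P s θ * Af (-ε) P s θ * (1 - 2 / s)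
    + exp (2 * P s θ) * (Bf ε Q s θ * (Bf (-ε) Q s θ * (1 - 2 * P s θ / s)))

section Infra
variable {P Q : ℝ → ℝ → ℝ}

lemma cont_gd1 (hf : Smooth2 P) : Continuous (gd1 (Function.uncurry P)) := by
  have h : ContDiff ℝ (⊤ : ℕ∞) (fderiv ℝ (Function.uncurry P)) :=
    hf.fderiv_right (by exact_mod_cast le_top)
  exact (ContinuousLinearMap.apply ℝ ℝ ((1:ℝ), (0:ℝ))).continuous.comp h.continuous

lemma cont_gd2 (hf : Smooth2 P) : Continuous (gd2 (Function.uncurry P)) := by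
  have h : ContDiff ℝ (⊤ : ℕ∞) (fderiv ℝ (Function.uncurry P)) :=
    hf.fderiv_right (by exact_mod_cast le_top)
  exact (ContinuousLinearMap.apply ℝ ℝ ((0:ℝ), (1:ℝ))).continuous.comp h.continuous

lemma pdt_periodic (hf : Smooth2 P) (hp : Periodic2 P) (τ θ : ℝ) :
    pdt P τ (θ + 2 * π) = pdt P τ θ := by
  have : (fun s => P s (θ + 2 * π)) = fun s => P s θ := funext fun s => hp s θ
  simp only [pdt, this]

lemma pdθ_periodic (hf : Smooth2 P) (hp : Periodic2 P) (τ θ : ℝ) :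
    pdθ P τ (θ + 2 * π) = pdθ P τ θ := by
  have h1 : deriv (fun x => P τ (x + 2 * π)) θ = deriv (P τ) (θ + 2 * π) :=
    deriv_comp_add_const _ _ _
  have h2 : (fun x => P τ (x + 2 * π)) = fun x => P τ x := funext fun x => hp τ x
  rw [h2] at h1
  exact h1.symm

lemma Xe_periodic (hPs : Smooth2 P) (hQs : Smooth2 Q) (hPp : Periodic2 P) (hQp : Periodic2 Q) (ε : ℝ) (τ θ : ℝ) :
    Xe ε P Q τ (θ + 2 * π) = Xe ε P Q τ θ := by
  simp only [Xe, Af, Bf, pdt_periodic hPs hPp, pdθ_periodic hPs hPp,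
    pdt_periodic hQs hQp, pdθ_periodic hQs hQp, hPp τ θ]

lemma Xe_contθ (hPs : Smooth2 P) (hQs : Smooth2 Q) (ε τ : ℝ) :
    Continuous (fun θ => Xe ε P Q τ θ) := by
  have hc : Continuous (fun θ => ((τ, θ) : ℝ × ℝ)) := continuous_const.prodMk continuous_id
  have c1 : Continuous (fun θ => pdt P τ θ) := by
    simp only [pdt_apply hPs]; exact (cont_gd1 hPs).comp hc
  have c2 : Continuous (fun θ => pdθ P τ θ) := by
    simp only [pdθ_apply hPs]; exact (cont_gd2 hPs).comp hc
  have c3 : Continuous (fun θ => pdt Q τ θ) := by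
    simp only [pdt_apply hQs]; exact (cont_gd1 hQs).comp hc
  have c4 : Continuous (fun θ => pdθ Q τ θ) := by
    simp only [pdθ_apply hQs]; exact (cont_gd2 hQs).comp hc
  have hP : Continuous (fun θ => P τ θ) := hPs.continuous.comp hc
  have hQ : Continuous (fun θ => Q τ θ) := hQs.continuous.comp hc
  have cA : Continuous (fun θ => Af ε P τ θ) := by
    unfold Af
    exact (c1.sub (hP.div_const τ)).add (continuous_const.mul (continuous_const.mul c2))
  have cB : Continuous (fun θ => Bf ε Q τ θ) := by
    unfold Bf
    exact c3.add (continuous_const.mul (continuous_const.mul c4))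
  unfold Xe
  exact (cA.pow 2).add ((Real.continuous_exp.comp (continuous_const.mul hP)).mul (cB.pow 2))


noncomputable def Gs (ε : ℝ) (P Q : ℝ → ℝ → ℝ) (τ : ℝ) : ℝ := ⨆ θ : ℝ, Xe ε P Q τ θ

lemma Xe_bddAbove (hPs : Smooth2 P) (hQs : Smooth2 Q) (hPp : Periodic2 P) (hQp : Periodic2 Q)
    (ε τ : ℝ) : BddAbove (Set.range (fun θ => Xe ε P Q τ θ)) := by
  have hper : Function.Periodic (fun θ => Xe ε P Q τ θ) (2 * π) :=
    fun θ => Xe_periodic hPs hQs hPp hQp ε τ θ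
  rw [← hper.image_Icc two_pi_pos 0]
  exact (isCompact_Icc.image (Xe_contθ hPs hQs ε τ)).bddAbove

lemma Xe_le_Gs (hPs : Smooth2 P) (hQs : Smooth2 Q) (hPp : Periodic2 P) (hQp : Periodic2 Q)
    (ε τ θ : ℝ) : Xe ε P Q τ θ ≤ Gs ε P Q τ :=
  le_ciSup (Xe_bddAbove hPs hQs hPp hQp ε τ) θ

lemma Ffun_eq (τ : ℝ) : Ffun P Q τ = (1/2) * Gs 1 P Q τ + (1/2) * Gs (-1) P Q τ := by
  unfold Ffun Gs
  congr 2
  · exact iSup_congr fun θ => by unfold Xe Af Bf; ring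
  · exact iSup_congr fun θ => by unfold Xe Af Bf; ring

lemma Gs_reparam (ε : ℝ) (τ a : ℝ) :
    Gs ε P Q τ = ⨆ c : ℝ, Xe ε P Q τ (c + a) := by
  unfold Gs iSup
  exact congrArg sSup ((Equiv.addRight a).surjective.range_comp (fun θ => Xe ε P Q τ θ)).symm

lemma bdd_reparam (hPs : Smooth2 P) (hQs : Smooth2 Q) (hPp : Periodic2 P) (hQp : Periodic2 Q)
    (ε τ a : ℝ) : BddAbove (Set.range (fun c => Xe ε P Q τ (c + a))) := by
  have h := (Equiv.addRight a).surjective.range_comp (fun θ => Xe ε P Q τ θ)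
  have h2 : (fun (c:ℝ) => Xe ε P Q τ (c + a)) = (fun θ => Xe ε P Q τ θ) ∘ (Equiv.addRight a) := rfl
  rw [h2, h]
  exact Xe_bddAbove hPs hQs hPp hQp ε τ


lemma Dcl_periodic (hPs : Smooth2 P) (hQs : Smooth2 Q) (hPp : Periodic2 P) (hQp : Periodic2 Q)
    (ε s θ : ℝ) : Dcl ε P Q s (θ + 2 * π) = Dcl ε P Q s θ := by
  unfold Dcl
  simp only [Xe, Af, Bf, pdt_periodic hPs hPp, pdθ_periodic hPs hPp,
    pdt_periodic hQs hQp, pdθ_periodic hQs hQp, hPp s θ]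

lemma Dcl_contOn (hPs : Smooth2 P) (hQs : Smooth2 Q) (ε : ℝ) :
    ContinuousOn (fun x : ℝ × ℝ => Dcl ε P Q x.1 x.2) {x : ℝ × ℝ | 0 < x.1} := by
  have e1 : (fun x : ℝ × ℝ => pdt P x.1 x.2) = gd1 (Function.uncurry P) :=
    funext fun x => (pdt_apply hPs x.1 x.2).trans (by rw [Prod.mk.eta])
  have e2 : (fun x : ℝ × ℝ => pdθ P x.1 x.2) = gd2 (Function.uncurry P) :=
    funext fun x => (pdθ_apply hPs x.1 x.2).trans (by rw [Prod.mk.eta])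
  have e3 : (fun x : ℝ × ℝ => pdt Q x.1 x.2) = gd1 (Function.uncurry Q) :=
    funext fun x => (pdt_apply hQs x.1 x.2).trans (by rw [Prod.mk.eta])
  have e4 : (fun x : ℝ × ℝ => pdθ Q x.1 x.2) = gd2 (Function.uncurry Q) :=
    funext fun x => (pdθ_apply hQs x.1 x.2).trans (by rw [Prod.mk.eta])
  have c1 : Continuous (fun x : ℝ × ℝ => pdt P x.1 x.2) := e1 ▸ cont_gd1 hPs
  have c2 : Continuous (fun x : ℝ × ℝ => pdθ P x.1 x.2) := e2 ▸ cont_gd2 hPs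
  have c3 : Continuous (fun x : ℝ × ℝ => pdt Q x.1 x.2) := e3 ▸ cont_gd1 hQs
  have c4 : Continuous (fun x : ℝ × ℝ => pdθ Q x.1 x.2) := e4 ▸ cont_gd2 hQs
  have cP : Continuous (fun x : ℝ × ℝ => P x.1 x.2) := by
    have : (fun x : ℝ × ℝ => P x.1 x.2) = Function.uncurry P := rfl
    rw [this]; exact hPs.continuous
  have cQ : Continuous (fun x : ℝ × ℝ => Q x.1 x.2) := by
    have : (fun x : ℝ × ℝ => Q x.1 x.2) = Function.uncurry Q := rfl
    rw [this]; exact hQs.continuous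
  have hne : ∀ x ∈ {x : ℝ × ℝ | 0 < x.1}, x.1 ≠ 0 := fun x hx => ne_of_gt hx
  have cexp : Continuous (fun x : ℝ × ℝ => exp (-x.1)) :=
    Real.continuous_exp.comp continuous_fst.neg
  have cA : ∀ ε' : ℝ, ContinuousOn (fun x : ℝ × ℝ => Af ε' P x.1 x.2) {x : ℝ × ℝ | 0 < x.1} := by
    intro ε'
    unfold Af
    exact ((c1.continuousOn.sub (cP.continuousOn.div continuous_fst.continuousOn hne)).add
      ((continuous_const.mul (cexp.mul c2)).continuousOn))
  have cB : ∀ ε' : ℝ, Continuous (fun x : ℝ × ℝ => Bf ε' Q x.1 x.2) := by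
    intro ε'
    unfold Bf
    exact c3.add (continuous_const.mul (cexp.mul c4))
  have cE : Continuous (fun x : ℝ × ℝ => exp (2 * P x.1 x.2)) :=
    Real.continuous_exp.comp (continuous_const.mul cP)
  have cXe : ∀ ε' : ℝ, ContinuousOn (fun x : ℝ × ℝ => Xe ε' P Q x.1 x.2)
      {x : ℝ × ℝ | 0 < x.1} := by
    intro ε'
    unfold Xe
    exact ((cA ε').pow 2).add (cE.continuousOn.mul (((cB ε').pow 2).continuousOn))
  unfold Dcl
  refine (((cXe ε).neg.add (((cA ε).mul (cA (-ε))).mul ?_)).add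
    (cE.continuousOn.mul (((cB ε).continuousOn.mul ((cB (-ε)).continuousOn.mul ?_)))))
  · exact continuousOn_const.sub (continuousOn_const.div continuous_fst.continuousOn hne)
  · exact continuousOn_const.sub ((continuous_const.mul cP).continuousOn.div
      continuous_fst.continuousOn hne)

lemma Dcl_bound (hPs : Smooth2 P) (hQs : Smooth2 Q) (hPp : Periodic2 P) (hQp : Periodic2 Q)
    (ε τ₁ τ₂ : ℝ) (hτ₁ : 0 < τ₁) (hτ₁₂ : τ₁ ≤ τ₂) :
    ∃ L : ℝ, 0 ≤ L ∧ ∀ s ∈ Set.Icc τ₁ τ₂, ∀ θ : ℝ, |Dcl ε P Q s θ| ≤ L := by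
  set K : Set (ℝ × ℝ) := Set.Icc τ₁ τ₂ ×ˢ Set.Icc 0 (2 * π) with hK
  have hKcomp : IsCompact K := isCompact_Icc.prod isCompact_Icc
  have hKS : K ⊆ {x : ℝ × ℝ | 0 < x.1} := by
    rintro ⟨a, b⟩ ⟨ha, hb⟩
    exact lt_of_lt_of_le hτ₁ ha.1
  obtain ⟨C, hC⟩ := hKcomp.exists_bound_of_continuousOn ((Dcl_contOn hPs hQs ε).mono hKS)
  refine ⟨max C 0, le_max_right _ _, fun s hs θ => ?_⟩
  have hper : Function.Periodic (fun θ => Dcl ε P Q s θ) (2 * π) :=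
    fun x => Dcl_periodic hPs hQs hPp hQp ε s x
  obtain ⟨θ', hθ', heq⟩ := hper.exists_mem_Ico₀ two_pi_pos θ
  have hmem : ((s, θ') : ℝ × ℝ) ∈ K := ⟨hs, Set.Ico_subset_Icc_self hθ'⟩
  have := hC (s, θ') hmem
  rw [Real.norm_eq_abs] at this
  calc |Dcl ε P Q s θ| = |Dcl ε P Q s θ'| := by rw [heq]
    _ ≤ C := this
    _ ≤ max C 0 := le_max_left _ _


lemma key_hasDerivAt' (P Q : ℝ → ℝ → ℝ) (hPs : Smooth2 P) (hQs : Smooth2 Q)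
    (hPQ : GowdyEqs P Q) {ε : ℝ} (hε : ε = 1 ∨ ε = -1) (c s : ℝ) (hs : s ≠ 0) :
    HasDerivAt (fun t => Xe ε P Q t (c + ε * exp (-t)))
      (Dcl ε P Q s (c + ε * exp (-s))) s :=
  key_hasDerivAt P Q hPs hQs hPQ hε c s hs

lemma fc_lip (hPs : Smooth2 P) (hQs : Smooth2 Q)
    (hPQ : GowdyEqs P Q) {ε : ℝ} (hε : ε = 1 ∨ ε = -1) {τ₁ τ₂ L : ℝ} (hτ₁ : 0 < τ₁)
    (hL : ∀ s ∈ Set.Icc τ₁ τ₂, ∀ θ : ℝ, |Dcl ε P Q s θ| ≤ L)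
    (c : ℝ) {x z : ℝ} (hx : x ∈ Set.Icc τ₁ τ₂) (hz : z ∈ Set.Icc τ₁ τ₂) :
    |Xe ε P Q z (c + ε * exp (-z)) - Xe ε P Q x (c + ε * exp (-x))| ≤ L * |z - x| := by
  have h := (convex_Icc τ₁ τ₂).norm_image_sub_le_of_norm_hasDerivWithin_le
    (f := fun t => Xe ε P Q t (c + ε * exp (-t)))
    (f' := fun t => Dcl ε P Q t (c + ε * exp (-t))) (C := L)
    (fun t ht => (key_hasDerivAt' P Q hPs hQs hPQ hε c t
      (ne_of_gt (lt_of_lt_of_le hτ₁ ht.1))).hasDerivWithinAt)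
    (fun t ht => by rw [Real.norm_eq_abs]; exact hL t ht _) hx hz
  simpa [Real.norm_eq_abs] using h

lemma Gs_lip (hPs : Smooth2 P) (hQs : Smooth2 Q) (hPp : Periodic2 P) (hQp : Periodic2 Q)
    (hPQ : GowdyEqs P Q) {ε : ℝ} (hε : ε = 1 ∨ ε = -1) {τ₁ τ₂ L : ℝ} (hτ₁ : 0 < τ₁)
    (hL : ∀ s ∈ Set.Icc τ₁ τ₂, ∀ θ : ℝ, |Dcl ε P Q s θ| ≤ L)
    {x z : ℝ} (hx : x ∈ Set.Icc τ₁ τ₂) (hz : z ∈ Set.Icc τ₁ τ₂) :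
    |Gs ε P Q z - Gs ε P Q x| ≤ L * |z - x| := by
  have key : ∀ {a b : ℝ}, a ∈ Set.Icc τ₁ τ₂ → b ∈ Set.Icc τ₁ τ₂ →
      Gs ε P Q b ≤ Gs ε P Q a + L * |b - a| := by
    intro a b ha hb
    rw [Gs_reparam ε b (ε * exp (-b))]
    refine ciSup_le fun c => ?_
    have h1 := fc_lip hPs hQs hPQ hε hτ₁ hL c ha hb
    have h2 : Xe ε P Q a (c + ε * exp (-a)) ≤ Gs ε P Q a := by
      rw [Gs_reparam ε a (ε * exp (-a))]
      exact le_ciSup (bdd_reparam hPs hQs hPp hQp ε a _) c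
    have := abs_sub_le_iff.1 h1
    linarith [this.1]
  have h1 := key hx hz
  have h2 := key hz hx
  rw [abs_sub_comm] at h2
  rw [abs_sub_le_iff]
  constructor <;> linarith

lemma Ffun_contOn (hPs : Smooth2 P) (hQs : Smooth2 Q) (hPp : Periodic2 P) (hQp : Periodic2 Q)
    (hPQ : GowdyEqs P Q) {τ₁ τ₂ : ℝ} (hτ₁ : 0 < τ₁) (hτ₁₂ : τ₁ ≤ τ₂) :
    ContinuousOn (Ffun P Q) (Set.Icc τ₁ τ₂) := by
  obtain ⟨L1, hL1n, hL1⟩ := Dcl_bound hPs hQs hPp hQp 1 τ₁ τ₂ hτ₁ hτ₁₂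
  obtain ⟨L2, hL2n, hL2⟩ := Dcl_bound hPs hQs hPp hQp (-1) τ₁ τ₂ hτ₁ hτ₁₂
  set L := (1/2) * L1 + (1/2) * L2 with hLdef
  have hLn : 0 ≤ L := by positivity
  have hlip : LipschitzOnWith (Real.toNNReal L) (Ffun P Q) (Set.Icc τ₁ τ₂) := by
    rw [lipschitzOnWith_iff_dist_le_mul]
    intro x hx y hy
    rw [Real.dist_eq, Real.dist_eq, Real.coe_toNNReal L hLn]
    have g1 := Gs_lip hPs hQs hPp hQp hPQ (Or.inl rfl) hτ₁ hL1 hy hx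
    have g2 := Gs_lip hPs hQs hPp hQp hPQ (Or.inr rfl) hτ₁ hL2 hy hx
    rw [Ffun_eq, Ffun_eq]
    have hrw : (1/2) * Gs 1 P Q x + (1/2) * Gs (-1) P Q x -
        ((1/2) * Gs 1 P Q y + (1/2) * Gs (-1) P Q y) =
        (1/2) * (Gs 1 P Q x - Gs 1 P Q y) + (1/2) * (Gs (-1) P Q x - Gs (-1) P Q y) := by ring
    rw [hrw]
    calc |(1/2) * (Gs 1 P Q x - Gs 1 P Q y) + (1/2) * (Gs (-1) P Q x - Gs (-1) P Q y)|
        ≤ |(1/2) * (Gs 1 P Q x - Gs 1 P Q y)| + |(1/2) * (Gs (-1) P Q x - Gs (-1) P Q y)| :=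
          abs_add_le _ _
      _ = (1/2) * |Gs 1 P Q x - Gs 1 P Q y| + (1/2) * |Gs (-1) P Q x - Gs (-1) P Q y| := by
          rw [abs_mul, abs_mul]
          norm_num [abs_of_nonneg]
      _ ≤ (1/2) * (L1 * |x - y|) + (1/2) * (L2 * |x - y|) := by
          have := abs_nonneg (x - y)
          gcongr
      _ = L * |x - y| := by rw [hLdef]; ring
  exact hlip.continuousOn

end Infra
end GowdyAux

open GowdyAux in
/-- Lemma 2.1 (decay of `F`): if `τ₂ ≥ τ₁ ≥ 2` and `1 ≤ P(τ,θ) ≤ τ - 1` on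
`[τ₁,τ₂] × S¹`, then `F(τ) ≤ F(τ₁)·(τ₁/τ)²` on `[τ₁,τ₂]`. -/
theorem stmt_0 (P Q : ℝ → ℝ → ℝ) (hPs : Smooth2 P) (hQs : Smooth2 Q)
    (hPp : Periodic2 P) (hQp : Periodic2 Q) (hPQ : GowdyEqs P Q)
    (τ₁ τ₂ : ℝ) (hτ₁ : 2 ≤ τ₁) (hτ₁₂ : τ₁ ≤ τ₂)
    (hP : ∀ τ ∈ Set.Icc τ₁ τ₂, ∀ θ : ℝ, 1 ≤ P τ θ ∧ P τ θ ≤ τ - 1) :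
    ∀ τ ∈ Set.Icc τ₁ τ₂, Ffun P Q τ ≤ Ffun P Q τ₁ * (τ₁ / τ) ^ 2 := by
  have hτ1pos : (0:ℝ) < τ₁ := lt_of_lt_of_le two_pos hτ₁
  have hτ1ne : τ₁ ≠ 0 := ne_of_gt hτ1pos
  -- clamped F
  set Fc : ℝ → ℝ := fun t => Ffun P Q (max τ₁ (min t τ₂)) with hFcdef
  have hclamp_mem : ∀ t : ℝ, max τ₁ (min t τ₂) ∈ Set.Icc τ₁ τ₂ :=
    fun t => ⟨le_max_left _ _, max_le hτ₁₂ (min_le_right _ _)⟩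
  have hFc_cont : Continuous Fc := by
    apply (Ffun_contOn hPs hQs hPp hQp hPQ hτ1pos hτ₁₂).comp_continuous
      (continuous_const.max (continuous_id.min continuous_const)) hclamp_mem
  have hFc_eq : ∀ t ∈ Set.Icc τ₁ τ₂, Fc t = Ffun P Q t := by
    intro t ht
    rw [hFcdef]
    simp only
    rw [min_eq_left ht.2, max_eq_right ht.1]
  -- integrand
  set gI : ℝ → ℝ := fun r => exp r * ((1 - 2 / max r 2) * Fc r) with hgIdef
  have hgI_cont : Continuous gI := by
    apply continuous_exp.mul
    apply Continuous.mul ?_ hFc_cont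
    apply continuous_const.sub
    apply continuous_const.div (continuous_id.max continuous_const)
    intro x
    have h := le_max_right (id x) (2:ℝ)
    intro h0
    rw [h0] at h
    norm_num at h
  have hint : ∀ b : ℝ, HasDerivAt (fun t => ∫ r in τ₁..t, gI r) (gI b) b := by
    intro b
    exact intervalIntegral.integral_hasDerivAt_right (hgI_cont.intervalIntegrable _ _)
      (hgI_cont.stronglyMeasurableAtFilter _ _) hgI_cont.continuousAt
  -- Duhamel estimate for each characteristic family
  have duhamel : ∀ ε : ℝ, (ε = 1 ∨ ε = -1) → ∀ τ ∈ Set.Icc τ₁ τ₂,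
      exp τ * Gs ε P Q τ ≤ exp τ₁ * Gs ε P Q τ₁ + ∫ r in τ₁..τ, gI r := by
    intro ε hε τ hτ
    have hτmem1 : τ₁ ∈ Set.Icc τ₁ τ₂ := ⟨le_refl _, hτ₁₂⟩
    -- per characteristic
    have percurve : ∀ c : ℝ, exp τ * Xe ε P Q τ (c + ε * exp (-τ)) ≤
        exp τ₁ * Gs ε P Q τ₁ + ∫ r in τ₁..τ, gI r := by
      intro c
      set W : ℝ → ℝ := fun t => exp t * Xe ε P Q t (c + ε * exp (-t)) - ∫ r in τ₁..t, gI r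
        with hWdef
      have hWder : ∀ t ∈ Set.Icc τ₁ τ₂, HasDerivAt W
          (exp t * Xe ε P Q t (c + ε * exp (-t)) + exp t * Dcl ε P Q t (c + ε * exp (-t))
            - gI t) t := by
        intro t ht
        have h0 : t ≠ 0 := ne_of_gt (lt_of_lt_of_le hτ1pos ht.1)
        exact ((Real.hasDerivAt_exp t).mul
          (key_hasDerivAt' P Q hPs hQs hPQ hε c t h0)).sub (hint t)
      have hWnonpos : ∀ t ∈ Set.Icc τ₁ τ₂,
          exp t * Xe ε P Q t (c + ε * exp (-t)) + exp t * Dcl ε P Q t (c + ε * exp (-t))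
            - gI t ≤ 0 := by
        intro t ht
        have ht2 : (2:ℝ) ≤ t := le_trans hτ₁ ht.1
        have ht0 : (0:ℝ) < t := lt_of_lt_of_le two_pos ht2
        have hcoef : (0:ℝ) ≤ 1 - 2 / t := by
          have : 2 / t ≤ 1 := by rw [div_le_one ht0]; exact ht2
          linarith
        set θc := c + ε * exp (-t)
        have hpt := pt_ineq P Q ε t θc (hP t ht θc).1 (hP t ht θc).2 ht2
        have hle1 : Xe ε P Q t θc ≤ Gs ε P Q t := Xe_le_Gs hPs hQs hPp hQp ε t θc
        have hle2 : Xe (-ε) P Q t θc ≤ Gs (-ε) P Q t := Xe_le_Gs hPs hQs hPp hQp (-ε) t θc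
        have hGF : Gs ε P Q t + Gs (-ε) P Q t = 2 * Ffun P Q t := by
          rcases hε with rfl | rfl
          · rw [Ffun_eq]; ring
          · rw [show (-(-1:ℝ)) = 1 by norm_num, Ffun_eq]; ring
        have hsum : Xe ε P Q t θc + Dcl ε P Q t θc ≤ (1 - 2 / t) * Ffun P Q t := by
          have h1 : Dcl ε P Q t θc ≤ -(Xe ε P Q t θc)
              + (1 - 2 / t) * ((Xe ε P Q t θc + Xe (-ε) P Q t θc) / 2) := hpt
          have h2 : (1 - 2 / t) * ((Xe ε P Q t θc + Xe (-ε) P Q t θc) / 2)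
              ≤ (1 - 2 / t) * ((Gs ε P Q t + Gs (-ε) P Q t) / 2) := by
            apply mul_le_mul_of_nonneg_left ?_ hcoef
            linarith
          rw [hGF] at h2
          have h3 : (1 - 2 / t) * (2 * Ffun P Q t / 2) = (1 - 2 / t) * Ffun P Q t := by ring
          rw [h3] at h2
          linarith
        have hgIt : gI t = exp t * ((1 - 2 / t) * Fc t) := by
          rw [hgIdef]
          simp only
          rw [max_eq_left ht2]
        rw [hgIt, hFc_eq t ht]
        have := mul_le_mul_of_nonneg_left hsum (exp_nonneg t)
        linarith [this]
      have hWanti : AntitoneOn W (Set.Icc τ₁ τ₂) := by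
        apply antitoneOn_of_deriv_nonpos (convex_Icc τ₁ τ₂)
        · intro t ht
          exact ((hWder t ht).continuousAt).continuousWithinAt
        · intro t ht
          rw [interior_Icc] at ht
          exact ((hWder t (Set.mem_Icc_of_Ioo ht)).differentiableAt).differentiableWithinAt
        · intro t ht
          rw [interior_Icc] at ht
          rw [(hWder t (Set.mem_Icc_of_Ioo ht)).deriv]
          exact hWnonpos t (Set.mem_Icc_of_Ioo ht)
      have hW := hWanti hτmem1 hτ hτ.1
      rw [hWdef] at hW
      simp only at hW
      rw [intervalIntegral.integral_same] at hW
      have hfc1 : Xe ε P Q τ₁ (c + ε * exp (-τ₁)) ≤ Gs ε P Q τ₁ := by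
        rw [Gs_reparam ε τ₁ (ε * exp (-τ₁))]
        exact le_ciSup (bdd_reparam hPs hQs hPp hQp ε τ₁ _) c
      have hexppos := exp_pos τ₁
      nlinarith [hW, hfc1]
    -- take sup over c
    rw [Gs_reparam ε τ (ε * exp (-τ))]
    have hsup : (⨆ c : ℝ, Xe ε P Q τ (c + ε * exp (-τ))) ≤
        (exp τ₁ * Gs ε P Q τ₁ + ∫ r in τ₁..τ, gI r) / exp τ := by
      refine ciSup_le fun c => ?_
      rw [le_div_iff₀ (exp_pos τ)]
      have := percurve c
      linarith [this]
    have := (le_div_iff₀ (exp_pos τ)).1 hsup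
    linarith [this]
  -- combine the two families
  have duh2 : ∀ τ ∈ Set.Icc τ₁ τ₂,
      exp τ * Ffun P Q τ ≤ exp τ₁ * Ffun P Q τ₁ + ∫ r in τ₁..τ, gI r := by
    intro τ hτ
    have d1 := duhamel 1 (Or.inl rfl) τ hτ
    have d2 := duhamel (-1) (Or.inr rfl) τ hτ
    rw [Ffun_eq (P := P) (Q := Q) τ, Ffun_eq (P := P) (Q := Q) τ₁]
    linarith
  -- Gronwall comparison
  set C : ℝ := exp τ₁ * Ffun P Q τ₁ with hCdef
  set I : ℝ → ℝ := fun t => C + ∫ r in τ₁..t, gI r with hIdef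
  have hI' : ∀ t : ℝ, HasDerivAt I (gI t) t := fun t => (hint t).const_add C
  have hφI : ∀ t ∈ Set.Icc τ₁ τ₂, exp t * Ffun P Q t ≤ I t := fun t ht => duh2 t ht
  set h : ℝ → ℝ := fun t => I t * (exp (τ₁ - t) * (t / τ₁) ^ 2) with hhdef
  have hh' : ∀ t : ℝ, HasDerivAt h
      (gI t * (exp (τ₁ - t) * (t / τ₁) ^ 2) + I t *
        (exp (τ₁ - t) * (0 - 1) * (t / τ₁) ^ 2 +
          exp (τ₁ - t) * (2 * (t / τ₁) ^ 1 * (1 / τ₁)))) t := by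
    intro t
    have h1 : HasDerivAt (fun t : ℝ => τ₁ - t) (0 - 1) t :=
      (hasDerivAt_const t τ₁).sub (hasDerivAt_id t)
    have h2 := h1.exp
    have h3 : HasDerivAt (fun t : ℝ => t / τ₁) (1 / τ₁) t := by
      simpa using (hasDerivAt_id t).div_const τ₁
    have h4 := h3.pow 2
    have h5 := h2.mul h4
    have h6 := (hI' t).mul h5
    refine HasDerivAt.congr_deriv h6 (Eq.symm ?_)
    simp only [Pi.mul_apply, Pi.pow_apply]; norm_num
  have hanti : AntitoneOn h (Set.Icc τ₁ τ₂) := by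
    apply antitoneOn_of_deriv_nonpos (convex_Icc τ₁ τ₂)
    · intro t ht
      exact ((hh' t).continuousAt).continuousWithinAt
    · intro t ht
      exact ((hh' t).differentiableAt).differentiableWithinAt
    · intro t ht
      rw [interior_Icc] at ht
      rw [(hh' t).deriv]
      have ht2 : (2:ℝ) ≤ t := le_trans hτ₁ (le_of_lt ht.1)
      have ht0 : (0:ℝ) < t := lt_of_lt_of_le two_pos ht2
      have htne : t ≠ 0 := ne_of_gt ht0
      have hval : gI t * (exp (τ₁ - t) * (t / τ₁) ^ 2) + I t *
          (exp (τ₁ - t) * (0 - 1) * (t / τ₁) ^ 2 +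
            exp (τ₁ - t) * (2 * (t / τ₁) ^ 1 * (1 / τ₁)))
          = exp (τ₁ - t) * (1 / τ₁) ^ 2 * (gI t * t ^ 2 - (t ^ 2 - 2 * t) * I t) := by
        ring
      rw [hval]
      apply mul_nonpos_of_nonneg_of_nonpos (by positivity)
      rw [sub_nonpos]
      have hgIt : gI t * t ^ 2 = (t ^ 2 - 2 * t) * (exp t * Fc t) := by
        rw [hgIdef]
        simp only
        rw [max_eq_left ht2]
        field_simp
      rw [hgIt]
      have hmem : t ∈ Set.Icc τ₁ τ₂ := ⟨le_of_lt ht.1, le_of_lt ht.2⟩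
      have hFI : exp t * Fc t ≤ I t := by
        rw [hFc_eq t hmem]; exact hφI t hmem
      have hfac : (0:ℝ) ≤ t ^ 2 - 2 * t := by nlinarith
      exact mul_le_mul_of_nonneg_left hFI hfac
  -- conclude
  intro τ hτ
  have hτ0 : (0:ℝ) < τ := lt_of_lt_of_le hτ1pos hτ.1
  have hτne : τ ≠ 0 := ne_of_gt hτ0
  have hh1 : h τ ≤ h τ₁ := hanti ⟨le_refl _, hτ₁₂⟩ hτ hτ.1
  have hhτ₁ : h τ₁ = C := by
    rw [hhdef]
    simp only
    rw [hIdef]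
    simp only
    rw [intervalIntegral.integral_same, sub_self, exp_zero, div_self hτ1ne]
    ring
  rw [hhτ₁] at hh1
  -- h τ = I τ * (exp (τ₁ - τ) * (τ/τ₁)^2) ≤ C
  have hIτ := hφI τ hτ
  -- multiply hh1 by (τ₁/τ)^2 ≥ 0 and use (τ/τ₁)^2 * (τ₁/τ)^2 = 1
  have hquot : (τ / τ₁) ^ 2 * (τ₁ / τ) ^ 2 = 1 := by
    field_simp
  have hh1' : I τ * exp (τ₁ - τ) ≤ C * (τ₁ / τ) ^ 2 := by
    have hmul := mul_le_mul_of_nonneg_right hh1 (by positivity : (0:ℝ) ≤ (τ₁ / τ) ^ 2)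
    calc I τ * exp (τ₁ - τ) = I τ * (exp (τ₁ - τ) * (τ / τ₁) ^ 2) * (τ₁ / τ) ^ 2 := by
          rw [show I τ * (exp (τ₁ - τ) * (τ / τ₁) ^ 2) * (τ₁ / τ) ^ 2
            = I τ * exp (τ₁ - τ) * ((τ / τ₁) ^ 2 * (τ₁ / τ) ^ 2) from by ring, hquot, mul_one]
      _ ≤ C * (τ₁ / τ) ^ 2 := hmul
  have hexpc : exp τ * exp (τ₁ - τ) = exp τ₁ := by
    rw [← exp_add]; ring_nf
  have hfinal : exp τ₁ * Ffun P Q τ ≤ exp τ₁ * (Ffun P Q τ₁ * (τ₁ / τ) ^ 2) := by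
    have step := mul_le_mul_of_nonneg_right hIτ (exp_nonneg (τ₁ - τ))
    calc exp τ₁ * Ffun P Q τ = exp τ * Ffun P Q τ * exp (τ₁ - τ) := by
          rw [← hexpc]; ring
      _ ≤ I τ * exp (τ₁ - τ) := step
      _ ≤ C * (τ₁ / τ) ^ 2 := hh1'
      _ = exp τ₁ * (Ffun P Q τ₁ * (τ₁ / τ) ^ 2) := by rw [hCdef]; ring
  exact le_of_mul_le_mul_left hfinal (exp_pos τ₁)
end

section
/- Let 𝒜₂ = (1/2) e^{τ} e^{2P} (Q_τ + e^{−τ}Q_θ)². Then at every point (τ,θ), (∂_τ − e^{−τ}∂_θ)𝒜₂ = (1/2) e^{2P+τ}[Q_τ² + e^{−2τ}Q_θ²] − e^{2P+τ}(P_τ + e^{−τ}P_θ)(Q_τ² − e^{−2τ}Q_θ²) − e^{2P−τ}Q_θ². Likewise, with ℬ₂ = (1/2) e^{τ} e^{2P} (Q_τ − e^{−τ}Q_θ)², one has (∂_τ + e^{−τ}∂_θ)ℬ₂ = (1/2) e^{2P+τ}[Q_τ² + e^{−2τ}Q_θ²] − e^{2P+τ}(P_τ − e^{−τ}P_θ)(Q_τ²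 − e^{−2τ}Q_θ²) − e^{2P−τ}Q_θ². -/
open Real

/-- `𝒜₂ = (1/2)·e^τ·e^{2P}·(Q_τ + e^{-τ}Q_θ)²`. -/
noncomputable def A2fun (P Q : ℝ → ℝ → ℝ) : ℝ → ℝ → ℝ := fun τ θ =>
  (1 / 2) * exp τ * exp (2 * P τ θ) * (pdt Q τ θ + exp (-τ) * pdθ Q τ θ) ^ 2

/-- `ℬ₂ = (1/2)·e^τ·e^{2P}·(Q_τ - e^{-τ}Q_θ)²`. -/
noncomputable def B2fun (P Q : ℝ → ℝ → ℝ) : ℝ → ℝ → ℝ := fun τ θ =>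
  (1 / 2) * exp τ * exp (2 * P τ θ) * (pdt Q τ θ - exp (-τ) * pdθ Q τ θ) ^ 2

section aux
variable {f : ℝ → ℝ → ℝ}

lemma smooth2_line_t (hf : Smooth2 f) (θ : ℝ) : ContDiff ℝ (⊤:ℕ∞) (fun s => f s θ) :=
  hf.comp (contDiff_id.prodMk contDiff_const)

lemma smooth2_line_θ (hf : Smooth2 f) (τ : ℝ) : ContDiff ℝ (⊤:ℕ∞) (fun x => f τ x) :=
  hf.comp (contDiff_const.prodMk contDiff_id)

lemma hasDerivAt_pdt (hf : Smooth2 f) (τ θ : ℝ) :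
    HasDerivAt (fun s => f s θ) (pdt f τ θ) τ :=
  (((smooth2_line_t hf θ).differentiable (by simp)) τ).hasDerivAt

lemma hasDerivAt_pdθ (hf : Smooth2 f) (τ θ : ℝ) :
    HasDerivAt (fun x => f τ x) (pdθ f τ θ) θ :=
  (((smooth2_line_θ hf τ).differentiable (by simp)) θ).hasDerivAt

lemma pdt_eq_fderiv (hf : Smooth2 f) (τ θ : ℝ) :
    pdt f τ θ = fderiv ℝ (Function.uncurry f) (τ, θ) (1, 0) := by
  have h1 : HasDerivAt (fun s : ℝ => (s, θ)) ((1:ℝ), (0:ℝ)) τ :=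
    (hasDerivAt_id τ).prodMk (hasDerivAt_const τ θ)
  have h2 : HasDerivAt (fun s => f s θ) (fderiv ℝ (Function.uncurry f) (τ, θ) (1, 0)) τ :=
    by exact ((hf.differentiable (by simp) (τ, θ)).hasFDerivAt.comp_hasDerivAt τ h1)
  show deriv _ _ = _; exact h2.deriv

lemma pdθ_eq_fderiv (hf : Smooth2 f) (τ θ : ℝ) :
    pdθ f τ θ = fderiv ℝ (Function.uncurry f) (τ, θ) (0, 1) := by
  have h1 : HasDerivAt (fun x : ℝ => (τ, x)) ((0:ℝ), (1:ℝ)) θ :=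
    (hasDerivAt_const θ τ).prodMk (hasDerivAt_id θ)
  have h2 : HasDerivAt (fun x => f τ x) (fderiv ℝ (Function.uncurry f) (τ, θ) (0, 1)) θ :=
    ((hf.differentiable (by simp) (τ, θ)).hasFDerivAt.comp_hasDerivAt θ h1)
  show deriv _ _ = _; exact h2.deriv

lemma smooth2_pdt (hf : Smooth2 f) : Smooth2 (pdt f) := by
  have h : Function.uncurry (pdt f) =
      fun p : ℝ × ℝ => fderiv ℝ (Function.uncurry f) p ((1:ℝ), (0:ℝ)) := by
    funext p
    exact pdt_eq_fderiv hf p.1 p.2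
  rw [Smooth2, h]
  exact (hf.fderiv_right (by exact_mod_cast le_top)).clm_apply contDiff_const

lemma smooth2_pdθ (hf : Smooth2 f) : Smooth2 (pdθ f) := by
  have h : Function.uncurry (pdθ f) =
      fun p : ℝ × ℝ => fderiv ℝ (Function.uncurry f) p ((0:ℝ), (1:ℝ)) := by
    funext p
    exact pdθ_eq_fderiv hf p.1 p.2
  rw [Smooth2, h]
  exact (hf.fderiv_right (by exact_mod_cast le_top)).clm_apply contDiff_const

lemma fderiv_eval {u : ℝ × ℝ → ℝ} (hu : ContDiff ℝ (⊤:ℕ∞) u) (v w x : ℝ × ℝ) :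
    fderiv ℝ (fun p => fderiv ℝ u p v) x w = fderiv ℝ (fderiv ℝ u) x w v := by
  have hd : DifferentiableAt ℝ (fderiv ℝ u) x :=
    ((hu.fderiv_right (m := (⊤:ℕ∞)) (by exact_mod_cast le_top)).differentiable (by simp)) x
  have h : HasFDerivAt (fun p => fderiv ℝ u p v)
      ((ContinuousLinearMap.apply ℝ ℝ v).comp (fderiv ℝ (fderiv ℝ u) x)) x :=
    (ContinuousLinearMap.apply ℝ ℝ v).hasFDerivAt.comp x hd.hasFDerivAt
  rw [h.fderiv]
  rfl

lemma pdt_pdθ_comm (hf : Smooth2 f) (τ θ : ℝ) :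
    pdt (pdθ f) τ θ = pdθ (pdt f) τ θ := by
  have hu : ContDiff ℝ (⊤:ℕ∞) (Function.uncurry f) := hf
  have e1 : Function.uncurry (pdθ f) =
      fun p : ℝ × ℝ => fderiv ℝ (Function.uncurry f) p ((0:ℝ), (1:ℝ)) :=
    funext fun p => pdθ_eq_fderiv hf p.1 p.2
  have e2 : Function.uncurry (pdt f) =
      fun p : ℝ × ℝ => fderiv ℝ (Function.uncurry f) p ((1:ℝ), (0:ℝ)) :=
    funext fun p => pdt_eq_fderiv hf p.1 p.2
  have h1 : pdt (pdθ f) τ θ =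
      fderiv ℝ (fderiv ℝ (Function.uncurry f)) (τ, θ) (1, 0) (0, 1) := by
    rw [pdt_eq_fderiv (smooth2_pdθ hf) τ θ, e1, fderiv_eval hu]
  have h2 : pdθ (pdt f) τ θ =
      fderiv ℝ (fderiv ℝ (Function.uncurry f)) (τ, θ) (0, 1) (1, 0) := by
    rw [pdθ_eq_fderiv (smooth2_pdt hf) τ θ, e2, fderiv_eval hu]
  rw [h1, h2]
  exact second_derivative_symmetric
    (fun y => ((hu.differentiable (by simp)) y).hasFDerivAt)
    (((hu.fderiv_right (m := (⊤:ℕ∞)) (by exact_mod_cast le_top)).differentiable (by simp) (τ, θ)).hasFDerivAt) _ _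

end aux

/-- The identities (14) and (15) of the paper for `𝒜₂` and `ℬ₂`. -/
theorem stmt_1 (P Q : ℝ → ℝ → ℝ) (hPs : Smooth2 P) (hQs : Smooth2 Q)
    (hPp : Periodic2 P) (hQp : Periodic2 Q) (hPQ : GowdyEqs P Q) (τ θ : ℝ) :
    (pdt (A2fun P Q) τ θ - exp (-τ) * pdθ (A2fun P Q) τ θ =
      (1 / 2) * exp (2 * P τ θ + τ) * ((pdt Q τ θ) ^ 2 + exp (-2 * τ) * (pdθ Q τ θ) ^ 2) -
      exp (2 * P τ θ + τ) * (pdt P τ θ + exp (-τ) * pdθ P τ θ) *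
        ((pdt Q τ θ) ^ 2 - exp (-2 * τ) * (pdθ Q τ θ) ^ 2) -
      exp (2 * P τ θ - τ) * (pdθ Q τ θ) ^ 2) ∧
    (pdt (B2fun P Q) τ θ + exp (-τ) * pdθ (B2fun P Q) τ θ =
      (1 / 2) * exp (2 * P τ θ + τ) * ((pdt Q τ θ) ^ 2 + exp (-2 * τ) * (pdθ Q τ θ) ^ 2) -
      exp (2 * P τ θ + τ) * (pdt P τ θ - exp (-τ) * pdθ P τ θ) *
        ((pdt Q τ θ) ^ 2 - exp (-2 * τ) * (pdθ Q τ θ) ^ 2) -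
      exp (2 * P τ θ - τ) * (pdθ Q τ θ) ^ 2) := by
  -- τ-direction pieces
  have h2t : HasDerivAt (fun s => exp (2 * P s θ)) (exp (2 * P τ θ) * (2 * pdt P τ θ)) τ :=
    ((hasDerivAt_pdt hPs τ θ).const_mul 2).exp
  have h3t : HasDerivAt (fun s : ℝ => exp (-s)) (exp (-τ) * (-1)) τ :=
    (hasDerivAt_neg τ).exp
  have h4t : HasDerivAt (fun s => pdt Q s θ) (pdt (pdt Q) τ θ) τ :=
    hasDerivAt_pdt (smooth2_pdt hQs) τ θ
  have h5t : HasDerivAt (fun s => pdθ Q s θ) (pdt (pdθ Q) τ θ) τ :=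
    hasDerivAt_pdt (smooth2_pdθ hQs) τ θ
  have h1t : HasDerivAt (fun s => (1:ℝ) / 2 * exp s) ((1:ℝ)/2 * exp τ) τ :=
    (Real.hasDerivAt_exp τ).const_mul ((1:ℝ)/2)
  -- θ-direction pieces
  have h2θ : HasDerivAt (fun x => exp (2 * P τ x)) (exp (2 * P τ θ) * (2 * pdθ P τ θ)) θ :=
    ((hasDerivAt_pdθ hPs τ θ).const_mul 2).exp
  have h4θ : HasDerivAt (fun x => pdt Q τ x) (pdθ (pdt Q) τ θ) θ :=
    hasDerivAt_pdθ (smooth2_pdt hQs) τ θ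
  have h5θ : HasDerivAt (fun x => pdθ Q τ x) (pdθ (pdθ Q) τ θ) θ :=
    hasDerivAt_pdθ (smooth2_pdθ hQs) τ θ
  -- A2: τ derivative
  have hAt := ((h1t.mul h2t).mul ((h4t.add (h3t.mul h5t)).pow 2)).deriv
  have eAt : pdt (A2fun P Q) τ θ = _ := hAt
  -- A2: θ derivative
  have hAθ := (((h2θ.const_mul ((1:ℝ)/2 * exp τ)).mul
      ((h4θ.add (h5θ.const_mul (exp (-τ)))).pow 2))).deriv
  have eAθ : pdθ (A2fun P Q) τ θ = _ := hAθ
  -- B2: τ derivative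
  have hBt := ((h1t.mul h2t).mul ((h4t.sub (h3t.mul h5t)).pow 2)).deriv
  have eBt : pdt (B2fun P Q) τ θ = _ := hBt
  -- B2: θ derivative
  have hBθ := (((h2θ.const_mul ((1:ℝ)/2 * exp τ)).mul
      ((h4θ.sub (h5θ.const_mul (exp (-τ)))).pow 2))).deriv
  have eBθ : pdθ (B2fun P Q) τ θ = _ := hBθ
  -- wave equation for Q and symmetry of mixed partials
  have hq11 : pdt (pdt Q) τ θ = exp (-2 * τ) * pdθ (pdθ Q) τ θ -
      2 * (pdt P τ θ * pdt Q τ θ - exp (-2 * τ) * pdθ P τ θ * pdθ Q τ θ) := by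
    have := hPQ.2 τ θ; linarith
  have hcomm : pdt (pdθ Q) τ θ = pdθ (pdt Q) τ θ := pdt_pdθ_comm hQs τ θ
  have hne : exp τ ≠ 0 := Real.exp_ne_zero τ
  constructor
  · rw [eAt, eAθ, hq11, hcomm]
    simp only [show (-2:ℝ) * τ = (-τ) + (-τ) by ring, Real.exp_add, Real.exp_sub,
      Real.exp_neg, Pi.mul_apply, Pi.add_apply, Pi.sub_apply, Pi.pow_apply]
    field_simp
    ring_nf
    field_simp
    ring
  · rw [eBt, eBθ, hq11, hcomm]
    simp only [show (-2:ℝ) * τ = (-τ) + (-τ) by ring, Real.exp_add, Real.exp_sub,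
      Real.exp_neg, Pi.mul_apply, Pi.add_apply, Pi.sub_apply, Pi.pow_apply]
    field_simp
    ring_nf
    field_simp
    ring
end

section
/- Define 𝒜₁ = (1/2)e^{τ}(P_τ − P/τ + e^{−τ}P_θ)², 𝒜₂ = (1/2)e^{τ}e^{2P}(Q_τ + e^{−τ}Q_θ)², ℬ₁ = (1/2)e^{τ}(P_τ − P/τ − e^{−τ}P_θ)², ℬ₂ = (1/2)e^{τ}e^{2P}(Q_τ − e^{−τ}Q_θ)², 𝒜 = 𝒜₁ + 𝒜₂ and ℬ = ℬ₁ + ℬ₂. If at a point (τ,θ) one has τ ≥ 2 and 1 ≤ P(τ,θ) ≤ τ − 1, then at that point (∂_τ − e^{−τ}∂_θ)𝒜 ≤ (1/2 − 1/τ)(𝒜 + ℬ) and (∂_τ + e^{−τ}∂_θ)ℬ ≤ (1/2 − 1/τ)(𝒜 + ℬ). -/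
open Real

/-- `𝒜 = 𝒜₁ + 𝒜₂`. -/
noncomputable def Afun (P Q : ℝ → ℝ → ℝ) : ℝ → ℝ → ℝ := fun τ θ =>
  (1 / 2) * exp τ * (pdt P τ θ - P τ θ / τ + exp (-τ) * pdθ P τ θ) ^ 2 +
  (1 / 2) * exp τ * exp (2 * P τ θ) * (pdt Q τ θ + exp (-τ) * pdθ Q τ θ) ^ 2

/-- `ℬ = ℬ₁ + ℬ₂`. -/
noncomputable def Bfun (P Q : ℝ → ℝ → ℝ) : ℝ → ℝ → ℝ := fun τ θ =>
  (1 / 2) * exp τ * (pdt P τ θ - P τ θ / τ - exp (-τ) * pdθ P τ θ) ^ 2 +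
  (1 / 2) * exp τ * exp (2 * P τ θ) * (pdt Q τ θ - exp (-τ) * pdθ Q τ θ) ^ 2

namespace GowdyAux
open Function

theorem congr_deriv' {f : ℝ → ℝ} {a b x : ℝ} (h : HasDerivAt f a x) (e : a = b) :
    HasDerivAt f b x := e ▸ h

variable {f : ℝ → ℝ → ℝ} {P Q : ℝ → ℝ → ℝ}

lemma smooth2_diff (hf : Smooth2 f) : Differentiable ℝ (uncurry f) :=
  hf.differentiable (by simp)

lemma hasDerivAt_slice1 (hf : Smooth2 f) (τ θ : ℝ) :
    HasDerivAt (fun s => f s θ) (pdt f τ θ) τ := by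
  have h : DifferentiableAt ℝ (fun s => f s θ) τ := by
    have e : (fun s => f s θ) = uncurry f ∘ fun s => (s, θ) := rfl
    rw [e]
    exact (smooth2_diff hf (τ, θ)).comp τ (differentiableAt_id.prodMk (differentiableAt_const θ))
  exact h.hasDerivAt

lemma hasDerivAt_slice2 (hf : Smooth2 f) (τ θ : ℝ) :
    HasDerivAt (fun x => f τ x) (pdθ f τ θ) θ := by
  have h : DifferentiableAt ℝ (fun x => f τ x) θ := by
    have e : (fun x => f τ x) = uncurry f ∘ fun x => (τ, x) := rfl
    rw [e]
    exact (smooth2_diff hf (τ, θ)).comp θ ((differentiableAt_const τ).prodMk differentiableAt_id)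
  exact h.hasDerivAt

lemma pdt_eq_fderiv (hf : Smooth2 f) (τ θ : ℝ) :
    pdt f τ θ = fderiv ℝ (uncurry f) (τ, θ) (1, 0) := by
  have h1 : HasDerivAt (fun s : ℝ => (s, θ)) (((1:ℝ), (0:ℝ))) τ :=
    HasDerivAt.prodMk (hasDerivAt_id τ) (hasDerivAt_const τ θ)
  have h : HasDerivAt (fun s => f s θ) (fderiv ℝ (uncurry f) (τ, θ) (1, 0)) τ :=
    (((smooth2_diff hf (τ, θ)).hasFDerivAt.comp_hasDerivAt τ h1 : HasDerivAt (uncurry f ∘ fun s : ℝ => (s, θ)) _ τ))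
  exact h.deriv

lemma pdθ_eq_fderiv (hf : Smooth2 f) (τ θ : ℝ) :
    pdθ f τ θ = fderiv ℝ (uncurry f) (τ, θ) (0, 1) := by
  have h1 : HasDerivAt (fun x : ℝ => (τ, x)) (((0:ℝ), (1:ℝ))) θ :=
    HasDerivAt.prodMk (hasDerivAt_const θ τ) (hasDerivAt_id θ)
  have h : HasDerivAt (fun x => f τ x) (fderiv ℝ (uncurry f) (τ, θ) (0, 1)) θ :=
    (((smooth2_diff hf (τ, θ)).hasFDerivAt.comp_hasDerivAt θ h1 : HasDerivAt (uncurry f ∘ fun x : ℝ => (τ, x)) _ θ))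
  exact h.deriv

lemma smooth2_pdt (hf : Smooth2 f) : Smooth2 (pdt f) := by
  have h : Function.uncurry (pdt f) = fun p : ℝ × ℝ => fderiv ℝ (uncurry f) p (1, 0) := by
    funext p; exact pdt_eq_fderiv hf p.1 p.2
  unfold Smooth2; rw [h]
  exact (hf.fderiv_right (by exact_mod_cast (by simp : (⊤:ℕ∞)+1 ≤ (⊤:ℕ∞)))).clm_apply contDiff_const

lemma smooth2_pdθ (hf : Smooth2 f) : Smooth2 (pdθ f) := by
  have h : Function.uncurry (pdθ f) = fun p : ℝ × ℝ => fderiv ℝ (uncurry f) p (0, 1) := by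
    funext p; exact pdθ_eq_fderiv hf p.1 p.2
  unfold Smooth2; rw [h]
  exact (hf.fderiv_right (by exact_mod_cast (by simp : (⊤:ℕ∞)+1 ≤ (⊤:ℕ∞)))).clm_apply contDiff_const

lemma clairaut (hf : Smooth2 f) (τ θ : ℝ) : pdt (pdθ f) τ θ = pdθ (pdt f) τ θ := by
  set F := uncurry f with hF
  have hdF : Differentiable ℝ F := smooth2_diff hf
  have hC : ContDiff ℝ (⊤ : ℕ∞) (fderiv ℝ F) :=
    hf.fderiv_right (by exact_mod_cast (by simp : (⊤:ℕ∞)+1 ≤ (⊤:ℕ∞)))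
  have hf'' : HasFDerivAt (fderiv ℝ F) (fderiv ℝ (fderiv ℝ F) (τ, θ)) (τ, θ) :=
    (hC.differentiable (by simp) (τ, θ)).hasFDerivAt
  have sym := second_derivative_symmetric (fun y => (hdF y).hasFDerivAt) hf'' (1, 0) (0, 1)
  have key : ∀ v : ℝ × ℝ,
      HasFDerivAt (fun p => fderiv ℝ F p v)
        ((ContinuousLinearMap.apply ℝ ℝ v).comp (fderiv ℝ (fderiv ℝ F) (τ, θ))) (τ, θ) :=
    fun v => (ContinuousLinearMap.apply ℝ ℝ v).hasFDerivAt.comp _ hf''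
  have e1 : pdt (pdθ f) τ θ = fderiv ℝ (fderiv ℝ F) (τ, θ) (1, 0) (0, 1) := by
    have h1 : HasDerivAt (fun s : ℝ => (s, θ)) (((1:ℝ), (0:ℝ))) τ :=
      HasDerivAt.prodMk (hasDerivAt_id τ) (hasDerivAt_const τ θ)
    have h2 := (key (0, 1)).comp_hasDerivAt τ h1
    have h3 : (fun s => pdθ f s θ) = fun s => fderiv ℝ F (s, θ) ((0:ℝ), (1:ℝ)) := by
      funext s; exact pdθ_eq_fderiv hf s θ
    show deriv (fun s => pdθ f s θ) τ = _
    rw [h3]; exact h2.deriv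
  have e2 : pdθ (pdt f) τ θ = fderiv ℝ (fderiv ℝ F) (τ, θ) (0, 1) (1, 0) := by
    have h1 : HasDerivAt (fun x : ℝ => (τ, x)) (((0:ℝ), (1:ℝ))) θ :=
      HasDerivAt.prodMk (hasDerivAt_const θ τ) (hasDerivAt_id θ)
    have h2 := (key (1, 0)).comp_hasDerivAt θ h1
    have h3 : (fun x => pdt f τ x) = fun x => fderiv ℝ F (τ, x) ((1:ℝ), (0:ℝ)) := by
      funext x; exact pdt_eq_fderiv hf τ x
    show deriv (fun x => pdt f τ x) θ = _
    rw [h3]; exact h2.deriv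
  rw [e1, e2, sym]

-- τ-derivative of Afun slice
lemma afun_pdt (hPs : Smooth2 P) (hQs : Smooth2 Q) (τ θ : ℝ) (hτ0 : τ ≠ 0) :
    pdt (Afun P Q) τ θ =
      (1/2) * exp τ * (pdt P τ θ - P τ θ / τ + exp (-τ) * pdθ P τ θ) ^ 2
      + exp τ * (pdt P τ θ - P τ θ / τ + exp (-τ) * pdθ P τ θ) *
          (pdt (pdt P) τ θ - (pdt P τ θ * τ - P τ θ) / τ ^ 2
            - exp (-τ) * pdθ P τ θ + exp (-τ) * pdt (pdθ P) τ θ)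
      + (1/2) * exp τ * exp (2 * P τ θ) * (pdt Q τ θ + exp (-τ) * pdθ Q τ θ) ^ 2
      + exp τ * pdt P τ θ * exp (2 * P τ θ) * (pdt Q τ θ + exp (-τ) * pdθ Q τ θ) ^ 2
      + exp τ * exp (2 * P τ θ) * (pdt Q τ θ + exp (-τ) * pdθ Q τ θ) *
          (pdt (pdt Q) τ θ - exp (-τ) * pdθ Q τ θ + exp (-τ) * pdt (pdθ Q) τ θ) := by
  have hnexp : HasDerivAt (fun s : ℝ => exp (-s)) (-exp (-τ)) τ := by
    simpa using ((hasDerivAt_id τ).neg).exp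
  have h_u := ((hasDerivAt_slice1 (smooth2_pdt hPs) τ θ).sub
      ((hasDerivAt_slice1 hPs τ θ).div (hasDerivAt_id τ) hτ0)).add
      (hnexp.mul (hasDerivAt_slice1 (smooth2_pdθ hPs) τ θ))
  have h_v := (hasDerivAt_slice1 (smooth2_pdt hQs) τ θ).add
      (hnexp.mul (hasDerivAt_slice1 (smooth2_pdθ hQs) τ θ))
  have hE := (HasDerivAt.const_mul (2:ℝ) (hasDerivAt_slice1 hPs τ θ)).exp
  have hexp : HasDerivAt (fun s : ℝ => exp s) (exp τ) τ := Real.hasDerivAt_exp τ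
  have chain := ((HasDerivAt.const_mul ((1:ℝ)/2) hexp).mul (h_u.pow 2)).add
      (((HasDerivAt.const_mul ((1:ℝ)/2) hexp).mul hE).mul (h_v.pow 2))
  have hA : HasDerivAt (fun s => Afun P Q s θ) _ τ := chain
  refine (congr_deriv' hA ?_).deriv
  try simp only [id_eq, Pi.add_apply, Pi.sub_apply, Pi.mul_apply, Pi.div_apply, Pi.pow_apply]
  ring

lemma afun_pdθ (hPs : Smooth2 P) (hQs : Smooth2 Q) (τ θ : ℝ) (hτ0 : τ ≠ 0) :
    pdθ (Afun P Q) τ θ =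
      exp τ * (pdt P τ θ - P τ θ / τ + exp (-τ) * pdθ P τ θ) *
          (pdθ (pdt P) τ θ - pdθ P τ θ / τ + exp (-τ) * pdθ (pdθ P) τ θ)
      + exp τ * pdθ P τ θ * exp (2 * P τ θ) * (pdt Q τ θ + exp (-τ) * pdθ Q τ θ) ^ 2
      + exp τ * exp (2 * P τ θ) * (pdt Q τ θ + exp (-τ) * pdθ Q τ θ) *
          (pdθ (pdt Q) τ θ + exp (-τ) * pdθ (pdθ Q) τ θ) := by
  have h_u := ((hasDerivAt_slice2 (smooth2_pdt hPs) τ θ).sub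
      ((hasDerivAt_slice2 hPs τ θ).div_const τ)).add
      (HasDerivAt.const_mul (exp (-τ)) (hasDerivAt_slice2 (smooth2_pdθ hPs) τ θ))
  have h_v := (hasDerivAt_slice2 (smooth2_pdt hQs) τ θ).add
      (HasDerivAt.const_mul (exp (-τ)) (hasDerivAt_slice2 (smooth2_pdθ hQs) τ θ))
  have hE := (HasDerivAt.const_mul (2:ℝ) (hasDerivAt_slice2 hPs τ θ)).exp
  have chain := (HasDerivAt.const_mul ((1:ℝ)/2 * exp τ) (h_u.pow 2)).add
      ((HasDerivAt.const_mul ((1:ℝ)/2 * exp τ) hE).mul (h_v.pow 2))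
  have hA : HasDerivAt (fun x => Afun P Q τ x) _ θ := chain
  refine (congr_deriv' hA ?_).deriv
  try simp only [id_eq, Pi.add_apply, Pi.sub_apply, Pi.mul_apply, Pi.div_apply, Pi.pow_apply]
  ring

lemma bfun_pdt (hPs : Smooth2 P) (hQs : Smooth2 Q) (τ θ : ℝ) (hτ0 : τ ≠ 0) :
    pdt (Bfun P Q) τ θ =
      (1/2) * exp τ * (pdt P τ θ - P τ θ / τ - exp (-τ) * pdθ P τ θ) ^ 2
      + exp τ * (pdt P τ θ - P τ θ / τ - exp (-τ) * pdθ P τ θ) *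
          (pdt (pdt P) τ θ - (pdt P τ θ * τ - P τ θ) / τ ^ 2
            + exp (-τ) * pdθ P τ θ - exp (-τ) * pdt (pdθ P) τ θ)
      + (1/2) * exp τ * exp (2 * P τ θ) * (pdt Q τ θ - exp (-τ) * pdθ Q τ θ) ^ 2
      + exp τ * pdt P τ θ * exp (2 * P τ θ) * (pdt Q τ θ - exp (-τ) * pdθ Q τ θ) ^ 2
      + exp τ * exp (2 * P τ θ) * (pdt Q τ θ - exp (-τ) * pdθ Q τ θ) *
          (pdt (pdt Q) τ θ + exp (-τ) * pdθ Q τ θ - exp (-τ) * pdt (pdθ Q) τ θ) := by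
  have hnexp : HasDerivAt (fun s : ℝ => exp (-s)) (-exp (-τ)) τ := by
    simpa using ((hasDerivAt_id τ).neg).exp
  have h_u := ((hasDerivAt_slice1 (smooth2_pdt hPs) τ θ).sub
      ((hasDerivAt_slice1 hPs τ θ).div (hasDerivAt_id τ) hτ0)).sub
      (hnexp.mul (hasDerivAt_slice1 (smooth2_pdθ hPs) τ θ))
  have h_v := (hasDerivAt_slice1 (smooth2_pdt hQs) τ θ).sub
      (hnexp.mul (hasDerivAt_slice1 (smooth2_pdθ hQs) τ θ))
  have hE := (HasDerivAt.const_mul (2:ℝ) (hasDerivAt_slice1 hPs τ θ)).exp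
  have hexp : HasDerivAt (fun s : ℝ => exp s) (exp τ) τ := Real.hasDerivAt_exp τ
  have chain := ((HasDerivAt.const_mul ((1:ℝ)/2) hexp).mul (h_u.pow 2)).add
      (((HasDerivAt.const_mul ((1:ℝ)/2) hexp).mul hE).mul (h_v.pow 2))
  have hA : HasDerivAt (fun s => Bfun P Q s θ) _ τ := chain
  refine (congr_deriv' hA ?_).deriv
  try simp only [id_eq, Pi.add_apply, Pi.sub_apply, Pi.mul_apply, Pi.div_apply, Pi.pow_apply]
  ring

lemma bfun_pdθ (hPs : Smooth2 P) (hQs : Smooth2 Q) (τ θ : ℝ) (hτ0 : τ ≠ 0) :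
    pdθ (Bfun P Q) τ θ =
      exp τ * (pdt P τ θ - P τ θ / τ - exp (-τ) * pdθ P τ θ) *
          (pdθ (pdt P) τ θ - pdθ P τ θ / τ - exp (-τ) * pdθ (pdθ P) τ θ)
      + exp τ * pdθ P τ θ * exp (2 * P τ θ) * (pdt Q τ θ - exp (-τ) * pdθ Q τ θ) ^ 2
      + exp τ * exp (2 * P τ θ) * (pdt Q τ θ - exp (-τ) * pdθ Q τ θ) *
          (pdθ (pdt Q) τ θ - exp (-τ) * pdθ (pdθ Q) τ θ) := by
  have h_u := ((hasDerivAt_slice2 (smooth2_pdt hPs) τ θ).sub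
      ((hasDerivAt_slice2 hPs τ θ).div_const τ)).sub
      (HasDerivAt.const_mul (exp (-τ)) (hasDerivAt_slice2 (smooth2_pdθ hPs) τ θ))
  have h_v := (hasDerivAt_slice2 (smooth2_pdt hQs) τ θ).sub
      (HasDerivAt.const_mul (exp (-τ)) (hasDerivAt_slice2 (smooth2_pdθ hQs) τ θ))
  have hE := (HasDerivAt.const_mul (2:ℝ) (hasDerivAt_slice2 hPs τ θ)).exp
  have chain := (HasDerivAt.const_mul ((1:ℝ)/2 * exp τ) (h_u.pow 2)).add
      ((HasDerivAt.const_mul ((1:ℝ)/2 * exp τ) hE).mul (h_v.pow 2))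
  have hA : HasDerivAt (fun x => Bfun P Q τ x) _ θ := chain
  refine (congr_deriv' hA ?_).deriv
  try simp only [id_eq, Pi.add_apply, Pi.sub_apply, Pi.mul_apply, Pi.div_apply, Pi.pow_apply]
  ring

end GowdyAux

set_option maxHeartbeats 1000000 in
/-- The pointwise differential inequalities for `𝒜` and `ℬ` at a point where
`τ ≥ 2` and `1 ≤ P(τ,θ) ≤ τ - 1`. -/
theorem stmt_2 (P Q : ℝ → ℝ → ℝ) (hPs : Smooth2 P) (hQs : Smooth2 Q)
    (hPp : Periodic2 P) (hQp : Periodic2 Q) (hPQ : GowdyEqs P Q)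
    (τ θ : ℝ) (hτ : 2 ≤ τ) (hP1 : 1 ≤ P τ θ) (hP2 : P τ θ ≤ τ - 1) :
    pdt (Afun P Q) τ θ - exp (-τ) * pdθ (Afun P Q) τ θ ≤
      (1 / 2 - 1 / τ) * (Afun P Q τ θ + Bfun P Q τ θ) ∧
    pdt (Bfun P Q) τ θ + exp (-τ) * pdθ (Bfun P Q) τ θ ≤
      (1 / 2 - 1 / τ) * (Afun P Q τ θ + Bfun P Q τ θ) := by
  obtain ⟨hGP, hGQ⟩ := hPQ
  have hτpos : (0:ℝ) < τ := by linarith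
  have hτ0 : τ ≠ 0 := ne_of_gt hτpos
  have hane : exp (-τ) ≠ 0 := (Real.exp_pos _).ne'
  have hee : exp (-2 * τ) = exp (-τ) * exp (-τ) := by rw [← Real.exp_add]; congr 1; ring
  have hET : exp τ = (exp (-τ))⁻¹ := by rw [Real.exp_neg, inv_inv]
  have hGP' : pdt (pdt P) τ θ = exp (-τ) * exp (-τ) * pdθ (pdθ P) τ θ
      + exp (2 * P τ θ) * ((pdt Q τ θ) ^ 2 - exp (-τ) * exp (-τ) * (pdθ Q τ θ) ^ 2) := by
    have h := hGP τ θ; rw [hee] at h; linear_combination h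
  have hGQ' : pdt (pdt Q) τ θ = exp (-τ) * exp (-τ) * pdθ (pdθ Q) τ θ
      - 2 * (pdt P τ θ * pdt Q τ θ - exp (-τ) * exp (-τ) * pdθ P τ θ * pdθ Q τ θ) := by
    have h := hGQ τ θ; rw [hee] at h; linear_combination h
  have heτ : (0:ℝ) < exp τ := Real.exp_pos _
  have hE2 : (0:ℝ) < exp (2 * P τ θ) := Real.exp_pos _
  have hc : (0:ℝ) ≤ 1/2 - 1/τ := by
    have h : 1/τ ≤ 1/2 := by
      rw [div_le_div_iff₀ hτpos (by norm_num : (0:ℝ) < 2)]; linarith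
    linarith
  have h1τ : 1/τ ≤ P τ θ / τ := by
    rw [div_le_div_iff₀ hτpos hτpos]; nlinarith
  have h2τ : P τ θ / τ ≤ 1 - 1/τ := by
    rw [div_le_iff₀ hτpos]
    have he : (1 - 1/τ) * τ = τ - 1 := by field_simp
    rw [he]; linarith
  have hca : (0:ℝ) ≤ (1/2 - 1/τ) - (1/2 - P τ θ / τ) := by linarith
  have hca' : (0:ℝ) ≤ (1/2 - 1/τ) + (1/2 - P τ θ / τ) := by linarith
  have hcP := GowdyAux.clairaut hPs τ θ
  have hcQ := GowdyAux.clairaut hQs τ θ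
  have eAt := GowdyAux.afun_pdt hPs hQs τ θ hτ0
  have eAθ := GowdyAux.afun_pdθ hPs hQs τ θ hτ0
  have eBt := GowdyAux.bfun_pdt hPs hQs τ θ hτ0
  have eBθ := GowdyAux.bfun_pdθ hPs hQs τ θ hτ0
  have key1 : pdt (Afun P Q) τ θ - exp (-τ) * pdθ (Afun P Q) τ θ
      = exp τ * ((1/2 - 1/τ) *
          ((pdt P τ θ - P τ θ / τ + exp (-τ) * pdθ P τ θ) *
            (pdt P τ θ - P τ θ / τ - exp (-τ) * pdθ P τ θ))
        + (1/2 - P τ θ / τ) * exp (2 * P τ θ) *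
          ((pdt Q τ θ + exp (-τ) * pdθ Q τ θ) *
            (pdt Q τ θ - exp (-τ) * pdθ Q τ θ))) := by
    rw [eAt, eAθ, hcP, hcQ, hGP', hGQ', hET]
    field_simp
    ring
  have key2 : pdt (Bfun P Q) τ θ + exp (-τ) * pdθ (Bfun P Q) τ θ
      = exp τ * ((1/2 - 1/τ) *
          ((pdt P τ θ - P τ θ / τ + exp (-τ) * pdθ P τ θ) *
            (pdt P τ θ - P τ θ / τ - exp (-τ) * pdθ P τ θ))
        + (1/2 - P τ θ / τ) * exp (2 * P τ θ) *
          ((pdt Q τ θ + exp (-τ) * pdθ Q τ θ) *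
            (pdt Q τ θ - exp (-τ) * pdθ Q τ θ))) := by
    rw [eBt, eBθ, hcP, hcQ, hGP', hGQ', hET]
    field_simp
    ring
  clear eAt eAθ eBt eBθ hGP' hGQ' hcP hcQ hGP hGQ
  constructor
  · rw [key1]; clear key2
    simp only [Afun, Bfun]
    nlinarith [mul_nonneg (mul_nonneg heτ.le hc)
        (sq_nonneg ((pdt P τ θ - P τ θ / τ + exp (-τ) * pdθ P τ θ) -
          (pdt P τ θ - P τ θ / τ - exp (-τ) * pdθ P τ θ))),
      mul_nonneg (mul_nonneg (mul_nonneg heτ.le hE2.le) hca)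
        (sq_nonneg ((pdt Q τ θ + exp (-τ) * pdθ Q τ θ) +
          (pdt Q τ θ - exp (-τ) * pdθ Q τ θ))),
      mul_nonneg (mul_nonneg (mul_nonneg heτ.le hE2.le) hca')
        (sq_nonneg ((pdt Q τ θ + exp (-τ) * pdθ Q τ θ) -
          (pdt Q τ θ - exp (-τ) * pdθ Q τ θ)))]
  · rw [key2]; clear key1
    simp only [Afun, Bfun]
    nlinarith [mul_nonneg (mul_nonneg heτ.le hc)
        (sq_nonneg ((pdt P τ θ - P τ θ / τ + exp (-τ) * pdθ P τ θ) -
          (pdt P τ θ - P τ θ / τ - exp (-τ) * pdθ P τ θ))),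
      mul_nonneg (mul_nonneg (mul_nonneg heτ.le hE2.le) hca)
        (sq_nonneg ((pdt Q τ θ + exp (-τ) * pdθ Q τ θ) +
          (pdt Q τ θ - exp (-τ) * pdθ Q τ θ))),
      mul_nonneg (mul_nonneg (mul_nonneg heτ.le hE2.le) hca')
        (sq_nonneg ((pdt Q τ θ + exp (-τ) * pdθ Q τ θ) -
          (pdt Q τ θ - exp (-τ) * pdθ Q τ θ)))]
end

section
/- Under the small-data hypotheses at τ₀, the following hold: (i) 1 ≤ P(τ,θ) ≤ τ − 1 for all τ ≥ τ₀ and all θ ∈ S¹; (ii) F(τ) ≤ F(τ₀)·(τ₀/τ)² for all τ ≥ τ₀; (iii) there exist a continuous function v : S¹ → ℝ and a constant 0 < C < ∞ such that ‖P_τ(τ,·) − v‖_{C⁰(S¹)} ≤ C/τ for all τ ≥ τ₀, and α ≤ v(θ) ≤ 1 − α for all θ ∈ S¹. -/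
open Real

namespace GW

lemma le1 : (1 : WithTop ℕ∞) ≤ ((⊤ : ℕ∞) : WithTop ℕ∞) := by exact_mod_cast le_top
lemma letop : ((⊤ : ℕ∞) : WithTop ℕ∞) + 1 ≤ ((⊤ : ℕ∞) : WithTop ℕ∞) := by exact_mod_cast le_top

lemma sm_diff {f : ℝ → ℝ → ℝ} (hf : Smooth2 f) : Differentiable ℝ (Function.uncurry f) :=
  hf.differentiable (by simp)

lemma pdt_eq {f : ℝ → ℝ → ℝ} (hf : Smooth2 f) (τ θ : ℝ) :
    pdt f τ θ = fderiv ℝ (Function.uncurry f) (τ, θ) (1, 0) := by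
  have h1 : HasDerivAt (fun s : ℝ => (s, θ)) ((1 : ℝ), (0 : ℝ)) τ :=
    (hasDerivAt_id τ).prodMk (hasDerivAt_const τ θ)
  have h := ((sm_diff hf (τ, θ)).hasFDerivAt.comp_hasDerivAt τ h1)
  exact h.deriv

lemma pdθ_eq {f : ℝ → ℝ → ℝ} (hf : Smooth2 f) (τ θ : ℝ) :
    pdθ f τ θ = fderiv ℝ (Function.uncurry f) (τ, θ) (0, 1) := by
  have h1 : HasDerivAt (fun x : ℝ => (τ, x)) ((0 : ℝ), (1 : ℝ)) θ :=
    (hasDerivAt_const θ τ).prodMk (hasDerivAt_id θ)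
  have h := ((sm_diff hf (τ, θ)).hasFDerivAt.comp_hasDerivAt θ h1)
  exact h.deriv

/-- chain rule along a curve -/
lemma hasDerivAt_curve {f : ℝ → ℝ → ℝ} (hf : Smooth2 f) {g h : ℝ → ℝ} {g' h' s : ℝ}
    (hg : HasDerivAt g g' s) (hh : HasDerivAt h h' s) :
    HasDerivAt (fun r => f (g r) (h r))
      (g' * pdt f (g s) (h s) + h' * pdθ f (g s) (h s)) s := by
  have h1 : HasDerivAt (fun r : ℝ => (g r, h r)) ((g', h') : ℝ × ℝ) s := hg.prodMk hh
  have h2 := ((sm_diff hf (g s, h s)).hasFDerivAt.comp_hasDerivAt s h1)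
  have h3 : (fderiv ℝ (Function.uncurry f) (g s, h s)) ((g', h') : ℝ × ℝ)
      = g' * pdt f (g s) (h s) + h' * pdθ f (g s) (h s) := by
    have : ((g', h') : ℝ × ℝ) = g' • ((1:ℝ), (0:ℝ)) + h' • ((0:ℝ), (1:ℝ)) := by
      simp [Prod.ext_iff]
    rw [this, map_add, map_smul, map_smul, pdt_eq hf, pdθ_eq hf]
    simp [smul_eq_mul]
  rw [h3] at h2
  exact h2

lemma smooth2_pdt {f : ℝ → ℝ → ℝ} (hf : Smooth2 f) : Smooth2 (pdt f) := by
  have h : Function.uncurry (pdt f) = fun p : ℝ × ℝ => fderiv ℝ (Function.uncurry f) p (1, 0) := by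
    funext p
    exact pdt_eq hf p.1 p.2
  unfold Smooth2
  rw [h]
  exact (hf.fderiv_right (m := ((⊤ : ℕ∞) : WithTop ℕ∞)) letop).clm_apply contDiff_const

lemma smooth2_pdθ {f : ℝ → ℝ → ℝ} (hf : Smooth2 f) : Smooth2 (pdθ f) := by
  have h : Function.uncurry (pdθ f) = fun p : ℝ × ℝ => fderiv ℝ (Function.uncurry f) p (0, 1) := by
    funext p
    exact pdθ_eq hf p.1 p.2
  unfold Smooth2
  rw [h]
  exact (hf.fderiv_right (m := ((⊤ : ℕ∞) : WithTop ℕ∞)) letop).clm_apply contDiff_const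

/-- Clairaut -/
lemma mixed_comm {f : ℝ → ℝ → ℝ} (hf : Smooth2 f) (τ θ : ℝ) :
    pdθ (pdt f) τ θ = pdt (pdθ f) τ θ := by
  set F := Function.uncurry f with hF
  have hd : Differentiable ℝ F := sm_diff hf
  have hfd : ContDiff ℝ (⊤ : ℕ∞) (fderiv ℝ F) := hf.fderiv_right (m := ((⊤ : ℕ∞) : WithTop ℕ∞)) letop
  have hdd : Differentiable ℝ (fderiv ℝ F) := hfd.differentiable (by simp)
  have hsymm := second_derivative_symmetric (f := F) (f' := fderiv ℝ F)
      (f'' := fderiv ℝ (fderiv ℝ F) (τ, θ)) (x := (τ, θ))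
      (fun y => (hd y).hasFDerivAt) ((hdd (τ, θ)).hasFDerivAt)
  -- pdθ (pdt f) τ θ = deriv (fun x => fderiv F (τ, x) (1,0)) θ
  have e1 : pdθ (pdt f) τ θ = (fderiv ℝ (fderiv ℝ F) (τ, θ) ((0 : ℝ), (1 : ℝ))) (1, 0) := by
    have h1 : HasDerivAt (fun x : ℝ => (τ, x)) ((0 : ℝ), (1 : ℝ)) θ :=
      (hasDerivAt_const θ τ).prodMk (hasDerivAt_id θ)
    have h2 : HasDerivAt (fun x : ℝ => fderiv ℝ F (τ, x))
        (fderiv ℝ (fderiv ℝ F) (τ, θ) ((0 : ℝ), (1 : ℝ))) θ :=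
      ((hdd (τ, θ)).hasFDerivAt.comp_hasDerivAt θ h1)
    have h3 : HasDerivAt (fun x : ℝ => fderiv ℝ F (τ, x) ((1:ℝ), (0:ℝ)))
        ((fderiv ℝ (fderiv ℝ F) (τ, θ) ((0 : ℝ), (1 : ℝ))) (1, 0)) θ := by
      have := h2.clm_apply (hasDerivAt_const θ ((1:ℝ), (0:ℝ)))
      simpa using this
    have h4 : (fun x : ℝ => pdt f τ x) = fun x : ℝ => fderiv ℝ F (τ, x) ((1:ℝ), (0:ℝ)) := by
      funext x; exact pdt_eq hf τ x
    show deriv (fun x => pdt f τ x) θ = _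
    rw [h4]
    exact h3.deriv
  have e2 : pdt (pdθ f) τ θ = (fderiv ℝ (fderiv ℝ F) (τ, θ) ((1 : ℝ), (0 : ℝ))) (0, 1) := by
    have h1 : HasDerivAt (fun s : ℝ => (s, θ)) ((1 : ℝ), (0 : ℝ)) τ :=
      (hasDerivAt_id τ).prodMk (hasDerivAt_const τ θ)
    have h2 : HasDerivAt (fun s : ℝ => fderiv ℝ F (s, θ))
        (fderiv ℝ (fderiv ℝ F) (τ, θ) ((1 : ℝ), (0 : ℝ))) τ :=
      ((hdd (τ, θ)).hasFDerivAt.comp_hasDerivAt τ h1)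
    have h3 : HasDerivAt (fun s : ℝ => fderiv ℝ F (s, θ) ((0:ℝ), (1:ℝ)))
        ((fderiv ℝ (fderiv ℝ F) (τ, θ) ((1 : ℝ), (0 : ℝ))) (0, 1)) τ := by
      have := h2.clm_apply (hasDerivAt_const τ ((0:ℝ), (1:ℝ)))
      simpa using this
    have h4 : (fun s : ℝ => pdθ f s θ) = fun s : ℝ => fderiv ℝ F (s, θ) ((0:ℝ), (1:ℝ)) := by
      funext s; exact pdθ_eq hf s θ
    show deriv (fun s => pdθ f s θ) τ = _
    rw [h4]
    exact h3.deriv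
  rw [e1, e2, hsymm]

lemma smooth2_cont {f : ℝ → ℝ → ℝ} (hf : Smooth2 f) : Continuous (Function.uncurry f) :=
  hf.continuous

end GW
namespace GW
variable {P Q : ℝ → ℝ → ℝ}

noncomputable def Af (P : ℝ → ℝ → ℝ) (σ τ θ : ℝ) : ℝ :=
  pdt P τ θ - P τ θ * τ⁻¹ + σ * (exp (-τ) * pdθ P τ θ)
noncomputable def Bf (P Q : ℝ → ℝ → ℝ) (σ τ θ : ℝ) : ℝ :=
  exp (P τ θ) * (pdt Q τ θ + σ * (exp (-τ) * pdθ Q τ θ))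
noncomputable def Gf (P Q : ℝ → ℝ → ℝ) (σ τ θ : ℝ) : ℝ :=
  Af P σ τ θ ^ 2 + Bf P Q σ τ θ ^ 2



theorem hasDerivAt_G (hP : Smooth2 P) (hQ : Smooth2 Q) (hPQ : GowdyEqs P Q) (σ : ℝ) (hσ : σ = 1 ∨ σ = -1) (c s : ℝ) (hs : 0 < s) :
    HasDerivAt (fun r => Gf P Q σ r (c + σ * exp (-r)))
      (-Gf P Q σ s (c + σ * exp (-s))
        + (1 - 2 * s⁻¹) * (Af P 1 s (c + σ * exp (-s)) * Af P (-1) s (c + σ * exp (-s)))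
        + (1 - 2 * (P s (c + σ * exp (-s))) * s⁻¹) *
            (Bf P Q 1 s (c + σ * exp (-s)) * Bf P Q (-1) s (c + σ * exp (-s)))) s := by
  have hen : HasDerivAt (fun r : ℝ => exp (-r)) (exp (-s) * -1) s := by
    simpa [Function.comp_def] using (Real.hasDerivAt_exp (-s)).comp s (hasDerivAt_neg s)
  have hκ : HasDerivAt (fun r : ℝ => c + σ * exp (-r)) (σ * (exp (-s) * -1)) s :=
    (hen.const_mul σ).const_add c
  have hid : HasDerivAt (fun r : ℝ => r) 1 s := hasDerivAt_id' s
  have hf1 := hasDerivAt_curve (smooth2_pdt hP) hid hκ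
  have hf2 := hasDerivAt_curve hP hid hκ
  have hf3 := hasDerivAt_curve (smooth2_pdθ hP) hid hκ
  have hg1 := hasDerivAt_curve (smooth2_pdt hQ) hid hκ
  have hg3 := hasDerivAt_curve (smooth2_pdθ hQ) hid hκ
  have hinv : HasDerivAt (fun r : ℝ => r⁻¹) (-(s ^ 2)⁻¹) s := hasDerivAt_inv hs.ne'
  have hA := (hf1.sub (hf2.mul hinv)).add ((hen.mul hf3).const_mul σ)
  have hexpP : HasDerivAt (fun r => exp (P r (c + σ * exp (-r))))
      (exp (P s (c + σ * exp (-s))) *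
        (1 * pdt P s (c + σ * exp (-s)) + σ * (exp (-s) * -1) * pdθ P s (c + σ * exp (-s)))) s :=
    (Real.hasDerivAt_exp _).comp s hf2
  have hB := hexpP.mul (hg1.add ((hen.mul hg3).const_mul σ))
  have hG := (hA.pow 2).add (hB.pow 2)
  simp only [Gf, Af, Bf]
  convert hG using 1
  · rfl
  · rfl
  · rfl
  simp only [Pi.add_apply, Pi.sub_apply, Pi.mul_apply, Nat.cast_ofNat]
  set θs := c + σ * exp (-s) with hθs
  have he2 : exp (-2 * s) = exp (-s) * exp (-s) := by rw [← Real.exp_add]; ring_nf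
  have heP : exp (2 * P s θs) = exp (P s θs) * exp (P s θs) := by rw [← Real.exp_add]; ring_nf
  have hPe := hPQ.1 s θs
  have hQe := hPQ.2 s θs
  rw [he2, heP] at hPe
  rw [he2] at hQe
  have hmp := mixed_comm hP s θs
  have hmq := mixed_comm hQ s θs
  rcases hσ with h | h
  · subst h
    linear_combination
      (-2 * (pdt P s θs - P s θs * s⁻¹ + (1:ℝ) * (exp (-s) * pdθ P s θs))) * hPe
      + (-2 * (exp (P s θs) * (pdt Q s θs + (1:ℝ) * (exp (-s) * pdθ Q s θs))) * exp (P s θs)) * hQe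
      + (2 * (pdt P s θs - P s θs * s⁻¹ + (1:ℝ) * (exp (-s) * pdθ P s θs)) * (1:ℝ) * exp (-s)) * hmp
      + (2 * (exp (P s θs) * (pdt Q s θs + (1:ℝ) * (exp (-s) * pdθ Q s θs))) * exp (P s θs) * (1:ℝ) *
          exp (-s)) * hmq
  · subst h
    linear_combination
      (-2 * (pdt P s θs - P s θs * s⁻¹ + (-1:ℝ) * (exp (-s) * pdθ P s θs))) * hPe
      + (-2 * (exp (P s θs) * (pdt Q s θs + (-1:ℝ) * (exp (-s) * pdθ Q s θs))) * exp (P s θs)) * hQe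
      + (2 * (pdt P s θs - P s θs * s⁻¹ + (-1:ℝ) * (exp (-s) * pdθ P s θs)) * (-1:ℝ) * exp (-s)) * hmp
      + (2 * (exp (P s θs) * (pdt Q s θs + (-1:ℝ) * (exp (-s) * pdθ Q s θs))) * exp (P s θs) * (-1:ℝ) *
          exp (-s)) * hmq

end GW
namespace GW
variable {P Q : ℝ → ℝ → ℝ}

lemma periodic2_pdt {f : ℝ → ℝ → ℝ} (hf : Periodic2 f) : Periodic2 (pdt f) := by
  intro τ θ
  show deriv (fun s => f s (θ + 2 * π)) τ = deriv (fun s => f s θ) τ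
  congr 1
  funext s
  exact hf s θ

lemma periodic2_pdθ {f : ℝ → ℝ → ℝ} (hf : Periodic2 f) : Periodic2 (pdθ f) := by
  intro τ θ
  show deriv (fun x => f τ x) (θ + 2 * π) = deriv (fun x => f τ x) θ
  rw [← deriv_comp_add_const (fun x => f τ x) (2 * π)]
  congr 1
  funext x
  exact hf τ x

lemma periodic_G (hPp : Periodic2 P) (hQp : Periodic2 Q) (σ τ : ℝ) :
    Function.Periodic (fun θ => Gf P Q σ τ θ) (2 * π) := by
  intro θ
  simp only [Gf, Af, Bf, hPp τ θ, hQp τ θ, periodic2_pdt hPp τ θ, periodic2_pdθ hPp τ θ,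
    periodic2_pdt hQp τ θ, periodic2_pdθ hQp τ θ]

lemma cont_uncurry {f : ℝ → ℝ → ℝ} (hf : Smooth2 f) :
    Continuous (fun p : ℝ × ℝ => f p.1 p.2) := hf.continuous

lemma cont_G_fixed (hP : Smooth2 P) (hQ : Smooth2 Q) (τ : ℝ) :
    Continuous (fun θ => Gf P Q σ τ θ) := by
  have c0 := cont_uncurry hP
  have c1 := cont_uncurry (smooth2_pdt hP)
  have c2 := cont_uncurry (smooth2_pdθ hP)
  have d1 := cont_uncurry (smooth2_pdt hQ)
  have d2 := cont_uncurry (smooth2_pdθ hQ)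
  have hc : Continuous (fun θ : ℝ => (τ, θ)) := continuous_const.prodMk continuous_id
  unfold Gf Af Bf
  fun_prop

lemma contOn_G (hP : Smooth2 P) (hQ : Smooth2 Q) (σ : ℝ) :
    ContinuousOn (fun p : ℝ × ℝ => Gf P Q σ p.1 p.2) {p : ℝ × ℝ | p.1 ≠ 0} := by
  have c0 := cont_uncurry hP
  have c1 := cont_uncurry (smooth2_pdt hP)
  have c2 := cont_uncurry (smooth2_pdθ hP)
  have d1 := cont_uncurry (smooth2_pdt hQ)
  have d2 := cont_uncurry (smooth2_pdθ hQ)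
  have hinv : ContinuousOn (fun p : ℝ × ℝ => (p.1)⁻¹) {p : ℝ × ℝ | p.1 ≠ 0} :=
    ContinuousOn.inv₀ continuous_fst.continuousOn (fun p hp => hp)
  unfold Gf Af Bf
  fun_prop

lemma G_nonneg (σ τ θ : ℝ) : 0 ≤ Gf P Q σ τ θ := by
  unfold Gf; positivity

noncomputable def Hf (P Q : ℝ → ℝ → ℝ) (σ τ : ℝ) : ℝ := ⨆ θ : ℝ, Gf P Q σ τ θ

lemma bddAbove_G (hP : Smooth2 P) (hQ : Smooth2 Q) (hPp : Periodic2 P) (hQp : Periodic2 Q)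
    (σ τ : ℝ) : BddAbove (Set.range (fun θ => Gf P Q σ τ θ)) := by
  have hsub : Set.range (fun θ => Gf P Q σ τ θ) ⊆
      (fun θ => Gf P Q σ τ θ) '' (Set.Icc 0 (2 * π)) := by
    rintro x ⟨θ, rfl⟩
    obtain ⟨y, hy, hxy⟩ := (periodic_G hPp hQp σ τ).exists_mem_Ico₀ Real.two_pi_pos θ
    exact ⟨y, ⟨hy.1, hy.2.le⟩, hxy.symm⟩
  exact (BddAbove.mono hsub (isCompact_Icc.image (cont_G_fixed hP hQ τ)).bddAbove)

lemma G_le_H (hP : Smooth2 P) (hQ : Smooth2 Q) (hPp : Periodic2 P) (hQp : Periodic2 Q)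
    (σ τ θ : ℝ) : Gf P Q σ τ θ ≤ Hf P Q σ τ :=
  le_ciSup (bddAbove_G hP hQ hPp hQp σ τ) θ

lemma H_le (σ τ : ℝ) {M : ℝ} (h : ∀ θ, Gf P Q σ τ θ ≤ M) : Hf P Q σ τ ≤ M := ciSup_le h

lemma H_nonneg (hP : Smooth2 P) (hQ : Smooth2 Q) (hPp : Periodic2 P) (hQp : Periodic2 Q)
    (σ τ : ℝ) : 0 ≤ Hf P Q σ τ :=
  le_trans (G_nonneg σ τ 0) (G_le_H hP hQ hPp hQp σ τ 0)

lemma Ffun_eq (τ : ℝ) :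
    Ffun P Q τ = 1 / 2 * Hf P Q 1 τ + 1 / 2 * Hf P Q (-1) τ := by
  unfold Ffun Hf
  congr 1
  · congr 1
    congr 1
    funext θ
    have heP : exp (2 * P τ θ) = exp (P τ θ) * exp (P τ θ) := by rw [← Real.exp_add]; ring_nf
    unfold Gf Af Bf
    rw [heP]
    rw [div_eq_mul_inv]
    ring
  · congr 1
    congr 1
    funext θ
    have heP : exp (2 * P τ θ) = exp (P τ θ) * exp (P τ θ) := by rw [← Real.exp_add]; ring_nf
    unfold Gf Af Bf
    rw [heP]
    rw [div_eq_mul_inv]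
    ring

end GW
namespace GW
open Set
variable {P Q : ℝ → ℝ → ℝ}

/-- uniform continuity modulus property on the standard window -/
def UC (G : ℝ → ℝ → ℝ) (a b δ ε : ℝ) : Prop :=
  ∀ t t' θ θ' : ℝ, t ∈ Icc a b → t' ∈ Icc a b → θ ∈ Icc (-1) (2*π+1) → θ' ∈ Icc (-1) (2*π+1) →
    |t - t'| ≤ δ → |θ - θ'| ≤ δ → |G t θ - G t' θ'| ≤ ε

lemma exists_UC (hP : Smooth2 P) (hQ : Smooth2 Q) (σ : ℝ) (a b : ℝ) (ha : 2 ≤ a)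
    {ε : ℝ} (hε : 0 < ε) : ∃ δ > 0, UC (Gf P Q σ) a b δ ε := by
  set K : Set (ℝ × ℝ) := Icc a b ×ˢ Icc (-1) (2*π+1) with hK
  have hKc : IsCompact K := isCompact_Icc.prod isCompact_Icc
  have hcont : ContinuousOn (fun p : ℝ × ℝ => Gf P Q σ p.1 p.2) K := by
    apply (contOn_G hP hQ σ).mono
    rintro ⟨t, θ⟩ ⟨ht, -⟩
    have : (2:ℝ) ≤ t := le_trans ha ht.1
    simp only [Set.mem_setOf_eq]
    intro h0
    rw [h0] at this; norm_num at this
  have huc := hKc.uniformContinuousOn_of_continuous hcont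
  rw [Metric.uniformContinuousOn_iff] at huc
  obtain ⟨δ, hδ, hd⟩ := huc ε hε
  refine ⟨δ/2, by linarith, ?_⟩
  intro t t' θ θ' ht ht' hθ hθ' h1 h2
  have := hd (t, θ) ⟨ht, hθ⟩ (t', θ') ⟨ht', hθ'⟩ (by
    rw [Prod.dist_eq]
    simp only [Real.dist_eq]
    apply max_lt <;> linarith)
  exact le_of_lt this

lemma exp_neg_lip {x y : ℝ} (h0 : 0 ≤ x) (hxy : x ≤ y) : exp (-x) - exp (-y) ≤ y - x := by
  have h1 : exp (-x) ≤ 1 := by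
    rw [← Real.exp_zero]; exact Real.exp_le_exp.mpr (by linarith)
  have h2 : exp (-(y - x)) ≥ 1 - (y - x) := by
    have := Real.add_one_le_exp (-(y-x)); linarith
  have h3 : exp (-x) - exp (-y) = exp (-x) * (1 - exp (-(y - x))) := by
    rw [mul_sub, mul_one, ← Real.exp_add]; ring_nf
  rw [h3]
  have h4 : 1 - exp (-(y - x)) ≤ y - x := by linarith
  have h5 : 0 ≤ 1 - exp (-(y - x)) := by
    have : exp (-(y-x)) ≤ 1 := by
      rw [← Real.exp_zero]; exact Real.exp_le_exp.mpr (by linarith)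
    linarith
  calc exp (-x) * (1 - exp (-(y-x))) ≤ 1 * (1 - exp (-(y-x))) :=
        mul_le_mul_of_nonneg_right h1 h5
    _ ≤ y - x := by linarith

lemma cs_ineq (a b c d : ℝ) : a*c + b*d ≤ Real.sqrt (a^2+b^2) * Real.sqrt (c^2+d^2) := by
  have hx := Real.sqrt_nonneg (a^2+b^2)
  have hy := Real.sqrt_nonneg (c^2+d^2)
  have hx2 : Real.sqrt (a^2+b^2) ^ 2 = a^2+b^2 := Real.sq_sqrt (by positivity)
  have hy2 : Real.sqrt (c^2+d^2) ^ 2 = c^2+d^2 := Real.sq_sqrt (by positivity)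
  nlinarith [sq_nonneg (a*d - b*c), mul_nonneg hx hy,
    sq_nonneg (Real.sqrt (a^2+b^2) * Real.sqrt (c^2+d^2) - (a*c+b*d))]

lemma sqrt_mul_sqrt_le {x y : ℝ} (hx : 0 ≤ x) (hy : 0 ≤ y) :
    Real.sqrt x * Real.sqrt y ≤ (x + y) / 2 := by
  nlinarith [sq_nonneg (Real.sqrt x - Real.sqrt y), Real.sq_sqrt hx, Real.sq_sqrt hy,
    Real.sqrt_nonneg x, Real.sqrt_nonneg y]

/-- the pointwise cross-term bound -/
lemma cross_bound (hbP1 : 1 ≤ P ξ θ) (hbP2 : P ξ θ ≤ ξ - 1) (hξ : 2 ≤ ξ) (hξb : ξ ≤ tb) :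
    (1 - 2 * ξ⁻¹) * (Af P 1 ξ θ * Af P (-1) ξ θ)
      + (1 - 2 * (P ξ θ) * ξ⁻¹) * (Bf P Q 1 ξ θ * Bf P Q (-1) ξ θ)
    ≤ (1 - 2 * tb⁻¹) * (Real.sqrt (Gf P Q 1 ξ θ) * Real.sqrt (Gf P Q (-1) ξ θ)) := by
  have hξ0 : (0:ℝ) < ξ := by linarith
  have htb0 : (0:ℝ) < tb := by linarith
  have h1 : (0:ℝ) ≤ 1 - 2 * ξ⁻¹ := by
    rw [sub_nonneg]
    rw [show (2:ℝ) * ξ⁻¹ = 2 / ξ by ring]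
    rw [div_le_one hξ0]; linarith
  have h2 : 1 - 2 * ξ⁻¹ ≤ 1 - 2 * tb⁻¹ := by
    have : tb⁻¹ ≤ ξ⁻¹ := by
      apply inv_anti₀ hξ0 hξb
    linarith
  have h3 : |1 - 2 * (P ξ θ) * ξ⁻¹| ≤ 1 - 2 * ξ⁻¹ := by
    rw [abs_le]
    constructor
    · have : P ξ θ * ξ⁻¹ ≤ (ξ - 1) * ξ⁻¹ := by
        apply mul_le_mul_of_nonneg_right hbP2 (le_of_lt (inv_pos.mpr hξ0))
      have he : (ξ - 1) * ξ⁻¹ = 1 - ξ⁻¹ := by field_simp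
      have hi : ξ⁻¹ ≤ 2⁻¹ := by apply inv_anti₀ (by norm_num) hξ
      nlinarith [this]
    · have : 1 * ξ⁻¹ ≤ P ξ θ * ξ⁻¹ := by
        apply mul_le_mul_of_nonneg_right hbP1 (le_of_lt (inv_pos.mpr hξ0))
      linarith
  set a1 := Af P 1 ξ θ; set a2 := Af P (-1) ξ θ
  set b1 := Bf P Q 1 ξ θ; set b2 := Bf P Q (-1) ξ θ
  have key : (1 - 2 * ξ⁻¹) * (a1 * a2) + (1 - 2 * (P ξ θ) * ξ⁻¹) * (b1 * b2)
      ≤ (1 - 2 * ξ⁻¹) * (|a1| * |a2| + |b1| * |b2|) := by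
    have e1 : (1 - 2 * ξ⁻¹) * (a1 * a2) ≤ (1 - 2 * ξ⁻¹) * (|a1| * |a2|) := by
      apply mul_le_mul_of_nonneg_left _ h1
      rw [← abs_mul]; exact le_abs_self _
    have e2 : (1 - 2 * (P ξ θ) * ξ⁻¹) * (b1 * b2) ≤ (1 - 2 * ξ⁻¹) * (|b1| * |b2|) := by
      calc (1 - 2 * (P ξ θ) * ξ⁻¹) * (b1 * b2) ≤ |(1 - 2 * (P ξ θ) * ξ⁻¹) * (b1 * b2)| :=
            le_abs_self _
        _ = |1 - 2 * (P ξ θ) * ξ⁻¹| * (|b1| * |b2|) := by rw [abs_mul, abs_mul]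
        _ ≤ (1 - 2 * ξ⁻¹) * (|b1| * |b2|) := by
            apply mul_le_mul_of_nonneg_right h3 (by positivity)
    linarith
  have cs : |a1| * |a2| + |b1| * |b2| ≤
      Real.sqrt (Gf P Q 1 ξ θ) * Real.sqrt (Gf P Q (-1) ξ θ) := by
    have := cs_ineq |a1| |b1| |a2| |b2|
    simpa [Gf, sq_abs] using this
  have hsq : (0:ℝ) ≤ Real.sqrt (Gf P Q 1 ξ θ) * Real.sqrt (Gf P Q (-1) ξ θ) :=
    mul_nonneg (Real.sqrt_nonneg _) (Real.sqrt_nonneg _)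
  calc (1 - 2 * ξ⁻¹) * (a1 * a2) + (1 - 2 * (P ξ θ) * ξ⁻¹) * (b1 * b2)
      ≤ (1 - 2 * ξ⁻¹) * (|a1| * |a2| + |b1| * |b2|) := key
    _ ≤ (1 - 2 * ξ⁻¹) * (Real.sqrt (Gf P Q 1 ξ θ) * Real.sqrt (Gf P Q (-1) ξ θ)) := by
        apply mul_le_mul_of_nonneg_left cs h1
    _ ≤ (1 - 2 * tb⁻¹) * (Real.sqrt (Gf P Q 1 ξ θ) * Real.sqrt (Gf P Q (-1) ξ θ)) := by
        apply mul_le_mul_of_nonneg_right h2 hsq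

end GW
namespace GW
open Set
variable {P Q : ℝ → ℝ → ℝ}

set_option maxHeartbeats 1000000 in
lemma key_est (hP : Smooth2 P) (hQ : Smooth2 Q) (hPp : Periodic2 P) (hQp : Periodic2 Q)
    (hPQ : GowdyEqs P Q) {a b : ℝ} (ha : 2 ≤ a)
    (hbd : ∀ τ ∈ Icc a b, ∀ θ : ℝ, 1 ≤ P τ θ ∧ P τ θ ≤ τ - 1)
    {ε₁ δ₀ : ℝ} (hε₁ : 0 < ε₁)
    (hU1 : UC (Gf P Q 1) a b δ₀ ε₁) (hUm : UC (Gf P Q (-1)) a b δ₀ ε₁)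
    {t h : ℝ} (hta : a ≤ t) (hh0 : 0 < h) (hhδ : h ≤ δ₀) (hh1 : h ≤ 1) (htb : t + h ≤ b)
    (σ : ℝ) (hσ : σ = 1 ∨ σ = -1) :
    (1 + h) * Hf P Q σ (t + h) ≤ Hf P Q σ t
      + h * (ε₁ + (1 - 2 * (t+h)⁻¹) *
          (Real.sqrt (Hf P Q 1 t + ε₁) * Real.sqrt (Hf P Q (-1) t + ε₁))) := by
  have ha2 : (2:ℝ) ≤ t := le_trans ha hta
  have hUσ : UC (Gf P Q σ) a b δ₀ ε₁ := by rcases hσ with rfl | rfl; exacts [hU1, hUm]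
  have hσabs : |σ| = 1 := by rcases hσ with rfl | rfl <;> simp
  set X : ℝ := (1 - 2 * (t+h)⁻¹) *
      (Real.sqrt (Hf P Q 1 t + ε₁) * Real.sqrt (Hf P Q (-1) t + ε₁)) with hX
  have htIcc : t ∈ Icc a b := ⟨hta, by linarith⟩
  have hthIcc : t + h ∈ Icc a b := ⟨by linarith, htb⟩
  -- core estimate for y in the fundamental window
  have hcore : ∀ y, y ∈ Icc (0:ℝ) (2*π) → (1+h) * Gf P Q σ (t+h) y
      ≤ Hf P Q σ t + h * (ε₁ + X) := by
    intro y hy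
    have hπ := Real.pi_pos
    have hywin : y ∈ Icc (-1:ℝ) (2*π+1) := ⟨by linarith [hy.1], by linarith [hy.2]⟩
    set c : ℝ := y - σ * exp (-(t+h)) with hc
    have hκy : c + σ * exp (-(t+h)) = y := by rw [hc]; ring
    -- the curve stays close to y
    have hclose : ∀ r, t ≤ r → r ≤ t + h → |c + σ * exp (-r) - y| ≤ h := by
      intro r hr1 hr2
      have h2r : (2:ℝ) ≤ r := le_trans ha2 hr1
      have heq : c + σ * exp (-r) - y = σ * (exp (-r) - exp (-(t+h))) := by rw [hc]; ring
      rw [heq, abs_mul, hσabs, one_mul]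
      have hmono : exp (-(t+h)) ≤ exp (-r) := Real.exp_le_exp.mpr (by linarith)
      rw [abs_of_nonneg (by linarith)]
      have := exp_neg_lip (x := r) (y := t + h) (by linarith) hr2
      linarith
    have hwin : ∀ r, t ≤ r → r ≤ t + h → (c + σ * exp (-r)) ∈ Icc (-1:ℝ) (2*π+1) := by
      intro r hr1 hr2
      have := hclose r hr1 hr2
      rw [abs_le] at this
      constructor <;> [linarith [hy.1]; linarith [hy.2]]
    have hd0 : ∀ r ∈ Icc t (t+h), HasDerivAt (fun r => Gf P Q σ r (c + σ * exp (-r)))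
        (-Gf P Q σ r (c + σ * exp (-r))
          + (1 - 2 * r⁻¹) * (Af P 1 r (c + σ * exp (-r)) * Af P (-1) r (c + σ * exp (-r)))
          + (1 - 2 * (P r (c + σ * exp (-r))) * r⁻¹) *
              (Bf P Q 1 r (c + σ * exp (-r)) * Bf P Q (-1) r (c + σ * exp (-r)))) r := by
      intro r hr
      exact hasDerivAt_G hP hQ hPQ σ hσ c r (by linarith [hr.1])
    have hcontu : ContinuousOn (fun r => Gf P Q σ r (c + σ * exp (-r))) (Icc t (t+h)) :=
      fun r hr => ((hd0 r hr).continuousAt).continuousWithinAt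
    obtain ⟨ξ, hξIoo, hslope⟩ := exists_hasDerivAt_eq_slope
      (fun r => Gf P Q σ r (c + σ * exp (-r)))
      (fun r => -Gf P Q σ r (c + σ * exp (-r))
          + (1 - 2 * r⁻¹) * (Af P 1 r (c + σ * exp (-r)) * Af P (-1) r (c + σ * exp (-r)))
          + (1 - 2 * (P r (c + σ * exp (-r))) * r⁻¹) *
              (Bf P Q 1 r (c + σ * exp (-r)) * Bf P Q (-1) r (c + σ * exp (-r))))
      (by linarith : t < t + h) hcontu (fun x hx => hd0 x (Ioo_subset_Icc_self hx))
    have hξ1 : t < ξ := hξIoo.1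
    have hξ2 : ξ < t + h := hξIoo.2
    have hξa : a ≤ ξ := by linarith
    have hξb : ξ ≤ b := by linarith
    have h2ξ : (2:ℝ) ≤ ξ := by linarith
    set θξ : ℝ := c + σ * exp (-ξ) with hθξ
    set Dξ : ℝ := -Gf P Q σ ξ θξ
          + (1 - 2 * ξ⁻¹) * (Af P 1 ξ θξ * Af P (-1) ξ θξ)
          + (1 - 2 * (P ξ θξ) * ξ⁻¹) * (Bf P Q 1 ξ θξ * Bf P Q (-1) ξ θξ) with hDξ
    rw [hκy] at hslope
    have hdiff : Gf P Q σ (t+h) y - Gf P Q σ t (c + σ * exp (-t)) = Dξ * h := by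
      rw [hslope]
      field_simp
      rw [add_sub_cancel_left, mul_div_cancel_left₀ _ hh0.ne']
    have hθξwin : θξ ∈ Icc (-1:ℝ) (2*π+1) := hwin ξ (le_of_lt hξ1) (le_of_lt hξ2)
    have hθξclose : |θξ - y| ≤ h := hclose ξ (le_of_lt hξ1) (le_of_lt hξ2)
    have hξIcc : ξ ∈ Icc a b := ⟨hξa, hξb⟩
    -- e1 : damping transfer
    have e1 : |Gf P Q σ ξ θξ - Gf P Q σ (t+h) y| ≤ ε₁ := by
      apply hUσ ξ (t+h) θξ y hξIcc hthIcc hθξwin hywin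
      · rw [abs_of_nonpos (by linarith)]; linarith
      · exact hθξclose.trans hhδ
    -- e2/e3 : sup transfer
    have e2 : Gf P Q 1 ξ θξ ≤ Hf P Q 1 t + ε₁ := by
      have := hU1 ξ t θξ θξ hξIcc htIcc hθξwin hθξwin
        (by rw [abs_of_nonneg (by linarith)]; linarith) (by simp; linarith)
      have hle := G_le_H hP hQ hPp hQp 1 t θξ
      rw [abs_le] at this
      linarith [this.1]
    have e3 : Gf P Q (-1) ξ θξ ≤ Hf P Q (-1) t + ε₁ := by
      have := hUm ξ t θξ θξ hξIcc htIcc hθξwin hθξwin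
        (by rw [abs_of_nonneg (by linarith)]; linarith) (by simp; linarith)
      have hle := G_le_H hP hQ hPp hQp (-1) t θξ
      rw [abs_le] at this
      linarith [this.1]
    -- cross bound
    have hPb := hbd ξ hξIcc θξ
    have hcross : (1 - 2 * ξ⁻¹) * (Af P 1 ξ θξ * Af P (-1) ξ θξ)
        + (1 - 2 * (P ξ θξ) * ξ⁻¹) * (Bf P Q 1 ξ θξ * Bf P Q (-1) ξ θξ)
        ≤ (1 - 2 * (t+h)⁻¹) * (Real.sqrt (Gf P Q 1 ξ θξ) * Real.sqrt (Gf P Q (-1) ξ θξ)) :=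
      cross_bound hPb.1 hPb.2 h2ξ (by linarith)
    have hco : (0:ℝ) ≤ 1 - 2 * (t+h)⁻¹ := by
      rw [sub_nonneg, show (2:ℝ) * (t+h)⁻¹ = 2/(t+h) by ring, div_le_one (by linarith)]
      linarith
    have hsqmul : Real.sqrt (Gf P Q 1 ξ θξ) * Real.sqrt (Gf P Q (-1) ξ θξ)
        ≤ Real.sqrt (Hf P Q 1 t + ε₁) * Real.sqrt (Hf P Q (-1) t + ε₁) :=
      mul_le_mul (Real.sqrt_le_sqrt e2) (Real.sqrt_le_sqrt e3)
        (Real.sqrt_nonneg _) (Real.sqrt_nonneg _)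
    have hXc : (1 - 2 * (t+h)⁻¹) * (Real.sqrt (Gf P Q 1 ξ θξ) * Real.sqrt (Gf P Q (-1) ξ θξ))
        ≤ X := by
      rw [hX]; exact mul_le_mul_of_nonneg_left hsqmul hco
    have habs := (abs_le.mp e1).1
    have hDle : Dξ ≤ -Gf P Q σ (t+h) y + ε₁ + X := by
      rw [hDξ]
      linarith [hcross, hXc, habs]
    -- assemble
    have hGtle : Gf P Q σ t (c + σ * exp (-t)) ≤ Hf P Q σ t := G_le_H hP hQ hPp hQp σ t _
    have hmul : h * Dξ ≤ h * (-Gf P Q σ (t+h) y + ε₁ + X) :=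
      mul_le_mul_of_nonneg_left hDle hh0.le
    linarith [hdiff, hmul, hGtle]
  -- extend to all θ and take sup
  have hall : ∀ θ : ℝ, Gf P Q σ (t+h) θ ≤ (Hf P Q σ t + h * (ε₁ + X)) / (1+h) := by
    intro θ
    obtain ⟨y, hy, hxy⟩ := (periodic_G hPp hQp σ (t+h)).exists_mem_Ico₀ Real.two_pi_pos θ
    rw [hxy]
    rw [le_div_iff₀ (by linarith : (0:ℝ) < 1 + h)]
    have := hcore y ⟨hy.1, hy.2.le⟩
    linarith
  have hHle : Hf P Q σ (t+h) ≤ (Hf P Q σ t + h * (ε₁ + X)) / (1+h) := H_le σ (t+h) hall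
  have hfin := (le_div_iff₀ (show (0:ℝ) < 1 + h by linarith)).mp hHle
  calc (1+h) * Hf P Q σ (t+h) = Hf P Q σ (t+h) * (1+h) := by ring
    _ ≤ Hf P Q σ t + h * (ε₁ + X) := hfin

end GW
namespace GW
open Set
variable {P Q : ℝ → ℝ → ℝ}

lemma UC_mono {G : ℝ → ℝ → ℝ} {a b δ₁ δ ε : ℝ} (h : UC G a b δ₁ ε) (hδ : δ ≤ δ₁) :
    UC G a b δ ε :=
  fun t t' θ θ' ht ht' hθ hθ' h1 h2 => h t t' θ θ' ht ht' hθ hθ' (h1.trans hδ) (h2.trans hδ)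

lemma H_bound (hP : Smooth2 P) (hQ : Smooth2 Q) (hPp : Periodic2 P) (hQp : Periodic2 Q)
    (σ : ℝ) (a b : ℝ) (ha : 2 ≤ a) :
    ∃ M : ℝ, ∀ τ ∈ Icc a b, Hf P Q σ τ ≤ M := by
  have hπ := Real.pi_pos
  set K : Set (ℝ × ℝ) := Icc a b ×ˢ Icc (-1) (2*π+1) with hK
  have hKc : IsCompact K := isCompact_Icc.prod isCompact_Icc
  have hcont : ContinuousOn (fun p : ℝ × ℝ => Gf P Q σ p.1 p.2) K := by
    apply (contOn_G hP hQ σ).mono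
    rintro ⟨t, θ⟩ ⟨ht, -⟩
    have h2 : (2:ℝ) ≤ t := le_trans ha ht.1
    simp only [Set.mem_setOf_eq]
    intro h0
    rw [h0] at h2; norm_num at h2
  obtain ⟨C, hC⟩ := hKc.exists_bound_of_continuousOn hcont
  refine ⟨C, fun τ hτ => H_le σ τ (fun θ => ?_)⟩
  obtain ⟨y, hy, hxy⟩ := (periodic_G hPp hQp σ τ).exists_mem_Ico₀ Real.two_pi_pos θ
  rw [hxy]
  have hmem : ((τ, y) : ℝ × ℝ) ∈ K := by
    refine ⟨hτ, ⟨by linarith [hy.1], by linarith [hy.2]⟩⟩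
  have := hC (τ, y) hmem
  calc Gf P Q σ τ y ≤ |Gf P Q σ τ y| := le_abs_self _
    _ ≤ C := by simpa [Real.norm_eq_abs] using this

set_option maxHeartbeats 1000000 in
lemma stepA (hP : Smooth2 P) (hQ : Smooth2 Q) (hPp : Periodic2 P) (hQp : Periodic2 Q)
    (hPQ : GowdyEqs P Q) {a b : ℝ} (ha : 2 ≤ a) (hab : a ≤ b)
    (hbd : ∀ τ ∈ Icc a b, ∀ θ : ℝ, 1 ≤ P τ θ ∧ P τ θ ≤ τ - 1)
    {ε : ℝ} (hε : 0 < ε) :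
    ∃ δ > 0, ∀ t h : ℝ, a ≤ t → 0 < h → h ≤ δ → t + h ≤ b →
      (t+h)^2 * Ffun P Q (t+h) ≤ t^2 * Ffun P Q t + ε * h := by
  obtain ⟨M₁, hM₁⟩ := H_bound hP hQ hPp hQp 1 a b ha
  obtain ⟨M₂, hM₂⟩ := H_bound hP hQ hPp hQp (-1) a b ha
  set M : ℝ := max 0 (max M₁ M₂) with hM
  have hM0 : 0 ≤ M := le_max_left 0 _
  have hMM1 : M₁ ≤ M := (le_max_left M₁ M₂).trans (le_max_right 0 _)
  have hMM2 : M₂ ≤ M := (le_max_right M₁ M₂).trans (le_max_right 0 _)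
  have hFM : ∀ τ ∈ Icc a b, Ffun P Q τ ≤ M := by
    intro τ hτ
    rw [Ffun_eq]
    have h1 := (hM₁ τ hτ).trans hMM1
    have h2 := (hM₂ τ hτ).trans hMM2
    linarith
  have hb2 : (2:ℝ) ≤ b := le_trans ha hab
  set ε₁ : ℝ := ε / (4*(b+1)^2) with hε₁def
  have hε₁ : 0 < ε₁ := by rw [hε₁def]; positivity
  obtain ⟨δ₁, hδ₁0, hU1⟩ := exists_UC hP hQ 1 a b ha hε₁
  obtain ⟨δ₂, hδ₂0, hU2⟩ := exists_UC hP hQ (-1) a b ha hε₁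
  set δ : ℝ := min (min δ₁ δ₂) (min 1 (ε/(2*(2*b+1)*(M+1)))) with hδdef
  have hδ0 : 0 < δ := by
    rw [hδdef]
    apply lt_min (lt_min hδ₁0 hδ₂0) (lt_min one_pos (by positivity))
  refine ⟨δ, hδ0, ?_⟩
  intro t h hta hh0 hhδ htb
  have hh1 : h ≤ 1 := hhδ.trans ((min_le_right _ _).trans (min_le_left _ _))
  have hhδ' : h ≤ min δ₁ δ₂ := hhδ.trans (min_le_left _ _)
  have hδ3 : h ≤ ε/(2*(2*b+1)*(M+1)) := hhδ.trans ((min_le_right _ _).trans (min_le_right _ _))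
  have hU1' : UC (Gf P Q 1) a b (min δ₁ δ₂) ε₁ := UC_mono hU1 (min_le_left _ _)
  have hU2' : UC (Gf P Q (-1)) a b (min δ₁ δ₂) ε₁ := UC_mono hU2 (min_le_right _ _)
  have S1 := key_est hP hQ hPp hQp hPQ ha hbd hε₁ hU1' hU2' hta hh0 hhδ' hh1 htb 1 (Or.inl rfl)
  have Sm := key_est hP hQ hPp hQp hPQ ha hbd hε₁ hU1' hU2' hta hh0 hhδ' hh1 htb (-1) (Or.inr rfl)
  set k : ℝ := 1 - 2*(t+h)⁻¹ with hkdef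
  set F1 : ℝ := Ffun P Q (t+h) with hF1def
  set F0 : ℝ := Ffun P Q t with hF0def
  have hth2 : (2:ℝ) < t + h := by linarith [le_trans ha hta]
  have hth0 : (0:ℝ) < t + h := by linarith
  have hk0 : 0 ≤ k := by
    rw [hkdef, sub_nonneg, show (2:ℝ)*(t+h)⁻¹ = 2/(t+h) by ring, div_le_one hth0]
    linarith
  have hk1 : k ≤ 1 := by
    rw [hkdef]
    have : 0 ≤ (t+h)⁻¹ := by positivity
    linarith
  have hHp0 := H_nonneg hP hQ hPp hQp 1 t
  have hHm0 := H_nonneg hP hQ hPp hQp (-1) t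
  have hF00 : 0 ≤ F0 := by
    rw [hF0def, Ffun_eq]; linarith
  have hF10 : 0 ≤ F1 := by
    rw [hF1def, Ffun_eq]
    linarith [H_nonneg hP hQ hPp hQp 1 (t+h), H_nonneg hP hQ hPp hQp (-1) (t+h)]
  have hF0M : F0 ≤ M := hFM t ⟨hta, by linarith⟩
  -- AM-GM on the sqrt product
  have hsqle : Real.sqrt (Hf P Q 1 t + ε₁) * Real.sqrt (Hf P Q (-1) t + ε₁)
      ≤ F0 + ε₁ := by
    have := sqrt_mul_sqrt_le (by linarith : 0 ≤ Hf P Q 1 t + ε₁)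
      (by linarith : 0 ≤ Hf P Q (-1) t + ε₁)
    have hFeq : F0 = 1/2 * Hf P Q 1 t + 1/2 * Hf P Q (-1) t := by rw [hF0def, Ffun_eq]
    linarith
  have hXle : k * (Real.sqrt (Hf P Q 1 t + ε₁) * Real.sqrt (Hf P Q (-1) t + ε₁))
      ≤ k * (F0 + ε₁) := mul_le_mul_of_nonneg_left hsqle hk0
  -- combine the two families
  have hF1eq : 2*F1 = Hf P Q 1 (t+h) + Hf P Q (-1) (t+h) := by rw [hF1def, Ffun_eq]; ring
  have hF0eq : 2*F0 = Hf P Q 1 t + Hf P Q (-1) t := by rw [hF0def, Ffun_eq]; ring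
  set R : ℝ := Real.sqrt (Hf P Q 1 t + ε₁) * Real.sqrt (Hf P Q (-1) t + ε₁) with hRdef
  have hkey : (1+h)*F1 ≤ F0*(1+h*k) + 2*h*ε₁ := by
    have hsum : (1+h)*(2*F1) ≤ 2*F0 + 2*h*(ε₁ + k * R) := by
      rw [hF1eq, hF0eq]
      linarith only [S1, Sm]
    have hmm := mul_le_mul_of_nonneg_left hXle hh0.le
    have hkε : h*(k*ε₁) ≤ h*ε₁ := by
      have h1 : k*ε₁ ≤ 1*ε₁ := mul_le_mul_of_nonneg_right hk1 hε₁.le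
      exact mul_le_mul_of_nonneg_left (by linarith only [h1]) hh0.le
    linarith only [hsum, hmm, hkε]
  -- the φ-step
  have hS : (t+h)^2*(F0*(1+h*k) + 2*h*ε₁) ≤ (1+h)*(t^2*F0 + ε*h) := by
    have e1 : (t+h)^2*(1+h*k) = (t+h)^2*(1+h) - 2*h*(t+h) := by
      rw [hkdef]
      field_simp
      ring
    have h2t : 2*t+h-1 ≤ 2*b+1 := by linarith
    have h2t0 : 0 ≤ 2*t+h-1 := by linarith [le_trans ha hta]
    have c1 : F0*(h^2*(2*t+h-1)) ≤ M*(h^2*(2*b+1)) := by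
      apply mul_le_mul hF0M _ (by positivity) hM0
      apply mul_le_mul_of_nonneg_left h2t (by positivity)
    have c2 : 2*h*ε₁*(t+h)^2 ≤ 2*h*ε₁*(b+1)^2 := by
      apply mul_le_mul_of_nonneg_left _ (by positivity)
      apply pow_le_pow_left₀ hth0.le (by linarith)
    have d1 : M*(h^2*(2*b+1)) ≤ h*(ε/2) := by
      have hc : (0:ℝ) < 2*(2*b+1)*(M+1) := by positivity
      rw [le_div_iff₀ hc] at hδ3
      have hpos2 : (0:ℝ) ≤ h^2*(2*b+1) := by positivity
      have e1' : M*(h^2*(2*b+1)) ≤ (M+1)*(h^2*(2*b+1)) :=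
        mul_le_mul_of_nonneg_right (by linarith) hpos2
      have e2' : (M+1)*(h^2*(2*b+1)) = (h/2)*(h*(2*(2*b+1)*(M+1))) := by ring
      have e3' := mul_le_mul_of_nonneg_left hδ3 (by positivity : (0:ℝ) ≤ h/2)
      linarith only [e1', e2'.le, e3']
    have d2 : 2*h*ε₁*(b+1)^2 = h*(ε/2) := by
      rw [hε₁def]
      field_simp
      ring
    have hεh2 : 0 ≤ ε*h*h := by positivity
    calc (t+h)^2*(F0*(1+h*k) + 2*h*ε₁)
        = F0*((t+h)^2*(1+h*k)) + 2*h*ε₁*(t+h)^2 := by ring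
      _ = F0*((t+h)^2*(1+h) - 2*h*(t+h)) + 2*h*ε₁*(t+h)^2 := by rw [e1]
      _ = (1+h)*(t^2*F0) + F0*(h^2*(2*t+h-1)) + 2*h*ε₁*(t+h)^2 := by ring
      _ ≤ (1+h)*(t^2*F0) + M*(h^2*(2*b+1)) + 2*h*ε₁*(b+1)^2 := by linarith [c1, c2]
      _ ≤ (1+h)*(t^2*F0) + h*(ε/2) + h*(ε/2) := by linarith [d1, d2.le]
      _ ≤ (1+h)*(t^2*F0 + ε*h) := by linarith only [hεh2]
  -- conclude
  have hmul : (1+h)*((t+h)^2*F1) ≤ (1+h)*(t^2*F0 + ε*h) := by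
    calc (1+h)*((t+h)^2*F1) = (t+h)^2*((1+h)*F1) := by ring
      _ ≤ (t+h)^2*(F0*(1+h*k) + 2*h*ε₁) :=
          mul_le_mul_of_nonneg_left hkey (by positivity)
      _ ≤ (1+h)*(t^2*F0 + ε*h) := hS
  exact le_of_mul_le_mul_left hmul (by linarith)

set_option maxHeartbeats 1000000 in
lemma claimA (hP : Smooth2 P) (hQ : Smooth2 Q) (hPp : Periodic2 P) (hQp : Periodic2 Q)
    (hPQ : GowdyEqs P Q) {a b : ℝ} (ha : 2 ≤ a) (hab : a ≤ b)
    (hbd : ∀ τ ∈ Icc a b, ∀ θ : ℝ, 1 ≤ P τ θ ∧ P τ θ ≤ τ - 1) :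
    ∀ τ ∈ Icc a b, τ^2 * Ffun P Q τ ≤ a^2 * Ffun P Q a := by
  intro τ hτ
  rcases eq_or_lt_of_le hτ.1 with rfl | hlt
  · exact le_rfl
  apply le_of_forall_pos_le_add
  intro ε' hε'
  have hba : 0 < b - a + 1 := by linarith [hτ.2]
  set ε : ℝ := ε' / (b - a + 1) with hεdef
  have hε : 0 < ε := by positivity
  obtain ⟨δ, hδ0, hstep⟩ := stepA hP hQ hPp hQp hPQ ha hab hbd hε
  obtain ⟨n, hn⟩ := exists_nat_gt ((τ - a)/δ)
  have hτa : 0 < τ - a := by linarith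
  have hn0 : 0 < (n:ℝ) := lt_trans (by positivity) hn
  have hnn : n ≠ 0 := by exact_mod_cast hn0.ne'
  set d : ℝ := (τ - a)/n with hddef
  have hd0 : 0 < d := by positivity
  have hdδ : d ≤ δ := by
    rw [hddef, div_le_iff₀ hn0]
    rw [div_lt_iff₀ hδ0] at hn
    linarith only [hn]
  have key : ∀ k : ℕ, k ≤ n → (a + k*d)^2 * Ffun P Q (a + k*d)
      ≤ a^2 * Ffun P Q a + ε * (k*d) := by
    intro k
    induction k with
    | zero => intro _; simp
    | succ m ih =>
      intro hm
      have hm' : m ≤ n := le_trans (Nat.le_succ m) hm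
      have ihm := ih (le_trans (Nat.le_succ m) hm)
      have hmd0 : 0 ≤ (m:ℝ)*d := by positivity
      have hmub : a + ((m:ℝ)+1)*d ≤ b := by
        have : ((m:ℝ)+1) ≤ n := by exact_mod_cast hm
        have : ((m:ℝ)+1)*d ≤ n*d := mul_le_mul_of_nonneg_right this hd0.le
        have hnd : (n:ℝ)*d = τ - a := by
          rw [hddef]; field_simp
        linarith [hτ.2]
      have hstep' := hstep (a + m*d) d (by linarith) hd0 hdδ (by push_cast; linarith)
      push_cast
      have heq : a + (m:ℝ)*d + d = a + ((m:ℝ)+1)*d := by ring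
      rw [heq] at hstep'
      calc (a + ((m:ℝ)+1)*d)^2 * Ffun P Q (a + ((m:ℝ)+1)*d)
          ≤ (a + (m:ℝ)*d)^2 * Ffun P Q (a + (m:ℝ)*d) + ε*d := hstep'
        _ ≤ a^2 * Ffun P Q a + ε * ((m:ℝ)*d) + ε*d := by linarith [ihm]
        _ = a^2 * Ffun P Q a + ε * (((m:ℝ)+1)*d) := by ring
  have hfin := key n le_rfl
  have hnd : a + (n:ℝ)*d = τ := by
    rw [hddef]; field_simp
    ring
  rw [hnd] at hfin
  have : ε * ((n:ℝ)*d) ≤ ε' := by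
    have hnd2 : (n:ℝ)*d = τ - a := by rw [hddef]; field_simp
    rw [hnd2, hεdef]
    rw [div_mul_eq_mul_div, div_le_iff₀ hba]
    have := mul_le_mul_of_nonneg_left (show τ - a ≤ b - a + 1 by linarith [hτ.2]) hε'.le
    linarith only [this]
  linarith

end GW
namespace GW
open Set
variable {P Q : ℝ → ℝ → ℝ}

lemma dsq_le_F (hP : Smooth2 P) (hQ : Smooth2 Q) (hPp : Periodic2 P) (hQp : Periodic2 Q)
    (τ θ : ℝ) : (pdt P τ θ - P τ θ * τ⁻¹)^2 ≤ Ffun P Q τ := by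
  have h1 := G_le_H hP hQ hPp hQp 1 τ θ
  have h2 := G_le_H hP hQ hPp hQp (-1) τ θ
  have hd : pdt P τ θ - P τ θ * τ⁻¹ = (Af P 1 τ θ + Af P (-1) τ θ)/2 := by
    unfold Af; ring
  rw [Ffun_eq, hd]
  have g1 : Af P 1 τ θ^2 ≤ Gf P Q 1 τ θ := le_add_of_nonneg_right (sq_nonneg _)
  have g2 : Af P (-1) τ θ^2 ≤ Gf P Q (-1) τ θ := le_add_of_nonneg_right (sq_nonneg _)
  nlinarith [sq_nonneg (Af P 1 τ θ - Af P (-1) τ θ)]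

lemma d_abs (hP : Smooth2 P) (hQ : Smooth2 Q) (hPp : Periodic2 P) (hQp : Periodic2 Q)
    {τ₀ γ α : ℝ} (hτ₀ : 2 ≤ τ₀) (hαγ : α < γ) (hF : Ffun P Q τ₀ ≤ (γ-α)^2)
    {τ : ℝ} (hτ : τ₀ ≤ τ) (hdecτ : τ^2 * Ffun P Q τ ≤ τ₀^2 * Ffun P Q τ₀) (θ : ℝ) :
    |pdt P τ θ - P τ θ * τ⁻¹| ≤ ((γ-α)*τ₀) * τ⁻¹ := by
  have hτpos : (0:ℝ) < τ := by linarith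
  have hγα : (0:ℝ) ≤ γ - α := by linarith
  have h1 := dsq_le_F hP hQ hPp hQp τ θ
  have hmm := mul_le_mul_of_nonneg_left h1 (sq_nonneg τ)
  have hchain : τ^2 * (pdt P τ θ - P τ θ * τ⁻¹)^2 ≤ τ₀^2 * (γ-α)^2 := by
    have h3 : τ₀^2 * Ffun P Q τ₀ ≤ τ₀^2 * (γ-α)^2 :=
      mul_le_mul_of_nonneg_left hF (sq_nonneg τ₀)
    calc τ^2 * (pdt P τ θ - P τ θ * τ⁻¹)^2 ≤ τ^2 * Ffun P Q τ := hmm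
      _ ≤ τ₀^2 * Ffun P Q τ₀ := hdecτ
      _ ≤ τ₀^2 * (γ-α)^2 := h3
  have hττ : τ^2*(τ⁻¹)^2 = 1 := by field_simp
  have h3 : (pdt P τ θ - P τ θ * τ⁻¹)^2 ≤ (((γ-α)*τ₀)*τ⁻¹)^2 := by
    have := mul_le_mul_of_nonneg_right hchain (sq_nonneg τ⁻¹)
    calc (pdt P τ θ - P τ θ * τ⁻¹)^2
        = (τ^2 * (pdt P τ θ - P τ θ * τ⁻¹)^2)*(τ⁻¹)^2 := by
          rw [show (τ^2 * (pdt P τ θ - P τ θ * τ⁻¹)^2)*(τ⁻¹)^2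
            = (pdt P τ θ - P τ θ * τ⁻¹)^2 * (τ^2*(τ⁻¹)^2) from by ring, hττ, mul_one]
      _ ≤ (τ₀^2 * (γ-α)^2)*(τ⁻¹)^2 := this
      _ = (((γ-α)*τ₀)*τ⁻¹)^2 := by ring
  have hnn : (0:ℝ) ≤ ((γ-α)*τ₀)*τ⁻¹ := by positivity
  have := Real.sqrt_le_sqrt h3
  rwa [Real.sqrt_sq_eq_abs, Real.sqrt_sq hnn] at this

lemma mono_comp {f g : ℝ → ℝ} {aa bb : ℝ} (hab : aa ≤ bb)
    (hf : ∀ s ∈ Icc aa bb, HasDerivAt f (g s) s) (hg : ∀ s ∈ Ioo aa bb, 0 ≤ g s) :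
    ∀ τ ∈ Icc aa bb, f aa ≤ f τ := by
  have hm := monotoneOn_of_deriv_nonneg (convex_Icc aa bb)
    (fun s hs => (hf s hs).continuousAt.continuousWithinAt)
    (fun s hs => by
      rw [interior_Icc] at hs
      exact (hf s (Ioo_subset_Icc_self hs)).differentiableAt.differentiableWithinAt)
    (fun s hs => by
      rw [interior_Icc] at hs
      rw [(hf s (Ioo_subset_Icc_self hs)).deriv]
      exact hg s hs)
  intro τ hτ
  exact hm ⟨le_rfl, hab⟩ hτ hτ.1

lemma anti_comp {f g : ℝ → ℝ} {aa bb : ℝ} (hab : aa ≤ bb)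
    (hf : ∀ s ∈ Icc aa bb, HasDerivAt f (g s) s) (hg : ∀ s ∈ Ioo aa bb, g s ≤ 0) :
    ∀ τ ∈ Icc aa bb, f τ ≤ f aa := by
  have hm := antitoneOn_of_deriv_nonpos (convex_Icc aa bb)
    (fun s hs => (hf s hs).continuousAt.continuousWithinAt)
    (fun s hs => by
      rw [interior_Icc] at hs
      exact (hf s (Ioo_subset_Icc_self hs)).differentiableAt.differentiableWithinAt)
    (fun s hs => by
      rw [interior_Icc] at hs
      rw [(hf s (Ioo_subset_Icc_self hs)).deriv]
      exact hg s hs)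
  intro τ hτ
  exact hm ⟨le_rfl, hab⟩ hτ hτ.1

/-- derivative of s ↦ P s θ -/
lemma hasDerivAt_P (hP : Smooth2 P) (θ s : ℝ) :
    HasDerivAt (fun s => P s θ) (pdt P s θ) s := by
  have := hasDerivAt_curve hP (hasDerivAt_id' s) (hasDerivAt_const s θ)
  simpa using this

/-- derivative of s ↦ P s θ * s⁻¹ -/
lemma hasDerivAt_w (hP : Smooth2 P) (θ s : ℝ) (hs : s ≠ 0) :
    HasDerivAt (fun s => P s θ * s⁻¹)
      (pdt P s θ * s⁻¹ + P s θ * (-(s^2)⁻¹)) s :=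
  (hasDerivAt_P hP θ s).mul (hasDerivAt_inv hs)

/-- The full package of bounds propagated from the decay of F. -/
lemma bounds_from_decay (hP : Smooth2 P) (hQ : Smooth2 Q) (hPp : Periodic2 P)
    (hQp : Periodic2 Q) {τ₀ γ α : ℝ} (hτ₀ : 2 ≤ τ₀) (hα : 0 < α) (hαγ : α < γ)
    (hP2 : ∀ θ : ℝ, γ ≤ P τ₀ θ / τ₀ ∧ P τ₀ θ / τ₀ ≤ 1 - γ)
    (hP1 : ∀ θ : ℝ, 1 ≤ P τ₀ θ ∧ P τ₀ θ ≤ τ₀ - 1)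
    (hF : Ffun P Q τ₀ ≤ (γ-α)^2)
    {T : ℝ} (hT : τ₀ ≤ T)
    (hdec : ∀ τ ∈ Icc τ₀ T, τ^2 * Ffun P Q τ ≤ τ₀^2 * Ffun P Q τ₀) :
    ∀ τ ∈ Icc τ₀ T, ∀ θ : ℝ,
      (α ≤ pdt P τ θ ∧ pdt P τ θ ≤ 1 - α) ∧ (1 ≤ P τ θ ∧ P τ θ ≤ τ - 1) := by
  have hτ0pos : (0:ℝ) < τ₀ := by linarith
  set c : ℝ := (γ-α)*τ₀ with hc
  have hc0 : 0 ≤ c := by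
    have : (0:ℝ) ≤ γ - α := by linarith
    positivity
  -- |pdt - w| bound
  have hd : ∀ τ ∈ Icc τ₀ T, ∀ θ : ℝ, |pdt P τ θ - P τ θ * τ⁻¹| ≤ c * τ⁻¹ := by
    intro τ hτ θ
    exact d_abs hP hQ hPp hQp hτ₀ hαγ hF hτ.1 (hdec τ hτ) θ
  -- w bounds via comparison
  have hwlow : ∀ θ : ℝ, ∀ τ ∈ Icc τ₀ T, γ - c*τ₀⁻¹ + c*τ⁻¹ ≤ P τ θ * τ⁻¹ := by
    intro θ τ hτ
    have hmono := mono_comp (f := fun s => P s θ * s⁻¹ - c * s⁻¹)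
      (g := fun s => (pdt P s θ * s⁻¹ + P s θ * (-(s^2)⁻¹)) - c * (-(s^2)⁻¹)) hT
      (fun s hs => by
        have hs0 : s ≠ 0 := by have := hs.1; intro h; rw [h] at this; linarith
        exact (hasDerivAt_w hP θ s hs0).sub ((hasDerivAt_inv hs0).const_mul c))
      (fun s hs => by
        have hs0 : (0:ℝ) < s := by linarith [hs.1]
        have hds := hd s ⟨hs.1.le, hs.2.le⟩ θ
        have hlow := (abs_le.mp hds).1
        have hinv2 : (s^2)⁻¹ = s⁻¹*s⁻¹ := by rw [sq, mul_inv]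
        have hmul := mul_le_mul_of_nonneg_right hlow (by positivity : (0:ℝ) ≤ s⁻¹)
        show (0:ℝ) ≤ pdt P s θ * s⁻¹ + P s θ * -(s ^ 2)⁻¹ - c * -(s ^ 2)⁻¹
        rw [hinv2]
        nlinarith [hmul])
      τ hτ
    have hP2θ := (hP2 θ).1
    rw [div_eq_mul_inv] at hP2θ
    linarith [hmono]
  have hwhigh : ∀ θ : ℝ, ∀ τ ∈ Icc τ₀ T, P τ θ * τ⁻¹ ≤ 1 - γ + c*τ₀⁻¹ - c*τ⁻¹ := by
    intro θ τ hτ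
    have hanti := anti_comp (f := fun s => P s θ * s⁻¹ + c * s⁻¹)
      (g := fun s => (pdt P s θ * s⁻¹ + P s θ * (-(s^2)⁻¹)) + c * (-(s^2)⁻¹)) hT
      (fun s hs => by
        have hs0 : s ≠ 0 := by have := hs.1; intro h; rw [h] at this; linarith
        exact (hasDerivAt_w hP θ s hs0).add ((hasDerivAt_inv hs0).const_mul c))
      (fun s hs => by
        have hs0 : (0:ℝ) < s := by linarith [hs.1]
        have hds := hd s ⟨hs.1.le, hs.2.le⟩ θ
        have hhigh := (abs_le.mp hds).2
        have hinv2 : (s^2)⁻¹ = s⁻¹*s⁻¹ := by rw [sq, mul_inv]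
        have hmul := mul_le_mul_of_nonneg_right hhigh (by positivity : (0:ℝ) ≤ s⁻¹)
        show pdt P s θ * s⁻¹ + P s θ * -(s ^ 2)⁻¹ + c * -(s ^ 2)⁻¹ ≤ 0
        rw [hinv2]
        nlinarith [hmul])
      τ hτ
    have hP2θ := (hP2 θ).2
    rw [div_eq_mul_inv] at hP2θ
    linarith [hanti]
  have hcττ : c*τ₀⁻¹ = γ - α := by
    rw [hc]; field_simp
  -- Pt bounds
  have hPt : ∀ τ ∈ Icc τ₀ T, ∀ θ : ℝ, α ≤ pdt P τ θ ∧ pdt P τ θ ≤ 1 - α := by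
    intro τ hτ θ
    have hτpos : (0:ℝ) < τ := by linarith [hτ.1]
    have hds := hd τ hτ θ
    have habs := abs_le.mp hds
    have hw1 := hwlow θ τ hτ
    have hw2 := hwhigh θ τ hτ
    constructor
    · have : γ - (γ-α) + c*τ⁻¹ ≤ P τ θ * τ⁻¹ := by rw [← hcττ]; exact hw1
      linarith [habs.1]
    · have : P τ θ * τ⁻¹ ≤ 1 - γ + (γ-α) - c*τ⁻¹ := by rw [← hcττ]; exact hw2
      linarith [habs.2]
  -- P bounds
  intro τ hτ θ
  refine ⟨hPt τ hτ θ, ?_, ?_⟩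
  · have hmono := mono_comp (f := fun s => P s θ - α*s)
      (g := fun s => pdt P s θ - α) hT
      (fun s hs => (hasDerivAt_P hP θ s).sub
        (by simpa using (hasDerivAt_id' s).const_mul α))
      (fun s hs => by
        have h1 := (hPt s ⟨hs.1.le, hs.2.le⟩ θ).1
        show (0:ℝ) ≤ pdt P s θ - α
        linarith)
      τ hτ
    have h2 := (hP1 θ).1
    have hm2 : 0 ≤ α*(τ-τ₀) := mul_nonneg hα.le (by linarith [hτ.1])
    nlinarith [hmono, hm2, h2]
  · have hanti := anti_comp (f := fun s => P s θ - (1-α)*s)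
      (g := fun s => pdt P s θ - (1-α)) hT
      (fun s hs => (hasDerivAt_P hP θ s).sub
        (by simpa using (hasDerivAt_id' s).const_mul (1-α)))
      (fun s hs => by
        have h1 := (hPt s ⟨hs.1.le, hs.2.le⟩ θ).2
        show pdt P s θ - (1-α) ≤ 0
        linarith)
      τ hτ
    have h2 := (hP1 θ).2
    have hm2 : 0 ≤ α*(τ-τ₀) := mul_nonneg hα.le (by linarith [hτ.1])
    nlinarith [hanti, hm2, h2]

end GW
namespace GW
open Set
variable {P Q : ℝ → ℝ → ℝ}

lemma exists_UC' {G : ℝ → ℝ → ℝ} (hG : Continuous (fun p : ℝ × ℝ => G p.1 p.2))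
    (a b : ℝ) {ε : ℝ} (hε : 0 < ε) : ∃ δ > 0, UC G a b δ ε := by
  set K : Set (ℝ × ℝ) := Icc a b ×ˢ Icc (-1) (2*π+1) with hK
  have hKc : IsCompact K := isCompact_Icc.prod isCompact_Icc
  have huc := hKc.uniformContinuousOn_of_continuous hG.continuousOn
  rw [Metric.uniformContinuousOn_iff] at huc
  obtain ⟨δ, hδ, hd⟩ := huc ε hε
  refine ⟨δ/2, by linarith, ?_⟩
  intro t t' θ θ' ht ht' hθ hθ' h1 h2
  have := hd (t, θ) ⟨ht, hθ⟩ (t', θ') ⟨ht', hθ'⟩ (by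
    rw [Prod.dist_eq]
    simp only [Real.dist_eq]
    apply max_lt <;> linarith)
  exact le_of_lt this

lemma H_shift (hP : Smooth2 P) (hQ : Smooth2 Q) (hPp : Periodic2 P) (hQp : Periodic2 Q)
    (σ : ℝ) {a b δ ε : ℝ} (hU : UC (Gf P Q σ) a b δ ε)
    {s t : ℝ} (hs : s ∈ Icc a b) (ht : t ∈ Icc a b) (hst : |s - t| ≤ δ) :
    Hf P Q σ s ≤ Hf P Q σ t + ε := by
  have hπ := Real.pi_pos
  apply H_le
  intro θ
  obtain ⟨y, hy, hxy⟩ := (periodic_G hPp hQp σ s).exists_mem_Ico₀ Real.two_pi_pos θ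
  rw [hxy]
  have hyw : y ∈ Icc (-1:ℝ) (2*π+1) := ⟨by linarith [hy.1], by linarith [hy.2]⟩
  have h := hU s t y y hs ht hyw hyw hst
    (by simpa using (abs_nonneg (s-t)).trans hst)
  have h2 := G_le_H hP hQ hPp hQp σ t y
  have := (abs_le.mp h).2
  linarith

lemma F_shift (hP : Smooth2 P) (hQ : Smooth2 Q) (hPp : Periodic2 P) (hQp : Periodic2 Q)
    {a b : ℝ} (ha : 2 ≤ a) {ε : ℝ} (hε : 0 < ε) :
    ∃ δ > 0, ∀ s t : ℝ, s ∈ Icc a b → t ∈ Icc a b → |s - t| ≤ δ →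
      Ffun P Q s ≤ Ffun P Q t + ε := by
  obtain ⟨δ₁, hδ₁, hU1⟩ := exists_UC hP hQ 1 a b ha hε
  obtain ⟨δ₂, hδ₂, hU2⟩ := exists_UC hP hQ (-1) a b ha hε
  refine ⟨min δ₁ δ₂, lt_min hδ₁ hδ₂, ?_⟩
  intro s t hs ht hst
  have h1 := H_shift hP hQ hPp hQp 1 (UC_mono hU1 (min_le_left _ _)) hs ht hst
  have h2 := H_shift hP hQ hPp hQp (-1) (UC_mono hU2 (min_le_right _ _)) hs ht hst
  rw [Ffun_eq, Ffun_eq]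
  linarith

lemma Pt_strip (hP : Smooth2 P) (hPp : Periodic2 P) {α Ts : ℝ} (hα : 0 < α) (hα1 : α ≤ 1)
    (hbd : ∀ θ : ℝ, α ≤ pdt P Ts θ ∧ pdt P Ts θ ≤ 1 - α) :
    ∃ δ > 0, ∀ τ θ : ℝ, Ts ≤ τ → τ ≤ Ts + δ → 0 ≤ pdt P τ θ ∧ pdt P τ θ ≤ 1 := by
  have hπ := Real.pi_pos
  have hcont : Continuous (fun p : ℝ × ℝ => pdt P p.1 p.2) := cont_uncurry (smooth2_pdt hP)
  obtain ⟨δ, hδ0, hU⟩ := exists_UC' hcont Ts (Ts+1) (half_pos hα)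
  refine ⟨min δ 1, lt_min hδ0 one_pos, ?_⟩
  intro τ θ h1 h2
  have hper : Function.Periodic (fun x => pdt P τ x) (2*π) := fun x => periodic2_pdt hPp τ x
  obtain ⟨y, hy, hxy⟩ := hper.exists_mem_Ico₀ Real.two_pi_pos θ
  rw [hxy]
  have hyw : y ∈ Icc (-1:ℝ) (2*π+1) := ⟨by linarith [hy.1], by linarith [hy.2]⟩
  have hτm : τ ∈ Icc Ts (Ts+1) := ⟨h1, by
    have := min_le_right δ (1:ℝ); linarith⟩
  have hTm : Ts ∈ Icc Ts (Ts+1) := ⟨le_rfl, by linarith⟩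
  have habs := hU τ Ts y y hτm hTm hyw hyw
    (by rw [abs_of_nonneg (by linarith)]; have := min_le_left δ (1:ℝ); linarith)
    (by simpa using hδ0.le)
  have hb := hbd y
  rw [abs_le] at habs
  constructor <;> [linarith [habs.1]; linarith [habs.2]]

set_option maxHeartbeats 2000000 in
/-- the main bootstrap: decay of τ²F on every [τ₀, τ₁] -/
lemma bootstrap (hP : Smooth2 P) (hQ : Smooth2 Q) (hPp : Periodic2 P) (hQp : Periodic2 Q)
    (hPQ : GowdyEqs P Q) {τ₀ γ α : ℝ} (hτ₀ : 2 ≤ τ₀) (hα : 0 < α) (hαγ : α < γ)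
    (hP1 : ∀ θ : ℝ, 1 ≤ P τ₀ θ ∧ P τ₀ θ ≤ τ₀ - 1)
    (hP2 : ∀ θ : ℝ, γ ≤ P τ₀ θ / τ₀ ∧ P τ₀ θ / τ₀ ≤ 1 - γ)
    (hF : Ffun P Q τ₀ ≤ (γ-α)^2) {τ₁ : ℝ} (hτ₁ : τ₀ ≤ τ₁) :
    ∀ τ ∈ Icc τ₀ τ₁, τ^2 * Ffun P Q τ ≤ τ₀^2 * Ffun P Q τ₀ := by
  have hα1 : α ≤ 1 := by
    have := (hP2 0).1
    have := (hP2 0).2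
    linarith
  set D : ℝ := τ₀^2 * Ffun P Q τ₀ with hD
  have hF0 : 0 ≤ Ffun P Q τ₀ := by
    rw [Ffun_eq]
    linarith [H_nonneg hP hQ hPp hQp 1 τ₀, H_nonneg hP hQ hPp hQp (-1) τ₀]
  have hD0 : 0 ≤ D := by rw [hD]; exact mul_nonneg (sq_nonneg _) hF0
  set S : Set ℝ := {T | T ∈ Icc τ₀ τ₁ ∧ ∀ τ ∈ Icc τ₀ T, τ^2 * Ffun P Q τ ≤ D} with hS
  have hne : τ₀ ∈ S := by
    refine ⟨⟨le_rfl, hτ₁⟩, fun τ hτ => ?_⟩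
    have : τ = τ₀ := le_antisymm hτ.2 hτ.1
    rw [this, hD]
  have hbdd : BddAbove S := ⟨τ₁, fun x hx => hx.1.2⟩
  set Ts : ℝ := sSup S with hTs
  have hTs1 : τ₀ ≤ Ts := le_csSup hbdd hne
  have hTs2 : Ts ≤ τ₁ := csSup_le ⟨τ₀, hne⟩ (fun x hx => hx.1.2)
  -- decay on [τ₀, Ts)
  have hdeclt : ∀ τ, τ₀ ≤ τ → τ < Ts → τ^2 * Ffun P Q τ ≤ D := by
    intro τ h1 h2
    obtain ⟨x, hxS, hx⟩ := exists_lt_of_lt_csSup ⟨τ₀, hne⟩ h2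
    exact hxS.2 τ ⟨h1, hx.le⟩
  -- decay at Ts by continuity
  have hdecTs : Ts^2 * Ffun P Q Ts ≤ D := by
    rcases eq_or_lt_of_le hTs1 with heq | hlt
    · rw [← heq, hD]
    apply le_of_forall_pos_le_add
    intro ε' hε'
    set κ : ℝ := ε' / (2*(2*τ₁+1)*(D+1)) with hκ
    have hτ₁0 : (0:ℝ) < τ₁ := by linarith
    have hden : (0:ℝ) < 2*(2*τ₁+1)*(D+1) := by
      apply mul_pos (by linarith) (by linarith)
    have hκ0 : 0 < κ := by rw [hκ]; exact div_pos hε' hden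
    set ε₂ : ℝ := ε' / (2*(τ₁+1)^2) with hε₂
    have hden2 : (0:ℝ) < 2*(τ₁+1)^2 := by nlinarith [hτ₁0]
    have hε₂0 : 0 < ε₂ := by rw [hε₂]; exact div_pos hε' hden2
    obtain ⟨δ, hδ0, hFs⟩ := F_shift hP hQ hPp hQp (a := τ₀) (b := τ₁) hτ₀ hε₂0
    set η : ℝ := min (min δ κ) ((Ts - τ₀)/2) with hη
    have hη0 : 0 < η := by
      apply lt_min (lt_min hδ0 hκ0) (by linarith)
    set s : ℝ := Ts - η with hs
    have hsτ₀ : τ₀ ≤ s := by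
      have := min_le_right (min δ κ) ((Ts - τ₀)/2)
      rw [hs]; linarith [le_trans (le_refl η) this]
    have hsTs : s < Ts := by rw [hs]; linarith
    have hsIcc : s ∈ Icc τ₀ τ₁ := ⟨hsτ₀, by linarith⟩
    have hTsIcc : Ts ∈ Icc τ₀ τ₁ := ⟨hTs1, hTs2⟩
    have hηδ : η ≤ δ := le_trans (min_le_left _ _) (min_le_left _ _)
    have hηκ : η ≤ κ := le_trans (min_le_left _ _) (min_le_right _ _)
    have hdec_s : s^2 * Ffun P Q s ≤ D := hdeclt s hsτ₀ hsTs
    have hFshift : Ffun P Q Ts ≤ Ffun P Q s + ε₂ := by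
      apply hFs Ts s hTsIcc hsIcc
      rw [abs_of_nonneg (by rw [hs]; linarith)]
      rw [hs]; simpa using hηδ
    have hs2 : (2:ℝ) ≤ s := le_trans hτ₀ hsτ₀
    have hFs0 : 0 ≤ Ffun P Q s := by
      rw [Ffun_eq]
      linarith [H_nonneg hP hQ hPp hQp 1 s, H_nonneg hP hQ hPp hQp (-1) s]
    have hFs4 : 4 * Ffun P Q s ≤ D := by
      have hsq : (0:ℝ) ≤ (s^2 - 4) * Ffun P Q s :=
        mul_nonneg (by nlinarith [hs2]) hFs0
      nlinarith [hdec_s, hsq]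
    -- assemble
    have hTsτ₁ : Ts ≤ τ₁ := hTs2
    have b1 : (Ts - s)*(Ts + s) ≤ η*(2*τ₁) := by
      apply mul_le_mul (by rw [hs]; linarith) (by linarith) (by linarith) (by linarith)
    have b2 : (Ts^2 - s^2) * Ffun P Q s ≤ (η*(2*τ₁))*(D/4) := by
      have e : Ts^2 - s^2 = (Ts - s)*(Ts + s) := by ring
      rw [e]
      apply mul_le_mul b1 (by linarith) hFs0 (mul_nonneg hη0.le (by linarith))
    have hκval : κ*(2*(2*τ₁+1)*(D+1)) = ε' := by
      rw [hκ]; exact div_mul_cancel₀ ε' hden.ne'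
    have b3 : (η*(2*τ₁))*(D/4) ≤ ε'/2 := by
      have t1 : (η*(2*τ₁))*(D/4) ≤ (κ*(2*τ₁))*(D/4) := by
        apply mul_le_mul_of_nonneg_right (mul_le_mul_of_nonneg_right hηκ (by linarith))
          (by linarith)
      have t2 : (κ*(2*τ₁))*(D/4) ≤ κ*((2*τ₁+1)*(D+1)) := by
        have : (2*τ₁)*(D/4) ≤ (2*τ₁+1)*(D+1) := by nlinarith
        calc (κ*(2*τ₁))*(D/4) = κ*((2*τ₁)*(D/4)) := by ring
          _ ≤ κ*((2*τ₁+1)*(D+1)) := mul_le_mul_of_nonneg_left this hκ0.le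
      have t3 : κ*((2*τ₁+1)*(D+1)) = ε'/2 := by
        have : κ*(2*(2*τ₁+1)*(D+1)) = ε' := hκval
        linarith [this]
      linarith
    have b4 : Ts^2*ε₂ ≤ ε'/2 := by
      have h1 : Ts^2 ≤ (τ₁+1)^2 := by nlinarith
      have h2 : Ts^2*ε₂ ≤ (τ₁+1)^2*ε₂ := mul_le_mul_of_nonneg_right h1 hε₂0.le
      have h3 : (τ₁+1)^2*ε₂ = ε'/2 := by
        have hne : ((τ₁:ℝ)+1) ≠ 0 := by linarith
        rw [hε₂]
        field_simp
      linarith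
    have final : Ts^2 * Ffun P Q Ts ≤ Ts^2 * Ffun P Q s + Ts^2*ε₂ := by
      have := mul_le_mul_of_nonneg_left hFshift (sq_nonneg Ts)
      linarith [this]
    have final2 : Ts^2 * Ffun P Q s = s^2 * Ffun P Q s + (Ts^2 - s^2) * Ffun P Q s := by ring
    clear_value s η κ ε₂ Ts D
    calc Ts^2 * Ffun P Q Ts ≤ Ts^2*Ffun P Q s + Ts^2*ε₂ := final
      _ = s^2*Ffun P Q s + (Ts^2 - s^2)*Ffun P Q s + Ts^2*ε₂ := by rw [final2]
      _ ≤ D + (η*(2*τ₁))*(D/4) + ε'/2 := by linarith [hdec_s, b2, b4]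
      _ ≤ D + ε'/2 + ε'/2 := by linarith [b3]
      _ = D + ε' := by ring
  -- extension: Ts must be τ₁
  have hTseq : Ts = τ₁ := by
    by_contra hne'
    have hTslt : Ts < τ₁ := lt_of_le_of_ne hTs2 hne'
    have hdecfull : ∀ τ ∈ Icc τ₀ Ts, τ^2 * Ffun P Q τ ≤ τ₀^2 * Ffun P Q τ₀ := by
      intro τ hτ
      rcases eq_or_lt_of_le hτ.2 with heq | hlt'
      · rw [heq]; exact hdecTs
      · exact hdeclt τ hτ.1 hlt'
    have hbds := bounds_from_decay hP hQ hPp hQp hτ₀ hα hαγ hP2 hP1 hF hTs1 hdecfull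
    have hPtTs : ∀ θ : ℝ, α ≤ pdt P Ts θ ∧ pdt P Ts θ ≤ 1 - α :=
      fun θ => (hbds Ts ⟨hTs1, le_rfl⟩ θ).1
    obtain ⟨δ, hδ0, hstrip⟩ := Pt_strip hP hPp hα hα1 hPtTs
    set δ' : ℝ := min δ (τ₁ - Ts) with hδ'
    have hδ'0 : 0 < δ' := lt_min hδ0 (by linarith)
    -- P bounds on the strip
    have hPbds : ∀ τ ∈ Icc τ₀ (Ts + δ'), ∀ θ : ℝ, 1 ≤ P τ θ ∧ P τ θ ≤ τ - 1 := by
      intro τ hτ θ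
      rcases le_or_gt τ Ts with hcase | hcase
      · exact (hbds τ ⟨hτ.1, hcase⟩ θ).2
      · have hstr : ∀ s ∈ Icc Ts (Ts + δ'), 0 ≤ pdt P s θ ∧ pdt P s θ ≤ 1 := by
          intro s hs
          exact hstrip s θ hs.1 (le_trans hs.2 (by
            have := min_le_left δ (τ₁ - Ts); linarith))
        have hPT := (hbds Ts ⟨hTs1, le_rfl⟩ θ).2
        constructor
        · have hmono := mono_comp (f := fun s => P s θ) (g := fun s => pdt P s θ)
            (by linarith : Ts ≤ Ts + δ')
            (fun s hs => hasDerivAt_P hP θ s)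
            (fun s hs => (hstr s (Ioo_subset_Icc_self hs)).1)
            τ ⟨hcase.le, hτ.2⟩
          linarith [hPT.1]
        · have hanti := anti_comp (f := fun s => P s θ - s)
            (g := fun s => pdt P s θ - 1) (by linarith : Ts ≤ Ts + δ')
            (fun s hs => (hasDerivAt_P hP θ s).sub (hasDerivAt_id' s))
            (fun s hs => by
              have := (hstr s (Ioo_subset_Icc_self hs)).2
              show pdt P s θ - 1 ≤ 0
              linarith)
            τ ⟨hcase.le, hτ.2⟩
          linarith [hPT.2]
    -- apply claimA on [τ₀, Ts + δ']
    have hdecext := claimA hP hQ hPp hQp hPQ hτ₀ (by linarith : τ₀ ≤ Ts + δ') hPbds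
    have hmem : Ts + δ' ∈ S := by
      refine ⟨⟨by linarith, by
        have := min_le_right δ (τ₁ - Ts); rw [hδ']
        have h2 := min_le_right δ (τ₁ - Ts)
        linarith⟩, fun τ hτ => ?_⟩
      rw [hD]
      exact hdecext τ hτ
    have := le_csSup hbdd hmem
    rw [← hTs] at this
    linarith
  intro τ hτ
  rcases eq_or_lt_of_le hτ.2 with heq | hlt'
  · rw [heq, ← hTseq]
    exact hdecTs
  · rw [← hTseq] at hlt'
    exact hdeclt τ hτ.1 hlt'

end GW
namespace GW
open Set Filter Topology
variable {P Q : ℝ → ℝ → ℝ}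

/-- two-point comparison for w = P/τ -/
lemma w_two_point (hP : Smooth2 P) (hQ : Smooth2 Q) (hPp : Periodic2 P) (hQp : Periodic2 Q)
    {τ₀ γ α : ℝ} (hτ₀ : 2 ≤ τ₀) (hαγ : α < γ) (hF : Ffun P Q τ₀ ≤ (γ-α)^2)
    (hdec : ∀ τ : ℝ, τ₀ ≤ τ → τ^2 * Ffun P Q τ ≤ τ₀^2 * Ffun P Q τ₀) :
    ∀ (θ τ σ : ℝ), τ₀ ≤ τ → τ ≤ σ →
      (P σ θ * σ⁻¹ + ((γ-α)*τ₀)*σ⁻¹ ≤ P τ θ * τ⁻¹ + ((γ-α)*τ₀)*τ⁻¹) ∧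
      (P τ θ * τ⁻¹ - ((γ-α)*τ₀)*τ⁻¹ ≤ P σ θ * σ⁻¹ - ((γ-α)*τ₀)*σ⁻¹) := by
  intro θ τ σ hτ hτσ
  have hd : ∀ s, τ₀ ≤ s → |pdt P s θ - P s θ * s⁻¹| ≤ ((γ-α)*τ₀) * s⁻¹ :=
    fun s hs => d_abs hP hQ hPp hQp hτ₀ hαγ hF hs (hdec s hs) θ
  constructor
  · have hanti := anti_comp (f := fun s => P s θ * s⁻¹ + ((γ-α)*τ₀) * s⁻¹)
      (g := fun s => (pdt P s θ * s⁻¹ + P s θ * (-(s^2)⁻¹)) + ((γ-α)*τ₀) * (-(s^2)⁻¹)) hτσ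
      (fun s hs => by
        have hs0 : s ≠ 0 := by
          have := hs.1; intro h; rw [h] at this; linarith
        exact (hasDerivAt_w hP θ s hs0).add ((hasDerivAt_inv hs0).const_mul ((γ-α)*τ₀)))
      (fun s hs => by
        have hs0 : (0:ℝ) < s := by linarith [hs.1]
        have hds := hd s (by linarith [hs.1])
        have hhigh := (abs_le.mp hds).2
        have hinv2 : (s^2)⁻¹ = s⁻¹*s⁻¹ := by rw [sq, mul_inv]
        have hmul := mul_le_mul_of_nonneg_right hhigh (by positivity : (0:ℝ) ≤ s⁻¹)
        show pdt P s θ * s⁻¹ + P s θ * -(s ^ 2)⁻¹ + ((γ-α)*τ₀) * -(s ^ 2)⁻¹ ≤ 0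
        rw [hinv2]
        nlinarith [hmul])
      σ ⟨hτσ, le_rfl⟩
    simpa using hanti
  · have hmono := mono_comp (f := fun s => P s θ * s⁻¹ - ((γ-α)*τ₀) * s⁻¹)
      (g := fun s => (pdt P s θ * s⁻¹ + P s θ * (-(s^2)⁻¹)) - ((γ-α)*τ₀) * (-(s^2)⁻¹)) hτσ
      (fun s hs => by
        have hs0 : s ≠ 0 := by
          have := hs.1; intro h; rw [h] at this; linarith
        exact (hasDerivAt_w hP θ s hs0).sub ((hasDerivAt_inv hs0).const_mul ((γ-α)*τ₀)))
      (fun s hs => by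
        have hs0 : (0:ℝ) < s := by linarith [hs.1]
        have hds := hd s (by linarith [hs.1])
        have hlow := (abs_le.mp hds).1
        have hinv2 : (s^2)⁻¹ = s⁻¹*s⁻¹ := by rw [sq, mul_inv]
        have hmul := mul_le_mul_of_nonneg_right hlow (by positivity : (0:ℝ) ≤ s⁻¹)
        show (0:ℝ) ≤ pdt P s θ * s⁻¹ + P s θ * -(s ^ 2)⁻¹ - ((γ-α)*τ₀) * -(s ^ 2)⁻¹
        rw [hinv2]
        nlinarith [hmul])
      σ ⟨hτσ, le_rfl⟩
    simpa using hmono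

set_option maxHeartbeats 1000000 in
lemma velocity (hP : Smooth2 P) (hQ : Smooth2 Q) (hPp : Periodic2 P) (hQp : Periodic2 Q)
    {τ₀ γ α : ℝ} (hτ₀ : 2 ≤ τ₀) (hα : 0 < α) (hαγ : α < γ)
    (hP2 : ∀ θ : ℝ, γ ≤ P τ₀ θ / τ₀ ∧ P τ₀ θ / τ₀ ≤ 1 - γ)
    (hF : Ffun P Q τ₀ ≤ (γ-α)^2)
    (hdec : ∀ τ : ℝ, τ₀ ≤ τ → τ^2 * Ffun P Q τ ≤ τ₀^2 * Ffun P Q τ₀) :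
    ∃ v : ℝ → ℝ, Continuous v ∧ (∀ θ : ℝ, v (θ + 2 * π) = v θ) ∧
      (∃ C : ℝ, 0 < C ∧ ∀ τ : ℝ, τ₀ ≤ τ → ∀ θ : ℝ, |pdt P τ θ - v θ| ≤ C / τ) ∧
      (∀ θ : ℝ, α ≤ v θ ∧ v θ ≤ 1 - α) := by
  have hτ₀0 : (0:ℝ) < τ₀ := by linarith
  have hγα : (0:ℝ) < γ - α := by linarith
  have hc0 : (0:ℝ) < (γ-α)*τ₀ := by positivity
  have htwo := w_two_point hP hQ hPp hQp hτ₀ hαγ hF hdec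
  have hτ₀n : ∀ n : ℕ, τ₀ ≤ τ₀ + (n:ℝ) := by
    intro n
    have : (0:ℝ) ≤ n := Nat.cast_nonneg n
    linarith
  have hcinv_nonneg : ∀ s : ℝ, τ₀ ≤ s → 0 ≤ ((γ-α)*τ₀) * s⁻¹ := by
    intro s hs
    have : (0:ℝ) < s := by linarith
    positivity
  have hseq : ∀ θ : ℝ, ∀ τ σ : ℝ, τ₀ ≤ τ → τ ≤ σ →
      |P σ θ * σ⁻¹ - P τ θ * τ⁻¹| ≤ ((γ-α)*τ₀)*τ⁻¹ - ((γ-α)*τ₀)*σ⁻¹ := by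
    intro θ τ σ h1 h2
    have := htwo θ τ σ h1 h2
    rw [abs_le]
    constructor <;> [linarith [this.2]; linarith [this.1]]
  have hrate : ∀ ε : ℝ, 0 < ε → ∃ N : ℕ, ∀ n : ℕ, N ≤ n →
      ((γ-α)*τ₀) * (τ₀ + (n:ℝ))⁻¹ < ε := by
    intro ε hε
    obtain ⟨N, hN⟩ := exists_nat_gt (((γ-α)*τ₀)/ε)
    refine ⟨N, fun n hn => ?_⟩
    have hNn : (N:ℝ) ≤ n := Nat.cast_le.mpr hn
    have hpos : (0:ℝ) < τ₀ + n := by linarith [hτ₀n n]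
    rw [← div_eq_mul_inv, div_lt_iff₀ hpos]
    rw [div_lt_iff₀ hε] at hN
    have h2 : ε * (N:ℝ) ≤ ε * (τ₀ + n) := by
      apply mul_le_mul_of_nonneg_left _ hε.le
      linarith
    calc (γ-α)*τ₀ < ε * N := by linarith [hN]
      _ ≤ ε * (τ₀ + n) := h2
  have hcau : ∀ θ : ℝ, CauchySeq (fun n : ℕ => P (τ₀ + n) θ * (τ₀ + (n:ℝ))⁻¹) := by
    intro θ
    rw [Metric.cauchySeq_iff']
    intro ε hε
    obtain ⟨N, hN⟩ := hrate ε hε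
    refine ⟨N, fun n hn => ?_⟩
    have h2 : τ₀ + (N:ℝ) ≤ τ₀ + (n:ℝ) := by
      have := Nat.cast_le (α := ℝ) |>.mpr hn; linarith
    have hb := hseq θ (τ₀ + N) (τ₀ + n) (hτ₀n N) h2
    rw [Real.dist_eq]
    have hnn := hcinv_nonneg (τ₀ + n) (hτ₀n n)
    calc |P (τ₀+n) θ * (τ₀+(n:ℝ))⁻¹ - P (τ₀+N) θ * (τ₀+(N:ℝ))⁻¹|
        ≤ ((γ-α)*τ₀)*(τ₀+(N:ℝ))⁻¹ - ((γ-α)*τ₀)*(τ₀+(n:ℝ))⁻¹ := hb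
      _ ≤ ((γ-α)*τ₀)*(τ₀+(N:ℝ))⁻¹ := by linarith
      _ < ε := hN N le_rfl
  have hex : ∀ θ : ℝ, ∃ L : ℝ, Tendsto (fun n : ℕ => P (τ₀ + n) θ * (τ₀ + (n:ℝ))⁻¹)
      atTop (𝓝 L) := fun θ => cauchySeq_tendsto_of_complete (hcau θ)
  choose v hv using hex
  -- rate bound against the limit
  have hvb : ∀ τ : ℝ, τ₀ ≤ τ → ∀ θ : ℝ, |P τ θ * τ⁻¹ - v θ| ≤ ((γ-α)*τ₀)*τ⁻¹ := by
    intro τ hτ θ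
    have htt : Tendsto (fun n : ℕ => |P τ θ * τ⁻¹ - P (τ₀ + n) θ * (τ₀ + (n:ℝ))⁻¹|)
        atTop (𝓝 |P τ θ * τ⁻¹ - v θ|) := (tendsto_const_nhds.sub (hv θ)).abs
    apply le_of_tendsto htt
    filter_upwards [eventually_ge_atTop (Nat.ceil (τ - τ₀))] with n hn
    have h2 : τ ≤ τ₀ + (n:ℝ) := by
      have h3 : (τ - τ₀ : ℝ) ≤ (Nat.ceil (τ - τ₀) : ℝ) := Nat.le_ceil _
      have h4 : ((Nat.ceil (τ - τ₀) : ℕ) : ℝ) ≤ (n : ℝ) := Nat.cast_le.mpr hn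
      linarith
    have hb := hseq θ τ (τ₀ + n) hτ h2
    have hnn := hcinv_nonneg (τ₀ + n) (hτ₀n n)
    rw [abs_sub_comm] at hb
    linarith [hb]
  have hcττ : ((γ-α)*τ₀) * τ₀⁻¹ = γ - α := by field_simp
  -- v bounds
  have hvbd : ∀ θ : ℝ, α ≤ v θ ∧ v θ ≤ 1 - α := by
    intro θ
    have hwτ₀ := hP2 θ
    rw [div_eq_mul_inv] at hwτ₀
    constructor
    · apply ge_of_tendsto (hv θ)
      filter_upwards with n
      have h2 := (htwo θ τ₀ (τ₀ + n) le_rfl (by linarith [hτ₀n n])).2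
      have hnn := hcinv_nonneg (τ₀ + n) (hτ₀n n)
      linarith [h2, hnn, hwτ₀.1, hcττ.le, hcττ.ge]
    · apply le_of_tendsto (hv θ)
      filter_upwards with n
      have h2 := (htwo θ τ₀ (τ₀ + n) le_rfl (by linarith [hτ₀n n])).1
      have hnn := hcinv_nonneg (τ₀ + n) (hτ₀n n)
      linarith [h2, hnn, hwτ₀.2, hcττ.le, hcττ.ge]
  -- continuity
  have hcontv : Continuous v := by
    have hUnif : TendstoUniformly (fun (n : ℕ) (θ : ℝ) => P (τ₀ + n) θ * (τ₀ + (n:ℝ))⁻¹)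
        v atTop := by
      rw [Metric.tendstoUniformly_iff]
      intro ε hε
      obtain ⟨N, hN⟩ := hrate ε hε
      filter_upwards [eventually_ge_atTop N] with n hn θ
      have h2 := hvb (τ₀ + n) (hτ₀n n) θ
      rw [Real.dist_eq, abs_sub_comm]
      calc |P (τ₀+n) θ * (τ₀+(n:ℝ))⁻¹ - v θ| ≤ ((γ-α)*τ₀)*(τ₀+(n:ℝ))⁻¹ := h2
        _ < ε := hN n hn
    refine hUnif.continuous (Filter.Eventually.frequently ?_)
    filter_upwards with n
    exact ((cont_uncurry hP).comp (continuous_const.prodMk continuous_id)).mul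
      continuous_const
  -- periodicity
  have hper : ∀ θ : ℝ, v (θ + 2*π) = v θ := by
    intro θ
    have h1 := hv (θ + 2*π)
    have h2 : (fun n : ℕ => P (τ₀ + n) (θ + 2*π) * (τ₀ + (n:ℝ))⁻¹)
        = fun n : ℕ => P (τ₀ + n) θ * (τ₀ + (n:ℝ))⁻¹ := by
      funext n; rw [hPp]
    rw [h2] at h1
    exact tendsto_nhds_unique h1 (hv θ)
  refine ⟨v, hcontv, hper, ⟨2*((γ-α)*τ₀), by linarith, ?_⟩, hvbd⟩
  intro τ hτ θ
  have h1 := d_abs hP hQ hPp hQp hτ₀ hαγ hF hτ (hdec τ hτ) θ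
  have h2 := hvb τ hτ θ
  have hτpos : (0:ℝ) < τ := by linarith
  have htri : |pdt P τ θ - v θ| ≤ |pdt P τ θ - P τ θ * τ⁻¹| + |P τ θ * τ⁻¹ - v θ| :=
    abs_sub_le _ _ _
  have heq : 2*((γ-α)*τ₀) / τ = ((γ-α)*τ₀)*τ⁻¹ + ((γ-α)*τ₀)*τ⁻¹ := by
    rw [div_eq_mul_inv]; ring
  rw [heq]
  linarith [h1, h2, htri]

end GW
/-- Corollary 2.2: continuation of the bounds on `P`, decay of `F`, and
convergence of `P_τ` to a continuous velocity `v` with `α ≤ v ≤ 1 - α`. -/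
theorem stmt_3 (P Q : ℝ → ℝ → ℝ) (hPs : Smooth2 P) (hQs : Smooth2 Q)
    (hPp : Periodic2 P) (hQp : Periodic2 Q) (hPQ : GowdyEqs P Q)
    (τ₀ γ α : ℝ) (hτ₀ : 2 ≤ τ₀) (hγ : 0 < γ) (hα : 0 < α) (hαγ : α < γ)
    (hP1 : ∀ θ : ℝ, 1 ≤ P τ₀ θ ∧ P τ₀ θ ≤ τ₀ - 1)
    (hP2 : ∀ θ : ℝ, γ ≤ P τ₀ θ / τ₀ ∧ P τ₀ θ / τ₀ ≤ 1 - γ)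
    (hF : Ffun P Q τ₀ ≤ (γ - α) ^ 2) :
    (∀ τ : ℝ, τ₀ ≤ τ → ∀ θ : ℝ, 1 ≤ P τ θ ∧ P τ θ ≤ τ - 1) ∧
    (∀ τ : ℝ, τ₀ ≤ τ → Ffun P Q τ ≤ Ffun P Q τ₀ * (τ₀ / τ) ^ 2) ∧
    (∃ v : ℝ → ℝ, Continuous v ∧ (∀ θ : ℝ, v (θ + 2 * π) = v θ) ∧
      (∃ C : ℝ, 0 < C ∧ ∀ τ : ℝ, τ₀ ≤ τ → ∀ θ : ℝ, |pdt P τ θ - v θ| ≤ C / τ) ∧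
      (∀ θ : ℝ, α ≤ v θ ∧ v θ ≤ 1 - α)) := by
  have hdec : ∀ τ : ℝ, τ₀ ≤ τ → τ^2 * Ffun P Q τ ≤ τ₀^2 * Ffun P Q τ₀ := by
    intro τ hτ
    exact GW.bootstrap hPs hQs hPp hQp hPQ hτ₀ hα hαγ hP1 hP2 hF hτ τ ⟨hτ, le_rfl⟩
  have hbds : ∀ τ : ℝ, τ₀ ≤ τ → ∀ θ : ℝ,
      (α ≤ pdt P τ θ ∧ pdt P τ θ ≤ 1 - α) ∧ (1 ≤ P τ θ ∧ P τ θ ≤ τ - 1) := by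
    intro τ hτ θ
    exact GW.bounds_from_decay hPs hQs hPp hQp hτ₀ hα hαγ hP2 hP1 hF hτ
      (fun σ hσ => hdec σ hσ.1) τ ⟨hτ, le_rfl⟩ θ
  refine ⟨fun τ hτ θ => (hbds τ hτ θ).2, ?_, ?_⟩
  · intro τ hτ
    have h := hdec τ hτ
    have hτpos : (0:ℝ) < τ := by linarith
    rw [show Ffun P Q τ₀ * (τ₀/τ)^2 = (τ₀^2 * Ffun P Q τ₀)/τ^2 from by rw [div_pow]; ring,
      le_div_iff₀ (by positivity)]
    linarith [h]
  · exact GW.velocity hPs hQs hPp hQp hτ₀ hα hαγ hP2 hF hdec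
end
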